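/- arXiv:2207.01247 — 7 statements merged into one kernel-verified Lean document; each statement's English description precedes it below -/
import Mathlib

section
/- Let S be a dense subsemigroup of ((0,∞),+) and let A be a u×v matrix with entries from ω satisfying the first entries condition, such that for each first entry c of A the set cS = {cs : s ∈ S} is central* near zero. Let p be an idempotent (p = p+p) in K(0⁺(S)) and let (C_n)_{n∈ℕ} be a sequence of subsets of S with C_n ∈ p for every n. Then for i = 1,…,v there exist sequences ⟨x_{i,n}⟩_{n=1}^∞ in S with inf{x_{i,n} : n ∈ ℕ} = 0 such that for every F ∈ 𝒫_f(ℕ), writing m = min F and x⃗_F = (Σ_{n∈F} x_{1,n}, …, Σ_{n∈F} x_{v,n})ᵀ, one has A x⃗_F ∈ (C_m)^u. -/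
/- The addition on `Ultrafilter ℝ` (Stone–Čech extension of `+`):
`A ∈ p + q ↔ {x | {y | x + y ∈ A} ∈ q} ∈ p`. -/
attribute [local instance] Ultrafilter.add Ultrafilter.addSemigroup

/-- `0⁺(S)`. -/
def zeroPlus (S : Set ℝ) : Set (Ultrafilter ℝ) :=
  {p | ∀ ε : ℝ, 0 < ε → S ∩ Set.Ioo 0 ε ∈ p}

/-- Membership in the smallest two-sided ideal `K(0⁺(S))`. -/
def memKZeroPlus (S : Set ℝ) (p : Ultrafilter ℝ) : Prop :=
  p ∈ zeroPlus S ∧ ∀ q ∈ zeroPlus S, ∃ r ∈ zeroPlus S, r + q + p = p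

/-- `A` (with entries from `ω`) satisfies the first entries condition:
no row is identically zero, and first entries in the same column coincide. -/
def FirstEntriesCond (u v : ℕ) (A : Fin u → Fin v → ℕ) : Prop :=
  (∀ i, ∃ j, A i j ≠ 0) ∧
  (∀ i i' : Fin u, ∀ j : Fin v,
    (A i j ≠ 0 ∧ ∀ j' < j, A i j' = 0) →
    (A i' j ≠ 0 ∧ ∀ j' < j, A i' j' = 0) → A i j = A i' j)

/-- `c` is a first entry of `A`: it is the leftmost nonzero entry of some row. -/
def IsFirstEntry (u v : ℕ) (A : Fin u → Fin v → ℕ) (c : ℕ) : Prop :=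
  ∃ i j, A i j = c ∧ A i j ≠ 0 ∧ ∀ j' < j, A i j' = 0


set_option maxHeartbeats 1000000

open Filter


lemma uadd_mem {U V : Ultrafilter ℝ} {A : Set ℝ} :
    A ∈ U + V ↔ {x : ℝ | {y : ℝ | x + y ∈ A} ∈ V} ∈ U := Iff.rfl

lemma upure_add_pure (x y : ℝ) :
    (pure x : Ultrafilter ℝ) + pure y = pure (x + y) := by
  refine Ultrafilter.coe_inj.mp (Filter.ext fun A => ?_)
  simp [uadd_mem]

lemma ucont_add_right (V : Ultrafilter ℝ) : Continuous (· + V) :=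
  Ultrafilter.continuous_add_left V

lemma ucont_pure_add (x : ℝ) : Continuous fun q : Ultrafilter ℝ => (pure x : Ultrafilter ℝ) + q := by
  refine ultrafilterBasis_is_basis.continuous_iff.2 ?_
  rintro o ⟨A, rfl⟩
  have : (fun q : Ultrafilter ℝ => (pure x : Ultrafilter ℝ) + q) ⁻¹' {u | A ∈ u}
      = {u : Ultrafilter ℝ | {y | x + y ∈ A} ∈ u} := by
    ext q; simp [uadd_mem]
  rw [this]
  exact ultrafilter_isOpen_basic _

lemma uclosure_pure {B : Set ℝ} {q : Ultrafilter ℝ} :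
    q ∈ closure ((fun x : ℝ => (pure x : Ultrafilter ℝ)) '' B) ↔ B ∈ q := by
  constructor
  · intro hq
    have hcl : IsClosed {u : Ultrafilter ℝ | B ∈ u} := ultrafilter_isClosed_basic B
    have : (fun x : ℝ => (pure x : Ultrafilter ℝ)) '' B ⊆ {u : Ultrafilter ℝ | B ∈ u} := by
      rintro _ ⟨x, hx, rfl⟩; simpa using hx
    exact hcl.closure_subset_iff.mpr this hq
  · intro hB
    rw [ultrafilterBasis_is_basis.mem_closure_iff]
    rintro o ⟨A, rfl⟩ hq
    have : (A ∩ B : Set ℝ) ∈ q := inter_mem hq hB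
    obtain ⟨x, hxA, hxB⟩ := Ultrafilter.nonempty_of_mem this
    exact ⟨pure x, by simpa using hxA, ⟨x, hxB, rfl⟩⟩


section Tuples
variable {ι : Type} [Finite ι]

/-- embed a real tuple as a tuple of principal ultrafilters -/
def ptuple (g : ι → ℝ) : ι → Ultrafilter ℝ := fun l => pure (g l)

lemma ptuple_add (g g' : ι → ℝ) : ptuple g + ptuple g' = ptuple (g + g') := by
  funext l
  exact (by
    refine Ultrafilter.coe_inj.mp (Filter.ext fun A => ?_)
    simp [ptuple]
    rfl : (pure (g l) : Ultrafilter ℝ) + pure (g' l) = pure (g l + g' l))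

lemma mem_closure_ptuple {V : Set (ι → ℝ)} {z : ι → Ultrafilter ℝ} :
    z ∈ closure (ptuple '' V) ↔
      ∀ B : ι → Set ℝ, (∀ l, B l ∈ z l) → ∃ v ∈ V, ∀ l, v l ∈ B l := by
  constructor
  · intro hz B hB
    have hopen : IsOpen {w : ι → Ultrafilter ℝ | ∀ l, B l ∈ w l} := by
      have : {w : ι → Ultrafilter ℝ | ∀ l, B l ∈ w l}
          = ⋂ l, (fun w : ι → Ultrafilter ℝ => w l) ⁻¹' {u | B l ∈ u} := by
        ext w; simp
      rw [this]
      exact isOpen_iInter_of_finite fun l =>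
        (ultrafilter_isOpen_basic (B l)).preimage (continuous_apply l)
    have hmem : z ∈ {w : ι → Ultrafilter ℝ | ∀ l, B l ∈ w l} := hB
    obtain ⟨w, hw1, hw2⟩ := mem_closure_iff.1 hz _ hopen hmem
    obtain ⟨v, hv, rfl⟩ := hw2
    exact ⟨v, hv, fun l => by simpa [ptuple] using hw1 l⟩
  · intro h
    have hbasis := isTopologicalBasis_pi
      (fun _ : ι => ultrafilterBasis_is_basis (α := ℝ))
    rw [hbasis.mem_closure_iff]
    rintro o ⟨U, F, hUT, rfl⟩ hz
    choose A hA using fun (l : ι) (hl : l ∈ F) => hUT l hl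
    classical
    set B : ι → Set ℝ := fun l => if hl : l ∈ F then A l hl else Set.univ with hBdef
    have hBz : ∀ l, B l ∈ z l := by
      intro l
      by_cases hl : l ∈ F
      · have := hz l hl
        rw [← hA l hl] at this
        simpa [hBdef, hl] using this
      · simp only [hBdef, dif_neg hl]
        exact Filter.univ_mem
    obtain ⟨v, hvV, hvB⟩ := h B hBz
    refine ⟨ptuple v, ?_, ⟨v, hvV, rfl⟩⟩
    intro l hl
    rw [← hA l hl]
    have := hvB l
    have hB : B l = A l hl := by
      simp only [hBdef]
      exact dif_pos hl
    rw [hB] at this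
    simpa [ptuple] using this

lemma coord_mem_of_mem_closure_ptuple {V : Set (ι → ℝ)} {z : ι → Ultrafilter ℝ}
    (hz : z ∈ closure (ptuple '' V)) {l : ι} {W : Set ℝ} (hW : ∀ v ∈ V, v l ∈ W) :
    W ∈ z l := by
  classical
  by_contra hne
  have hWc : Wᶜ ∈ z l := (Ultrafilter.compl_mem_iff_notMem.mpr hne)
  set B : ι → Set ℝ := fun l' => if l' = l then Wᶜ else Set.univ with hBdef
  have hB : ∀ l', B l' ∈ z l' := by
    intro l'
    by_cases h : l' = l
    · subst h; simpa [hBdef] using hWc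
    · simp [hBdef, h]
      exact Filter.univ_mem
  obtain ⟨v, hvV, hvB⟩ := mem_closure_ptuple.1 hz B hB
  have := hvB l
  simp [hBdef] at this
  exact this (hW v hvV)

end Tuples

section Kernel

variable (S : Set ℝ) (p : Ultrafilter ℝ)

def TT : Set (Ultrafilter ℝ) := {q | ∀ ε : ℝ, 0 < ε → S ∩ Set.Ioo 0 ε ∈ q}

variable (hSpos : S ⊆ Set.Ioi 0) (hSadd : ∀ x ∈ S, ∀ y ∈ S, x + y ∈ S)
  (hpT : p ∈ TT S) (hpidem : p = p + p)
  (hpK : ∀ q ∈ TT S, ∃ r ∈ TT S, r + q + p = p)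

section geo

lemma geo_aux : ∀ N m : ℕ, m ≤ N →
    (∑ t ∈ Finset.Ico m N, (2⁻¹:ℝ)^(t+1)) + (2⁻¹:ℝ)^N ≤ (2⁻¹:ℝ)^m := by
  intro N
  induction N with
  | zero => intro m hm; interval_cases m; simp
  | succ N ih =>
    intro m hm
    rcases Nat.lt_or_ge m (N+1) with h | h
    · have hmN : m ≤ N := Nat.lt_succ_iff.mp h
      rw [Finset.sum_Ico_succ_top hmN]
      have := ih m hmN
      have h2 : (2⁻¹:ℝ)^(N+1) + (2⁻¹:ℝ)^(N+1) = (2⁻¹:ℝ)^N := by ring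
      nlinarith [this]
    · have : N + 1 = m := le_antisymm (by omega) hm
      subst this
      simp

lemma geo (H : Finset ℕ) (m : ℕ) (hH : ∀ t ∈ H, m ≤ t) :
    ∑ t ∈ H, (2⁻¹:ℝ)^(t+1) ≤ (2⁻¹:ℝ)^m := by
  rcases H.eq_empty_or_nonempty with rfl | hne
  · rw [Finset.sum_empty]; positivity
  · set N := H.max' hne + 1 with hN
    have hsub : H ⊆ Finset.Ico m N := by
      intro t ht
      simp only [Finset.mem_Ico]
      exact ⟨hH t ht, Nat.lt_succ_of_le (H.le_max' t ht)⟩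
    have h1 : ∑ t ∈ H, (2⁻¹:ℝ)^(t+1) ≤ ∑ t ∈ Finset.Ico m N, (2⁻¹:ℝ)^(t+1) :=
      Finset.sum_le_sum_of_subset_of_nonneg hsub (by intros; positivity)
    have h2 := geo_aux N m (le_trans (hH _ (H.max'_mem hne)) (by omega))
    have h3 : (0:ℝ) < (2⁻¹:ℝ)^N := by positivity
    linarith

end geo

variable {κ : Type} [Fintype κ] (y : κ → ℕ → ℝ)

def wB (H : Finset ℕ) (l : κ) : ℝ := ∑ t ∈ H, y l t

variable (hymem : ∀ l t, y l t ∈ S ∨ y l t = 0)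
  (hysmall : ∀ l t, y l t ≤ (2⁻¹:ℝ)^(t+1))

include hSpos hSadd hymem in
lemma wB_mem (H : Finset ℕ) (l : κ) : wB y H l ∈ S ∨ wB y H l = 0 := by
  classical
  induction H using Finset.induction with
  | empty => right; simp [wB]
  | @insert a s ha ih =>
    rw [wB, Finset.sum_insert ha]
    rcases hymem l a with h1 | h1
    · rcases ih with h2 | h2
      · left; exact hSadd _ h1 _ h2
      · left; rw [wB] at h2; rw [h2, add_zero]; exact h1
    · rw [h1, zero_add]; exact ih

include hSpos hymem in
lemma y_nonneg (l : κ) (t : ℕ) : 0 ≤ y l t := by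
  rcases hymem l t with h | h
  · exact le_of_lt (hSpos h)
  · rw [h]

include hSpos hymem in
lemma wB_nonneg (H : Finset ℕ) (l : κ) : 0 ≤ wB y H l :=
  Finset.sum_nonneg fun t _ => y_nonneg S hSpos y hymem l t

include hysmall in
lemma wB_small (H : Finset ℕ) (m : ℕ) (hH : ∀ t ∈ H, m ≤ t) (l : κ) :
    wB y H l ≤ (2⁻¹:ℝ)^m :=
  le_trans (Finset.sum_le_sum fun t _ => hysmall l t) (geo H m hH)

/-- generators at level `m` -/
def gen (m : ℕ) : Set (Option κ → ℝ) :=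
  {g | ∃ a H, a ∈ S ∧ a < (2⁻¹:ℝ)^m ∧ H.Nonempty ∧ (∀ t ∈ H, m ≤ t) ∧
    g = fun o => Option.elim o a (fun l => a + wB y H l)}

def CL (m : ℕ) : Set (Option κ → Ultrafilter ℝ) := closure (ptuple '' gen S y m)

def II : Set (Option κ → Ultrafilter ℝ) := ⋂ m, CL S y m

lemma gen_anti {m m' : ℕ} (h : m ≤ m') : gen S y m' ⊆ gen S y m := by
  rintro g ⟨a, H, haS, halt, hne, hm, rfl⟩
  exact ⟨a, H, haS, lt_of_lt_of_le halt (pow_le_pow_of_le_one (by norm_num) (by norm_num) h),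
    hne, fun t ht => le_trans h (hm t ht), rfl⟩

lemma CL_anti {m m' : ℕ} (h : m ≤ m') : CL S y m' ⊆ CL S y m :=
  closure_mono (Set.image_mono (gen_anti S y h))

lemma CL_closed (m : ℕ) : IsClosed (CL S y m) := isClosed_closure

lemma II_closed : IsClosed (II S y) := isClosed_iInter fun m => CL_closed S y m

include hpT in
lemma gen_nonempty (m : ℕ) : (gen S y m).Nonempty := by
  have h1 : S ∩ Set.Ioo 0 ((2⁻¹:ℝ)^m) ∈ p := hpT _ (by positivity)
  obtain ⟨a, haS, _, halt⟩ := Ultrafilter.nonempty_of_mem h1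
  exact ⟨_, a, {m}, haS, halt, Finset.singleton_nonempty m, by simp, rfl⟩

include hpT in
lemma II_nonempty : (II S y).Nonempty := by
  refine IsCompact.nonempty_iInter_of_sequence_nonempty_isCompact_isClosed _
    (fun m => CL_anti S y (Nat.le_succ m)) (fun m => ?_) (CL_closed S y 0).isCompact
    (fun m => CL_closed S y m)
  obtain ⟨g, hg⟩ := gen_nonempty S p hpT y m
  exact ⟨ptuple g, subset_closure ⟨g, hg, rfl⟩⟩


-- helper lemmas for pushing additions through closures
lemma helper_right {V : Set (Option κ → ℝ)} {X Y : Option κ → Ultrafilter ℝ}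
    {C : Set (Option κ → Ultrafilter ℝ)} (hC : IsClosed C)
    (hX : X ∈ closure (ptuple '' V)) (h : ∀ v ∈ V, ptuple v + Y ∈ C) :
    X + Y ∈ C := by
  have hcont : Continuous fun z : Option κ → Ultrafilter ℝ => z + Y :=
    continuous_pi fun l => (ucont_add_right (Y l)).comp (continuous_apply l)
  have h2 : (fun z : Option κ → Ultrafilter ℝ => z + Y) '' closure (ptuple '' V) ⊆
      closure ((fun z => z + Y) '' (ptuple '' V)) := image_closure_subset_closure_image hcont
  have h3 : (fun z : Option κ → Ultrafilter ℝ => z + Y) '' (ptuple '' V) ⊆ C := by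
    rintro _ ⟨_, ⟨v, hv, rfl⟩, rfl⟩; exact h v hv
  have h4 : closure ((fun z : Option κ → Ultrafilter ℝ => z + Y) '' (ptuple '' V)) ⊆ closure C :=
    closure_mono h3
  have h5 := h4 (h2 (Set.mem_image_of_mem _ hX))
  rwa [hC.closure_eq] at h5

lemma helper_pureleft {V : Set (Option κ → ℝ)} (g : Option κ → ℝ)
    {Y : Option κ → Ultrafilter ℝ} {C : Set (Option κ → Ultrafilter ℝ)} (hC : IsClosed C)
    (hY : Y ∈ closure (ptuple '' V)) (h : ∀ v ∈ V, ptuple (g + v) ∈ C) :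
    ptuple g + Y ∈ C := by
  have hcont : Continuous fun z : Option κ → Ultrafilter ℝ => ptuple g + z :=
    continuous_pi fun l => (ucont_pure_add (g l)).comp (continuous_apply l)
  have h2 : (fun z : Option κ → Ultrafilter ℝ => ptuple g + z) '' closure (ptuple '' V) ⊆
      closure ((fun z => ptuple g + z) '' (ptuple '' V)) := image_closure_subset_closure_image hcont
  have h3 : (fun z : Option κ → Ultrafilter ℝ => ptuple g + z) '' (ptuple '' V) ⊆ C := by
    rintro _ ⟨_, ⟨v, hv, rfl⟩, rfl⟩
    show ptuple g + ptuple v ∈ C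
    rw [ptuple_add]
    exact h v hv
  exact (hC.closure_subset_iff.mpr h3) (h2 (Set.mem_image_of_mem _ hY))

lemma helper_diagleft (q : Ultrafilter ℝ) {B : Set ℝ} (hB : B ∈ q)
    {Y : Option κ → Ultrafilter ℝ} {C : Set (Option κ → Ultrafilter ℝ)} (hC : IsClosed C)
    (h : ∀ b ∈ B, ptuple (fun _ => b) + Y ∈ C) :
    (fun _ : Option κ => q) + Y ∈ C := by
  have hcont : Continuous fun r : Ultrafilter ℝ => (fun _ : Option κ => r) + Y :=
    continuous_pi fun l => (ucont_add_right (Y l)).comp continuous_id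
  have hq : q ∈ closure ((fun x : ℝ => (pure x : Ultrafilter ℝ)) '' B) := uclosure_pure.mpr hB
  have h2 : (fun r : Ultrafilter ℝ => (fun _ : Option κ => r) + Y) ''
      closure ((fun x : ℝ => (pure x : Ultrafilter ℝ)) '' B) ⊆
      closure ((fun r : Ultrafilter ℝ => (fun _ : Option κ => r) + Y) ''
        ((fun x : ℝ => (pure x : Ultrafilter ℝ)) '' B)) :=
    image_closure_subset_closure_image hcont
  have h3 : (fun r : Ultrafilter ℝ => (fun _ : Option κ => r) + Y) ''
      ((fun x : ℝ => (pure x : Ultrafilter ℝ)) '' B) ⊆ C := by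
    rintro _ ⟨_, ⟨b, hb, rfl⟩, rfl⟩
    exact h b hb
  exact (hC.closure_subset_iff.mpr h3) (h2 (Set.mem_image_of_mem _ hq))

lemma helper_diagright (g : Option κ → ℝ) (q : Ultrafilter ℝ) {B : Set ℝ} (hB : B ∈ q)
    {C : Set (Option κ → Ultrafilter ℝ)} (hC : IsClosed C)
    (h : ∀ b ∈ B, ptuple (g + fun _ => b) ∈ C) :
    ptuple g + (fun _ : Option κ => q) ∈ C := by
  have hcont : Continuous fun r : Ultrafilter ℝ => ptuple g + (fun _ : Option κ => r) :=
    continuous_pi fun l => (ucont_pure_add (g l)).comp continuous_id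
  have hq : q ∈ closure ((fun x : ℝ => (pure x : Ultrafilter ℝ)) '' B) := uclosure_pure.mpr hB
  have h2 := image_closure_subset_closure_image (s := (fun x : ℝ => (pure x : Ultrafilter ℝ)) '' B) hcont
  have h3 : (fun r : Ultrafilter ℝ => ptuple g + (fun _ : Option κ => r)) ''
      ((fun x : ℝ => (pure x : Ultrafilter ℝ)) '' B) ⊆ C := by
    rintro _ ⟨_, ⟨b, hb, rfl⟩, rfl⟩
    show ptuple g + (fun _ : Option κ => (pure b : Ultrafilter ℝ)) ∈ C
    have heq : ptuple g + (fun _ : Option κ => (pure b : Ultrafilter ℝ)) = ptuple (g + fun _ => b) := by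
      rw [← ptuple_add]; rfl
    rw [heq]
    exact h b hb
  exact (hC.closure_subset_iff.mpr h3) (h2 (Set.mem_image_of_mem _ hq))

include hSadd in
lemma gen_add_gen {m : ℕ} {a a' : ℝ} {H H' : Finset ℕ}
    (haS : a ∈ S) (halt : a < (2⁻¹:ℝ)^(m+1)) (hHne : H.Nonempty) (hHm : ∀ t ∈ H, m+1 ≤ t)
    (ha'S : a' ∈ S) (ha'lt : a' < (2⁻¹:ℝ)^(m+1)) (hH'ne : H'.Nonempty)
    (hH'm : ∀ t ∈ H', m+1 ≤ t)
    (hdisj : ∀ t₁ ∈ H, ∀ t₂ ∈ H', t₁ < t₂) :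
    ((fun o => Option.elim o a (fun l => a + wB y H l)) +
      (fun o => Option.elim o a' (fun l => a' + wB y H' l))) ∈ gen S y m := by
  refine ⟨a + a', H ∪ H', hSadd _ haS _ ha'S, ?_, ?_, ?_, ?_⟩
  · have : (2⁻¹:ℝ)^(m+1) + (2⁻¹:ℝ)^(m+1) = (2⁻¹:ℝ)^m := by ring
    linarith
  · exact hHne.mono Finset.subset_union_left
  · intro t ht
    rcases Finset.mem_union.mp ht with h | h
    · exact le_trans (Nat.le_succ m) (hHm t h)
    · exact le_trans (Nat.le_succ m) (hH'm t h)
  · have hdis : Disjoint H H' := by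
      rw [Finset.disjoint_left]
      intro t htH htH'
      exact absurd (hdisj t htH t htH') (lt_irrefl t)
    funext o
    cases o with
    | none => show a + a' = a + a'; rfl
    | some l =>
      show (a + wB y H l) + (a' + wB y H' l) = (a + a') + wB y (H ∪ H') l
      rw [wB, wB, wB, Finset.sum_union hdis]
      ring

include hSadd in
lemma II_add {X Y : Option κ → Ultrafilter ℝ} (hX : X ∈ II S y) (hY : Y ∈ II S y) :
    X + Y ∈ II S y := by
  rw [II, Set.mem_iInter]
  intro m
  refine helper_right (CL_closed S y m) (Set.mem_iInter.mp hX (m+1)) ?_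
  rintro v ⟨a, H, haS, halt, hHne, hHm, rfl⟩
  set M := H.max' hHne + 1 with hM
  have hYM : Y ∈ closure (ptuple '' gen S y M) := Set.mem_iInter.mp hY M
  refine helper_pureleft _ (CL_closed S y m) hYM ?_
  rintro v' ⟨a', H', ha'S, ha'lt, hH'ne, hH'm, rfl⟩
  refine subset_closure (Set.mem_image_of_mem _ ?_)
  have hcomm : (fun o => Option.elim o a (fun l => a + wB y H l)) + (fun o => Option.elim o a' (fun l => a' + wB y H' l)) ∈ gen S y m := by
    refine gen_add_gen S hSadd y haS halt hHne hHm ha'S ?_ hH'ne ?_ ?_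
    · calc a' < (2⁻¹:ℝ)^M := ha'lt
        _ ≤ (2⁻¹:ℝ)^(m+1) := by
          refine pow_le_pow_of_le_one (by norm_num) (by norm_num) ?_
          have := hHm _ (H.max'_mem hHne)
          omega
    · intro t ht
      have := hH'm t ht
      have h2 := hHm _ (H.max'_mem hHne)
      omega
    · intro t₁ ht₁ t₂ ht₂
      have h1 : t₁ ≤ H.max' hHne := H.le_max' t₁ ht₁
      have h2 : M ≤ t₂ := hH'm t₂ ht₂
      omega
  exact hcomm

include hSadd in
lemma diag_add_II {q : Ultrafilter ℝ} (hq : q ∈ TT S) {Y : Option κ → Ultrafilter ℝ}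
    (hY : Y ∈ II S y) : (fun _ : Option κ => q) + Y ∈ II S y := by
  rw [II, Set.mem_iInter]
  intro m
  have hB : S ∩ Set.Ioo 0 ((2⁻¹:ℝ)^(m+1)) ∈ q := hq _ (by positivity)
  refine helper_diagleft q hB (CL_closed S y m) ?_
  intro b hb
  refine helper_pureleft _ (CL_closed S y m) (Set.mem_iInter.mp hY (m+1)) ?_
  rintro v ⟨a, H, haS, halt, hHne, hHm, rfl⟩
  refine subset_closure (Set.mem_image_of_mem _ ?_)
  refine ⟨b + a, H, hSadd _ hb.1 _ haS, ?_, hHne, fun t ht => le_trans (Nat.le_succ m) (hHm t ht), ?_⟩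
  · have h1 : b < (2⁻¹:ℝ)^(m+1) := hb.2.2
    have h2 : (2⁻¹:ℝ)^(m+1) + (2⁻¹:ℝ)^(m+1) = (2⁻¹:ℝ)^m := by ring
    linarith
  · funext o
    cases o with
    | none => show b + a = b + a; rfl
    | some l => show b + (a + wB y H l) = (b + a) + wB y H l; ring

include hSadd in
lemma II_add_diag {q : Ultrafilter ℝ} (hq : q ∈ TT S) {Y : Option κ → Ultrafilter ℝ}
    (hY : Y ∈ II S y) : Y + (fun _ : Option κ => q) ∈ II S y := by
  rw [II, Set.mem_iInter]
  intro m
  refine helper_right (CL_closed S y m) (Set.mem_iInter.mp hY (m+1)) ?_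
  rintro v ⟨a, H, haS, halt, hHne, hHm, rfl⟩
  have hB : S ∩ Set.Ioo 0 ((2⁻¹:ℝ)^(m+1)) ∈ q := hq _ (by positivity)
  refine helper_diagright _ q hB (CL_closed S y m) ?_
  intro b hb
  refine subset_closure (Set.mem_image_of_mem _ ?_)
  refine ⟨a + b, H, hSadd _ haS _ hb.1, ?_, hHne, fun t ht => le_trans (Nat.le_succ m) (hHm t ht), ?_⟩
  · have h1 : b < (2⁻¹:ℝ)^(m+1) := hb.2.2
    have h2 : (2⁻¹:ℝ)^(m+1) + (2⁻¹:ℝ)^(m+1) = (2⁻¹:ℝ)^m := by ring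
    linarith
  · funext o
    cases o with
    | none => show a + b = a + b; rfl
    | some l => show (a + wB y H l) + b = (a + b) + wB y H l; ring

include hSpos hSadd hymem hysmall in
lemma II_coords {z : Option κ → Ultrafilter ℝ} (hz : z ∈ II S y) (l : Option κ) :
    z l ∈ TT S := by
  intro ε hε
  obtain ⟨m, hm⟩ := exists_pow_lt_of_lt_one (half_pos hε) (by norm_num : (2⁻¹:ℝ) < 1)
  have hzm : z ∈ closure (ptuple '' gen S y m) := Set.mem_iInter.mp hz m
  refine coord_mem_of_mem_closure_ptuple hzm (W := S ∩ Set.Ioo 0 ε) ?_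
  rintro v ⟨a, H, haS, halt, hHne, hHm, rfl⟩
  have hapos : 0 < a := hSpos haS
  cases l with
  | none =>
    refine ⟨haS, hapos, ?_⟩
    calc a < (2⁻¹:ℝ)^m := halt
      _ < ε/2 := hm
      _ < ε := by linarith
  | some l' =>
    have hw := wB_mem S hSpos hSadd y hymem H l'
    have hwnn := wB_nonneg S hSpos y hymem H l'
    have hwle : wB y H l' ≤ (2⁻¹:ℝ)^m := wB_small y hysmall H m hHm l'
    constructor
    · show a + wB y H l' ∈ S
      rcases hw with h | h
      · exact hSadd _ haS _ h
      · rw [h, add_zero]; exact haS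
    · show a + wB y H l' ∈ Set.Ioo 0 ε
      constructor
      · positivity
      · have : a + wB y H l' < (2⁻¹:ℝ)^m + (2⁻¹:ℝ)^m := by linarith
        linarith

include hSadd in
lemma TT_add {q q' : Ultrafilter ℝ} (hq : q ∈ TT S) (hq' : q' ∈ TT S) : q + q' ∈ TT S := by
  intro ε hε
  rw [uadd_mem]
  refine Filter.mem_of_superset (hq (ε/2) (by linarith)) ?_
  rintro x ⟨hxS, hx0, hxε⟩
  refine Filter.mem_of_superset (hq' (ε/2) (by linarith)) ?_
  rintro z ⟨hzS, hz0, hzε⟩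
  exact ⟨hSadd _ hxS _ hzS, by constructor <;> [linarith; linarith]⟩

def LL : Set (Ultrafilter ℝ) := {z | ∃ t ∈ TT S, z = t + p}

include hpT hpidem in
lemma p_mem_LL : p ∈ LL S p := ⟨p, hpT, hpidem⟩

include hSadd hpT in
lemma LL_sub_TT {z : Ultrafilter ℝ} (hz : z ∈ LL S p) : z ∈ TT S := by
  obtain ⟨t, ht, rfl⟩ := hz
  exact TT_add S hSadd ht hpT

include hpidem in
lemma LL_fix {z : Ultrafilter ℝ} (hz : z ∈ LL S p) : z + p = z := by
  obtain ⟨t, ht, rfl⟩ := hz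
  rw [add_assoc, ← hpidem]

include hSadd hpT hpidem hpK in
lemma LL_solve {z : Ultrafilter ℝ} (hz : z ∈ LL S p) : ∃ r ∈ TT S, r + z = p := by
  obtain ⟨r, hr, hrzp⟩ := hpK z (LL_sub_TT S p hSadd hpT hz)
  refine ⟨r, hr, ?_⟩
  rw [add_assoc, LL_fix S p hpidem hz] at hrzp
  exact hrzp

include hSadd hpT hpidem hpK in
lemma LL_min {z q : Ultrafilter ℝ} (hz : z ∈ LL S p) (hq : q ∈ LL S p) :
    ∃ s ∈ TT S, q = s + z := by
  obtain ⟨t', ht', rfl⟩ := hq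
  obtain ⟨r, hr, hrz⟩ := LL_solve S p hSadd hpT hpidem hpK hz
  refine ⟨t' + r, TT_add S hSadd ht' hr, ?_⟩
  rw [← hrz, ← add_assoc]

include hSadd hpT in
lemma LL_add {z z' : Ultrafilter ℝ} (hz : z ∈ LL S p) (hz' : z' ∈ LL S p) :
    z + z' ∈ LL S p := by
  obtain ⟨t', ht', rfl⟩ := hz'
  exact ⟨z + t', TT_add S hSadd (LL_sub_TT S p hSadd hpT hz) ht', (add_assoc _ _ _).symm⟩

lemma TT_closed : IsClosed (TT S) := by
  have : TT S = ⋂ (ε : ℝ), ⋂ (_ : 0 < ε), {u : Ultrafilter ℝ | S ∩ Set.Ioo 0 ε ∈ u} := by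
    ext u; simp [TT]
  rw [this]
  exact isClosed_iInter fun ε => isClosed_iInter fun _ => ultrafilter_isClosed_basic _

lemma LL_closed : IsClosed (LL S p) := by
  have himg : LL S p = (fun t => t + p) '' TT S := by
    ext z; constructor
    · rintro ⟨t, ht, rfl⟩; exact ⟨t, ht, rfl⟩
    · rintro ⟨t, ht, rfl⟩; exact ⟨t, ht, rfl⟩
  rw [himg]
  exact (((TT_closed S).isCompact).image (ucont_add_right p)).isClosed

include hSpos hSadd hpT hpidem hpK hymem hysmall in
lemma diag_p_mem_II : (fun _ : Option κ => p) ∈ II S y := by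
  classical
  set LB : Set (Option κ → Ultrafilter ℝ) := {z | ∀ l, z l ∈ LL S p} with hLB
  have hIL_ne : (II S y ∩ LB).Nonempty := by
    obtain ⟨z₀, hz₀⟩ := II_nonempty S p hpT y
    refine ⟨z₀ + (fun _ => p), II_add_diag S hSadd y hpT hz₀, fun l => ?_⟩
    exact ⟨z₀ l, II_coords S hSpos hSadd y hymem hysmall hz₀ l, rfl⟩
  have hIL_closed : IsClosed (II S y ∩ LB) := by
    refine (II_closed S y).inter ?_
    have : LB = ⋂ l, (fun z : Option κ → Ultrafilter ℝ => z l) ⁻¹' LL S p := by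
      ext z; simp [hLB]
    rw [this]
    exact isClosed_iInter fun l => (LL_closed S p).preimage (continuous_apply l)
  have hIL_add : ∀ x ∈ II S y ∩ LB, ∀ z ∈ II S y ∩ LB, x + z ∈ II S y ∩ LB := by
    rintro x ⟨hxI, hxL⟩ z ⟨hzI, hzL⟩
    exact ⟨II_add S hSadd y hxI hzI,
      fun l => LL_add S p hSadd hpT (hxL l) (hzL l)⟩
  obtain ⟨e, ⟨heI, heL⟩, hee⟩ := exists_idempotent_in_compact_add_subsemigroup
    (fun r => continuous_pi fun l => (ucont_add_right (r l)).comp (continuous_apply l))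
    (II S y ∩ LB) hIL_ne hIL_closed.isCompact hIL_add
  have hs : ∀ l, ∃ s ∈ TT S, p = s + e l := fun l =>
    LL_min S p hSadd hpT hpidem hpK (heL l) (p_mem_LL S p hpT hpidem)
  choose s hsT hse using hs
  have key : (fun _ : Option κ => p) + e = (fun _ : Option κ => p) := by
    have h1 : (fun _ : Option κ => p) = s + e := funext fun l => hse l
    calc (fun _ : Option κ => p) + e = (s + e) + e := by rw [← h1]
      _ = s + (e + e) := add_assoc _ _ _
      _ = s + e := by rw [hee]
      _ = (fun _ : Option κ => p) := h1.symm
  have := diag_add_II S hSadd y hpT heI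
  rwa [key] at this

include hSpos hSadd hpT hpidem hpK hymem hysmall in
theorem kernel_exists (P₀ : Set ℝ) (P : κ → Set ℝ) (hP₀ : P₀ ∈ p) (hP : ∀ l, P l ∈ p)
    (m : ℕ) :
    ∃ a : ℝ, ∃ H : Finset ℕ, a ∈ S ∧ H.Nonempty ∧ (∀ t ∈ H, m ≤ t) ∧ a ∈ P₀ ∧
      ∀ l : κ, a + (∑ t ∈ H, y l t) ∈ P l := by
  have hdiag := diag_p_mem_II S p hSpos hSadd hpT hpidem hpK y hymem hysmall
  have hm : (fun _ : Option κ => p) ∈ closure (ptuple '' gen S y m) :=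
    Set.mem_iInter.mp hdiag m
  obtain ⟨v, hv, hvB⟩ := mem_closure_ptuple.1 hm
    (fun o => Option.elim o P₀ (fun l => P l)) (fun l => by cases l <;> simp [hP₀, hP])
  obtain ⟨a, H, haS, halt, hHne, hHm, rfl⟩ := hv
  refine ⟨a, H, haS, hHne, hHm, hvB none, fun l => ?_⟩
  exact hvB (some l)

end Kernel

section Comb

variable (S : Set ℝ) (p : Ultrafilter ℝ)
variable (hSpos : S ⊆ Set.Ioi 0) (hSadd : ∀ x ∈ S, ∀ y ∈ S, x + y ∈ S)
  (hpT : p ∈ TT S) (hpidem : p = p + p)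
  (hpK : ∀ q ∈ TT S, ∃ r ∈ TT S, r + q + p = p)

def pstar (B : Set ℝ) : Set ℝ := {x ∈ B | {z : ℝ | x + z ∈ B} ∈ p}

lemma pstar_sub (B : Set ℝ) : pstar p B ⊆ B := fun _ h => h.1

include hpidem in
lemma pstar_mem {B : Set ℝ} (hB : B ∈ p) : pstar p B ∈ p := by
  have h1 : B ∈ p + p := by rw [← hpidem]; exact hB
  rw [uadd_mem] at h1
  exact Filter.inter_mem hB h1

include hpidem in
lemma pstar_shift {B : Set ℝ} (hB : B ∈ p) {x : ℝ} (hx : x ∈ pstar p B) :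
    {z : ℝ | x + z ∈ pstar p B} ∈ p := by
  have hBx : {z : ℝ | x + z ∈ B} ∈ p := hx.2
  have h2 : pstar p {z : ℝ | x + z ∈ B} ∈ p := pstar_mem p hpidem hBx
  refine Filter.mem_of_superset h2 ?_
  rintro z ⟨hz1, hz2⟩
  refine ⟨hz1, ?_⟩
  have : {w : ℝ | z + w ∈ {z : ℝ | x + z ∈ B}} = {w : ℝ | (x + z) + w ∈ B} := by
    ext w; simp [add_assoc]
  rwa [this] at hz2

include hSadd in
lemma natmul_mem {k : ℕ} (hk : k ≠ 0) {x : ℝ} (hx : x ∈ S) : (k:ℝ) * x ∈ S := by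
  induction k with
  | zero => exact absurd rfl hk
  | succ n ih =>
    rcases Nat.eq_zero_or_pos n with rfl | hn
    · simpa using hx
    · have h1 := ih (Nat.pos_iff_ne_zero.mp hn)
      have : ((n+1 : ℕ):ℝ) * x = (n:ℝ) * x + x := by push_cast; ring
      rw [this]
      exact hSadd _ h1 _ hx

include hSadd in
lemma combo_mem {ι' : Type*} (s : Finset ι') (g : ι' → ℕ) (x : ι' → ℝ)
    (hx : ∀ j, x j ∈ S) :
    (∑ j ∈ s, (g j : ℝ) * x j) ∈ S ∨ (∑ j ∈ s, (g j : ℝ) * x j) = 0 := by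
  classical
  induction s using Finset.induction with
  | empty => right; simp
  | @insert a s ha ih =>
    rw [Finset.sum_insert ha]
    rcases Nat.eq_zero_or_pos (g a) with h0 | h0
    · rw [h0]; simpa using ih
    · have h1 : (g a : ℝ) * x a ∈ S := natmul_mem S hSadd (Nat.pos_iff_ne_zero.mp h0) (hx a)
      rcases ih with h2 | h2
      · left; exact hSadd _ h1 _ h2
      · left; rw [h2, add_zero]; exact h1

include hSadd in
lemma sum_mem_S {H : Finset ℕ} (hH : H.Nonempty) {f : ℕ → ℝ} (hf : ∀ t ∈ H, f t ∈ S) :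
    (∑ t ∈ H, f t) ∈ S := by
  classical
  induction H using Finset.induction with
  | empty => exact absurd hH (by simp)
  | @insert a s ha ih =>
    rw [Finset.sum_insert ha]
    rcases s.eq_empty_or_nonempty with rfl | hs
    · simpa using hf a (by simp)
    · exact hSadd _ (hf a (by simp)) _ (ih hs fun t ht => hf t (Finset.mem_insert_of_mem ht))

/-- `⋂_{m ≤ n} D m` -/
def Dhat (D : ℕ → Set ℝ) (n : ℕ) : Set ℝ := ⋂ m ∈ Finset.range (n+1), D m

lemma Dhat_mem {D : ℕ → Set ℝ} (hD : ∀ n, D n ∈ p) (n : ℕ) : Dhat D n ∈ p := by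
  rw [Dhat]
  exact (Filter.biInter_mem (Finset.range (n+1)).finite_toSet).mpr fun m _ => hD m

lemma Dhat_anti {D : ℕ → Set ℝ} {m n : ℕ} (h : m ≤ n) : Dhat D n ⊆ Dhat D m := by
  intro x hx
  rw [Dhat, Set.mem_iInter₂] at *
  intro k hk
  exact hx k (by simp at hk ⊢; omega)

lemma Dhat_sub {D : ℕ → Set ℝ} (n : ℕ) : Dhat D n ⊆ D n := by
  intro x hx
  rw [Dhat, Set.mem_iInter₂] at hx
  exact hx n (by simp)

/-- min of a finset with default 0 -/
noncomputable def nmin (F : Finset ℕ) : ℕ := if h : F.Nonempty then F.min' h else 0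

lemma nmin_eq {F : Finset ℕ} (h : F.Nonempty) : nmin F = F.min' h := dif_pos h

end Comb

section Extract

variable (S : Set ℝ) (p : Ultrafilter ℝ)
variable (hSpos : S ⊆ Set.Ioi 0) (hSadd : ∀ x ∈ S, ∀ y ∈ S, x + y ∈ S)
  (hpT : p ∈ TT S) (hpidem : p = p + p)
  (hpK : ∀ q ∈ TT S, ∃ r ∈ TT S, r + q + p = p)
variable {κ : Type} [Fintype κ] (y : κ → ℕ → ℝ)
variable (D : ℕ → Set ℝ) (P₀seq : ℕ → Set ℝ)

/-- value of partial sums -/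
def gv (d : ℕ → ℝ × Finset ℕ) (F : Finset ℕ) (l : κ) : ℝ :=
  ∑ k ∈ F, ((d k).1 + ∑ t ∈ (d k).2, y l t)

/-- invariant for the recursion -/
def Good (n : ℕ) (d : ℕ → ℝ × Finset ℕ) : Prop :=
  (∀ k, k < n → (d k).1 ∈ S ∧ (d k).1 ∈ P₀seq k ∧ (d k).2.Nonempty ∧ (∀ t ∈ (d k).2, k ≤ t))
  ∧ (∀ k k', k < k' → k' < n → ∀ t ∈ (d k).2, ∀ t' ∈ (d k').2, t < t')
  ∧ (∀ F : Finset ℕ, F.Nonempty → (∀ m ∈ F, m < n) → ∀ l : κ,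
      gv y d F l ∈ pstar p (Dhat D (nmin F)))

lemma nmin_erase {F : Finset ℕ} {n : ℕ} (hn : n ∈ F) (hlt : ∀ x ∈ F.erase n, x < n)
    (hne : (F.erase n).Nonempty) : nmin F = nmin (F.erase n) := by
  have hFne : F.Nonempty := ⟨n, hn⟩
  rw [nmin_eq hFne, nmin_eq hne]
  apply le_antisymm
  · exact Finset.min'_le _ _ (Finset.mem_of_mem_erase (Finset.min'_mem _ hne))
  · have hmem := Finset.min'_mem F hFne
    by_cases h : F.min' hFne = n
    · exfalso
      have h1 : F.min' hFne ≤ (F.erase n).min' hne :=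
        Finset.min'_le _ _ (Finset.mem_of_mem_erase (Finset.min'_mem _ hne))
      have h2 : (F.erase n).min' hne < n := hlt _ (Finset.min'_mem _ hne)
      omega
    · exact Finset.min'_le _ _ (Finset.mem_erase.mpr ⟨h, hmem⟩)

include hSpos hSadd hpT hpidem hpK in
theorem good_step (hymem : ∀ l t, y l t ∈ S ∨ y l t = 0)
    (hysmall : ∀ l t, y l t ≤ (2⁻¹:ℝ)^(t+1))
    (hD : ∀ n, D n ∈ p) (hP₀ : ∀ n, P₀seq n ∈ p)
    (n : ℕ) (d : ℕ → ℝ × Finset ℕ) (hd : Good S p y D P₀seq n d) :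
    ∃ d', (∀ k, k < n → d' k = d k) ∧ Good S p y D P₀seq (n+1) d' := by
  classical
  obtain ⟨hd1, hd2, hd3⟩ := hd
  set M0 : ℕ := n ⊔ ((Finset.range n).sup (fun k => ((d k).2.sup id) + 1)) with hM0
  set 𝓕 : Finset (Finset ℕ) := (Finset.range n).powerset.filter Finset.Nonempty with h𝓕
  have h𝓕mem : ∀ F ∈ 𝓕, F.Nonempty ∧ ∀ m ∈ F, m < n := by
    intro F hF
    rw [h𝓕, Finset.mem_filter, Finset.mem_powerset] at hF
    exact ⟨hF.2, fun m hm => Finset.mem_range.mp (hF.1 hm)⟩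
  set Pl : κ → Set ℝ := fun l => pstar p (Dhat D n) ∩
    ⋂ F ∈ 𝓕, {z : ℝ | gv y d F l + z ∈ pstar p (Dhat D (nmin F))} with hPl
  have hPlp : ∀ l, Pl l ∈ p := by
    intro l
    refine Filter.inter_mem (pstar_mem p hpidem (Dhat_mem p hD n)) ?_
    refine (Filter.biInter_finset_mem 𝓕).mpr fun F hF => ?_
    obtain ⟨hFne, hFlt⟩ := h𝓕mem F hF
    exact pstar_shift p hpidem (Dhat_mem p hD (nmin F)) (hd3 F hFne hFlt l)
  obtain ⟨a, H, haS, hHne, hHM0, haP₀, hl⟩ :=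
    kernel_exists S p hSpos hSadd hpT hpidem hpK y hymem hysmall (P₀seq n) Pl (hP₀ n) hPlp M0
  refine ⟨Function.update d n (a, H), fun k hk => Function.update_of_ne (by omega) _ d, ?_, ?_, ?_⟩
  · -- clause 1
    intro k hk
    rcases Nat.lt_or_ge k n with h | h
    · rw [Function.update_of_ne (by omega)]
      exact hd1 k h
    · have hkn : k = n := by omega
      subst hkn
      rw [Function.update_self]
      exact ⟨haS, haP₀, hHne, fun t ht => le_trans (le_max_left _ _) (hHM0 t ht)⟩
  · -- clause 2
    intro k k' hkk' hk'
    rcases Nat.lt_or_ge k' n with h | h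
    · rw [Function.update_of_ne (by omega), Function.update_of_ne (by omega)]
      exact hd2 k k' hkk' h
    · have hkn : k' = n := by omega
      have hklt : k < n := by omega
      rw [hkn, Function.update_of_ne (by omega), Function.update_self]
      intro t ht t' ht'
      have h1 : t ≤ (d k).2.sup id := Finset.le_sup (f := id) ht
      have h2 : ((d k).2.sup id) + 1 ≤ (Finset.range n).sup (fun k => ((d k).2.sup id) + 1) :=
        Finset.le_sup (f := fun k => ((d k).2.sup id) + 1) (Finset.mem_range.mpr hklt)
      have h3 : M0 ≤ t' := hHM0 t' ht'
      omega
  · -- clause 3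
    intro F hFne hFlt l
    by_cases hnF : n ∈ F
    · have hF'lt : ∀ x ∈ F.erase n, x < n := by
        intro x hx
        have := hFlt x (Finset.mem_of_mem_erase hx)
        have hxn : x ≠ n := Finset.ne_of_mem_erase hx
        omega
      have hsum : gv y (Function.update d n (a, H)) F l
          = gv y d (F.erase n) l + (a + ∑ t ∈ H, y l t) := by
        rw [gv, ← Finset.sum_erase_add F _ hnF]
        congr 1
        · apply Finset.sum_congr rfl
          intro k hk
          rw [Function.update_of_ne (Finset.ne_of_mem_erase hk)]
        · rw [Function.update_self]
      rcases (F.erase n).eq_empty_or_nonempty with hF'e | hF'ne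
      · have hFsing : F = {n} := by
          apply Finset.eq_singleton_iff_unique_mem.mpr
          refine ⟨hnF, fun x hx => ?_⟩
          by_contra hxn
          exact absurd (Finset.mem_erase.mpr ⟨hxn, hx⟩) (by rw [hF'e]; simp)
        rw [hsum, hF'e]
        have hnmin : nmin F = n := by
          rw [hFsing, nmin_eq (Finset.singleton_nonempty n)]
          simp
        rw [hnmin]
        have := (hl l).1
        simpa [gv] using this
      · have hnmin : nmin F = nmin (F.erase n) := nmin_erase hnF hF'lt hF'ne
        rw [hsum, hnmin]
        have h2 := (hl l).2
        rw [Set.mem_iInter₂] at h2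
        have hF'𝓕 : F.erase n ∈ 𝓕 := by
          rw [h𝓕, Finset.mem_filter, Finset.mem_powerset]
          exact ⟨fun x hx => Finset.mem_range.mpr (hF'lt x hx), hF'ne⟩
        exact h2 (F.erase n) hF'𝓕
    · have hFsub : ∀ m ∈ F, m < n := by
        intro m hm
        have := hFlt m hm
        have : m ≠ n := fun h => hnF (h ▸ hm)
        omega
      have hsum : gv y (Function.update d n (a, H)) F l = gv y d F l := by
        apply Finset.sum_congr rfl
        intro k hk
        rw [Function.update_of_ne (by have := hFsub k hk; omega)]
      rw [hsum]
      exact hd3 F hFne hFsub l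


include hSpos hSadd hpT hpidem hpK in
theorem extract_exists (hymem : ∀ l t, y l t ∈ S ∨ y l t = 0)
    (hysmall : ∀ l t, y l t ≤ (2⁻¹:ℝ)^(t+1))
    (hD : ∀ n, D n ∈ p) (hP₀ : ∀ n, P₀seq n ∈ p) :
    ∃ (a : ℕ → ℝ) (H : ℕ → Finset ℕ),
      (∀ n, a n ∈ S ∧ a n ∈ P₀seq n ∧ (H n).Nonempty ∧ (∀ t ∈ H n, n ≤ t)) ∧
      (∀ n n', n < n' → ∀ t ∈ H n, ∀ t' ∈ H n', t < t') ∧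
      (∀ F : Finset ℕ, F.Nonempty → ∀ l : κ,
        (∑ n ∈ F, (a n + ∑ t ∈ H n, y l t)) ∈ pstar p (Dhat D (nmin F))) := by
  classical
  have good0 : Good S p y D P₀seq 0 (fun _ => (0, (∅ : Finset ℕ))) := by
    refine ⟨fun k hk => absurd hk (by omega), fun k k' _ hk' => absurd hk' (by omega),
      fun F hFne hFlt l => ?_⟩
    obtain ⟨m, hm⟩ := hFne
    exact absurd (hFlt m hm) (by omega)
  have hstep := good_step S p hSpos hSadd hpT hpidem hpK y D P₀seq hymem hysmall hD hP₀
  let step : ∀ n, {d : ℕ → ℝ × Finset ℕ // Good S p y D P₀seq n d} →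
      {d : ℕ → ℝ × Finset ℕ // Good S p y D P₀seq (n+1) d} := fun n prev =>
    ⟨Classical.choose (hstep n prev.1 prev.2), (Classical.choose_spec (hstep n prev.1 prev.2)).2⟩
  let data : ∀ n, {d : ℕ → ℝ × Finset ℕ // Good S p y D P₀seq n d} := fun n =>
    Nat.rec ⟨fun _ => (0, (∅ : Finset ℕ)), good0⟩ step n
  have hpre : ∀ n k, k < n → (data (n+1)).1 k = (data n).1 k := fun n k hk =>
    (Classical.choose_spec (hstep n (data n).1 (data n).2)).1 k hk
  have agree : ∀ n k, k < n → (data n).1 k = (data (k+1)).1 k := by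
    intro n
    induction n with
    | zero => intro k hk; omega
    | succ n ih =>
      intro k hk
      rcases Nat.lt_or_ge k n with h | h
      · rw [hpre n k h]; exact ih k h
      · have : k = n := by omega
        subst this
        rfl
  set a : ℕ → ℝ := fun n => ((data (n+1)).1 n).1 with ha
  set H : ℕ → Finset ℕ := fun n => ((data (n+1)).1 n).2 with hH
  have hdat : ∀ n N, n < N → (data N).1 n = (a n, H n) := by
    intro n N hnN
    rw [agree N n hnN, ha, hH]
  refine ⟨a, H, ?_, ?_, ?_⟩
  · intro n
    have := (data (n+1)).2.1 n (by omega)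
    rw [hdat n (n+1) (by omega)] at this
    exact this
  · intro n n' hnn' t ht t' ht'
    have h2 := (data (n'+1)).2.2.1 n n' hnn' (by omega)
    rw [hdat n (n'+1) (by omega), hdat n' (n'+1) (by omega)] at h2
    exact h2 t ht t' ht'
  · intro F hFne l
    set N := F.max' hFne + 1 with hN
    have hFlt : ∀ m ∈ F, m < N := fun m hm => by
      have := F.le_max' m hm; omega
    have h3 := (data N).2.2.2 F hFne hFlt l
    have heq : gv y (data N).1 F l = ∑ n ∈ F, (a n + ∑ t ∈ H n, y l t) := by
      apply Finset.sum_congr rfl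
      intro k hk
      rw [hdat k N (hFlt k hk)]
    rwa [heq] at h3

end Extract

section Main

variable {S : Set ℝ} {p : Ultrafilter ℝ}

theorem mainInd (hSpos : S ⊆ Set.Ioi 0) (hSadd : ∀ x ∈ S, ∀ y ∈ S, x + y ∈ S)
    (hpT : p ∈ TT S) (hpidem : p = p + p)
    (hpK : ∀ q ∈ TT S, ∃ r ∈ TT S, r + q + p = p) :
    ∀ v : ℕ, ∀ (ι : Type) (_ : Fintype ι), ∀ A : ι → Fin v → ℕ,
    (∀ i, ∃ j, A i j ≠ 0) →
    (∀ i i' : ι, ∀ j : Fin v, (A i j ≠ 0 ∧ ∀ j' < j, A i j' = 0) →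
      (A i' j ≠ 0 ∧ ∀ j' < j, A i' j' = 0) → A i j = A i' j) →
    (∀ c : ℕ, (∃ i j, A i j = c ∧ A i j ≠ 0 ∧ ∀ j' < j, A i j' = 0) →
      ((fun s : ℝ => (c:ℝ) * s) '' S) ∈ p) →
    ∀ D : ℕ → Set ℝ, (∀ n, D n ∈ p) → ∀ ε : ℕ → ℝ, (∀ n, 0 < ε n) →
    ∃ x : Fin v → ℕ → ℝ, (∀ j n, x j n ∈ S ∧ x j n < ε n) ∧
      ∀ F : Finset ℕ, ∀ hF : F.Nonempty, ∀ i,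
        (∑ j, (A i j : ℝ) * ∑ n ∈ F, x j n) ∈ D (F.min' hF) := by
  intro v
  induction v with
  | zero =>
    intro ι inst A hA1 hA2 hcS D hD ε hε
    refine ⟨fun j => j.elim0, fun j => j.elim0, fun F hF i => ?_⟩
    obtain ⟨j, _⟩ := hA1 i
    exact j.elim0
  | succ v ih =>
    intro ι inst A hA1 hA2 hcS D hD ε hε
    classical
    -- tail matrix on rows with zero first column
    set B : {i : ι // A i 0 = 0} → Fin v → ℕ := fun i j => A i.1 j.succ with hBdef
    have htrans : ∀ (i : ι) (_ : A i 0 = 0) (j : Fin v),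
        (A i j.succ ≠ 0 ∧ ∀ j' < j, A i j'.succ = 0) ↔
        (A i j.succ ≠ 0 ∧ ∀ j' < j.succ, A i j' = 0) := by
      intro i hi j
      constructor
      · rintro ⟨h1, h2⟩
        refine ⟨h1, fun j' hj' => ?_⟩
        rcases eq_or_ne j' 0 with rfl | hj'0
        · exact hi
        · obtain ⟨k, rfl⟩ := Fin.eq_succ_of_ne_zero hj'0
          exact h2 k (Fin.succ_lt_succ_iff.mp hj')
      · rintro ⟨h1, h2⟩
        exact ⟨h1, fun j' hj' => h2 j'.succ (Fin.succ_lt_succ_iff.mpr hj')⟩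
    have hB1 : ∀ i, ∃ j, B i j ≠ 0 := by
      rintro ⟨i, hi⟩
      obtain ⟨j, hj⟩ := hA1 i
      have hj0 : j ≠ 0 := fun h => hj (h ▸ hi)
      obtain ⟨k, rfl⟩ := Fin.eq_succ_of_ne_zero hj0
      exact ⟨k, hj⟩
    have hB2 : ∀ i i' : {i : ι // A i 0 = 0}, ∀ j : Fin v,
        (B i j ≠ 0 ∧ ∀ j' < j, B i j' = 0) → (B i' j ≠ 0 ∧ ∀ j' < j, B i' j' = 0) →
        B i j = B i' j := by
      rintro ⟨i, hi⟩ ⟨i', hi'⟩ j h h'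
      exact hA2 i i' j.succ ((htrans i hi j).mp h) ((htrans i' hi' j).mp h')
    have hBcS : ∀ c : ℕ, (∃ i j, B i j = c ∧ B i j ≠ 0 ∧ ∀ j' < j, B i j' = 0) →
        ((fun s : ℝ => (c:ℝ) * s) '' S) ∈ p := by
      rintro c ⟨⟨i, hi⟩, j, hc, hne, hlt⟩
      exact hcS c ⟨i, j.succ, hc, ((htrans i hi j).mp ⟨hne, hlt⟩).1,
        ((htrans i hi j).mp ⟨hne, hlt⟩).2⟩
    by_cases hI : ∃ i₀ : ι, A i₀ 0 ≠ 0
    · -- main case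
      obtain ⟨i₀, hi₀⟩ := hI
      set c : ℕ := A i₀ 0 with hcdef
      have hvac : ∀ (i : ι), ∀ j' < (0 : Fin (v+1)), A i j' = 0 :=
        fun i j' hj' => absurd hj' (Fin.not_lt_zero j')
      have hcall : ∀ i, A i 0 ≠ 0 → A i 0 = c :=
        fun i hi => hA2 i i₀ 0 ⟨hi, hvac i⟩ ⟨hi₀, hvac i₀⟩
      have hcIm : ((fun s : ℝ => (c:ℝ) * s) '' S) ∈ p :=
        hcS c ⟨i₀, 0, rfl, hi₀, hvac i₀⟩
      have hcR : (0:ℝ) < (c:ℝ) := by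
        have := Nat.pos_of_ne_zero hi₀
        exact_mod_cast this
      -- coefficient bound
      set M : ℕ := 1 + Finset.univ.sup (fun i : ι => ∑ j : Fin v, A i (j.succ)) with hMdef
      have hM : ∀ i : ι, (∑ j : Fin v, A i (j.succ)) < M := by
        intro i
        have h : (∑ j : Fin v, A i (j.succ)) ≤
            Finset.univ.sup (fun i : ι => ∑ j : Fin v, A i (j.succ)) :=
          Finset.le_sup (f := fun i : ι => ∑ j : Fin v, A i (j.succ)) (Finset.mem_univ i)
        omega
      have hM1 : 1 ≤ M := by omega
      have hMR : (0:ℝ) < (M:ℝ) := by exact_mod_cast hM1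
      -- epsilon schedule
      set emin : ℕ → ℝ := fun t => (Finset.range (t+1)).inf' (by simp) ε with hemindef
      have hemin_pos : ∀ t, 0 < emin t := by
        intro t
        rw [hemindef]
        rw [Finset.lt_inf'_iff]
        exact fun i _ => hε i
      have hemin_le : ∀ n t, n ≤ t → emin t ≤ ε n := by
        intro n t h
        have hmem : n ∈ Finset.range (t+1) := Finset.mem_range.mpr (by omega)
        exact Finset.inf'_le ε hmem
      set ε' : ℕ → ℝ := fun t => (2⁻¹:ℝ)^(t+1) * min (1/(M:ℝ)) (emin t) with hε'def
      have hε'pos : ∀ t, 0 < ε' t := by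
        intro t
        apply mul_pos (by positivity)
        exact lt_min (div_pos zero_lt_one hMR) (hemin_pos t)
      -- apply induction hypothesis
      obtain ⟨Y, hY1, hY2⟩ := ih {i : ι // A i 0 = 0} (Subtype.fintype _) B hB1 hB2 hBcS
        (fun n => pstar p (Dhat D n)) (fun n => pstar_mem p hpidem (Dhat_mem p hD n)) ε' hε'pos
      -- kernel sequences
      set y : {i : ι // A i 0 ≠ 0} → ℕ → ℝ :=
        fun i t => ∑ j : Fin v, (A i.1 (j.succ) : ℝ) * Y j t with hydef
      have hymem : ∀ l t, y l t ∈ S ∨ y l t = 0 := by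
        intro l t
        exact combo_mem S hSadd Finset.univ (fun j => A l.1 (j.succ)) (fun j => Y j t)
          (fun j => (hY1 j t).1)
      have hysmall : ∀ l t, y l t ≤ (2⁻¹:ℝ)^(t+1) := by
        intro l t
        have h1 : y l t ≤ (∑ j : Fin v, (A l.1 (j.succ) : ℝ)) * ε' t := by
          rw [hydef, Finset.sum_mul]
          refine Finset.sum_le_sum fun j _ => ?_
          exact mul_le_mul_of_nonneg_left (le_of_lt (hY1 j t).2) (by positivity)
        have h2 : (∑ j : Fin v, (A l.1 (j.succ) : ℝ)) ≤ (M:ℝ) := by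
          have := hM l.1
          have hcast : (∑ j : Fin v, (A l.1 (j.succ) : ℝ)) = ((∑ j : Fin v, A l.1 (j.succ) : ℕ) : ℝ) := by
            push_cast; ring
          rw [hcast]
          exact_mod_cast le_of_lt this
        have h3 : (∑ j : Fin v, (A l.1 (j.succ) : ℝ)) * ε' t ≤ (M:ℝ) * ε' t :=
          mul_le_mul_of_nonneg_right h2 (le_of_lt (hε'pos t))
        have h4 : (M:ℝ) * ε' t ≤ (2⁻¹:ℝ)^(t+1) := by
          rw [hε'def]
          have h5 : min (1/(M:ℝ)) (emin t) ≤ 1/(M:ℝ) := min_le_left _ _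
          have h6 : (M:ℝ) * ((2⁻¹:ℝ)^(t+1) * min (1/(M:ℝ)) (emin t)) ≤
              (M:ℝ) * ((2⁻¹:ℝ)^(t+1) * (1/(M:ℝ))) := by
            apply mul_le_mul_of_nonneg_left _ (le_of_lt hMR)
            exact mul_le_mul_of_nonneg_left h5 (by positivity)
          have h7 : (M:ℝ) * ((2⁻¹:ℝ)^(t+1) * (1/(M:ℝ))) = (2⁻¹:ℝ)^(t+1) := by
            field_simp
          calc (M:ℝ) * ((2⁻¹:ℝ)^(t+1) * min (1/(M:ℝ)) (emin t)) ≤ _ := h6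
            _ = _ := h7
        linarith
      -- location sets and extraction
      set P₀seq : ℕ → Set ℝ :=
        fun n => ((fun s : ℝ => (c:ℝ) * s) '' S) ∩ Set.Ioo 0 ((c:ℝ) * ε n) with hP₀def
      have hP₀ : ∀ n, P₀seq n ∈ p := by
        intro n
        refine Filter.inter_mem hcIm ?_
        refine Filter.mem_of_superset (hpT ((c:ℝ) * ε n) (mul_pos hcR (hε n))) ?_
        exact fun z hz => hz.2
      obtain ⟨a, H, hprop1, hprop2, hprop3⟩ :=
        extract_exists S p hSpos hSadd hpT hpidem hpK y D P₀seq hymem hysmall hD hP₀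
      -- define witness
      have hx0ex : ∀ n, ∃ s, s ∈ S ∧ (c:ℝ) * s = a n := by
        intro n
        obtain ⟨s, hs1, hs2⟩ := (hprop1 n).2.1.1
        exact ⟨s, hs1, hs2⟩
      set x0 : ℕ → ℝ := fun n => Classical.choose (hx0ex n) with hx0def
      have hx0 : ∀ n, x0 n ∈ S ∧ (c:ℝ) * x0 n = a n := fun n => Classical.choose_spec (hx0ex n)
      set x : Fin (v+1) → ℕ → ℝ :=
        Fin.cases x0 (fun j n => ∑ t ∈ H n, Y j t) with hxdef
      have hx_zero : ∀ n, x 0 n = x0 n := fun n => by simp [hxdef]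
      have hx_succ : ∀ (j : Fin v) n, x j.succ n = ∑ t ∈ H n, Y j t := fun j n => by
        simp [hxdef]
      refine ⟨x, ?_, ?_⟩
      · -- bounds
        intro j n
        refine Fin.cases ?_ ?_ j
        · rw [hx_zero]
          refine ⟨(hx0 n).1, ?_⟩
          have h1 : (c:ℝ) * x0 n < (c:ℝ) * ε n := by
            rw [(hx0 n).2]
            exact (hprop1 n).2.1.2.2
          exact lt_of_mul_lt_mul_left h1 (le_of_lt hcR)
        · intro j'
          rw [hx_succ]
          constructor
          · exact sum_mem_S S hSadd (hprop1 n).2.2.1 (fun t _ => (hY1 j' t).1)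
          · have hstrict : ∑ t ∈ H n, Y j' t < ∑ t ∈ H n, ε' t :=
              Finset.sum_lt_sum_of_nonempty (hprop1 n).2.2.1 (fun t _ => (hY1 j' t).2)
            have hbd : ∑ t ∈ H n, ε' t ≤ ε n := by
              have h1 : ∀ t ∈ H n, ε' t ≤ (2⁻¹:ℝ)^(t+1) * ε n := by
                intro t ht
                rw [hε'def]
                refine mul_le_mul_of_nonneg_left ?_ (by positivity)
                calc min (1/(M:ℝ)) (emin t) ≤ emin t := min_le_right _ _
                  _ ≤ ε n := hemin_le n t ((hprop1 n).2.2.2 t ht)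
              calc ∑ t ∈ H n, ε' t ≤ ∑ t ∈ H n, (2⁻¹:ℝ)^(t+1) * ε n :=
                    Finset.sum_le_sum h1
                _ = (∑ t ∈ H n, (2⁻¹:ℝ)^(t+1)) * ε n := by rw [Finset.sum_mul]
                _ ≤ (2⁻¹:ℝ)^n * ε n := by
                    apply mul_le_mul_of_nonneg_right _ (le_of_lt (hε n))
                    exact geo (H n) n (hprop1 n).2.2.2
                _ ≤ 1 * ε n := by
                    apply mul_le_mul_of_nonneg_right _ (le_of_lt (hε n))
                    exact pow_le_one₀ (by norm_num) (by norm_num)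
                _ = ε n := one_mul _
            linarith
      · -- the image condition
        intro F hF i
        rw [Fin.sum_univ_succ]
        by_cases hAi0 : A i 0 = 0
        · -- row from B
          have hswap : ∀ j : Fin v, ∑ n ∈ F, x j.succ n = ∑ t ∈ F.biUnion H, Y j t := by
            intro j
            have hdisj : (F : Set ℕ).PairwiseDisjoint H := by
              intro n₁ h₁ n₂ h₂ hne
              rcases Nat.lt_or_ge n₁ n₂ with h | h
              · refine Finset.disjoint_left.mpr fun t ht₁ ht₂ => ?_
                exact absurd (hprop2 n₁ n₂ h t ht₁ t ht₂) (lt_irrefl t)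
              · have h' : n₂ < n₁ := by omega
                refine Finset.disjoint_left.mpr fun t ht₁ ht₂ => ?_
                exact absurd (hprop2 n₂ n₁ h' t ht₂ t ht₁) (lt_irrefl t)
            rw [Finset.sum_biUnion hdisj]
            exact Finset.sum_congr rfl fun n _ => hx_succ j n
          have hFU : (F.biUnion H).Nonempty := by
            obtain ⟨n₀, hn₀⟩ := hF
            obtain ⟨t₀, ht₀⟩ := (hprop1 n₀).2.2.1
            exact ⟨t₀, Finset.mem_biUnion.mpr ⟨n₀, hn₀, ht₀⟩⟩
          have hmain := hY2 (F.biUnion H) hFU ⟨i, hAi0⟩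
          have hBrow : ∑ j : Fin v, (B ⟨i, hAi0⟩ j : ℝ) * ∑ t ∈ F.biUnion H, Y j t
              = ∑ j : Fin v, (A i j.succ : ℝ) * ∑ n ∈ F, x j.succ n := by
            refine Finset.sum_congr rfl fun j _ => ?_
            rw [hswap j, hBdef]
          rw [hBrow] at hmain
          have hstar := pstar_sub p _ hmain
          have hmin_le : F.min' hF ≤ (F.biUnion H).min' hFU := by
            have hmem := (F.biUnion H).min'_mem hFU
            obtain ⟨n₀, hn₀F, hn₀H⟩ := Finset.mem_biUnion.mp hmem
            calc F.min' hF ≤ n₀ := Finset.min'_le _ _ hn₀F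
              _ ≤ (F.biUnion H).min' hFU := (hprop1 n₀).2.2.2 _ hn₀H
          have hsub : Dhat D ((F.biUnion H).min' hFU) ⊆ D (F.min' hF) :=
            fun z hz => Dhat_sub _ (Dhat_anti hmin_le hz)
          have : (A i 0 : ℝ) * ∑ n ∈ F, x 0 n = 0 := by
            rw [hAi0]; simp
          rw [this, zero_add]
          exact hsub hstar
        · -- row with nonzero first entry
          have hAc : A i 0 = c := hcall i hAi0
          have hterm0 : (A i 0 : ℝ) * ∑ n ∈ F, x 0 n = ∑ n ∈ F, a n := by
            rw [hAc, Finset.mul_sum]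
            refine Finset.sum_congr rfl fun n _ => ?_
            rw [hx_zero n, (hx0 n).2]
          have hrest : ∑ j : Fin v, (A i j.succ : ℝ) * ∑ n ∈ F, x j.succ n
              = ∑ n ∈ F, ∑ t ∈ H n, y ⟨i, hAi0⟩ t := by
            have h1 : ∀ j : Fin v, (A i j.succ : ℝ) * ∑ n ∈ F, x j.succ n
                = ∑ n ∈ F, ∑ t ∈ H n, (A i j.succ : ℝ) * Y j t := by
              intro j
              rw [Finset.mul_sum]
              refine Finset.sum_congr rfl fun n _ => ?_
              rw [hx_succ j n, Finset.mul_sum]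
            rw [Finset.sum_congr rfl fun j _ => h1 j]
            rw [Finset.sum_comm]
            refine Finset.sum_congr rfl fun n _ => ?_
            rw [Finset.sum_comm]
            all_goals refine Finset.sum_congr rfl fun t _ => ?_
            all_goals simp [hydef]
          have htotal : (A i 0 : ℝ) * ∑ n ∈ F, x 0 n +
              ∑ j : Fin v, (A i j.succ : ℝ) * ∑ n ∈ F, x j.succ n
              = ∑ n ∈ F, (a n + ∑ t ∈ H n, y ⟨i, hAi0⟩ t) := by
            rw [hterm0, hrest, Finset.sum_add_distrib]
          rw [htotal]
          have hmem := hprop3 F hF ⟨i, hAi0⟩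
          have h1 := pstar_sub p _ hmem
          have h2 : Dhat D (nmin F) ⊆ D (F.min' hF) := by
            rw [nmin_eq hF]
            exact Dhat_sub _
          exact h2 h1
    · -- no row has nonzero first column
      push_neg at hI
      obtain ⟨x', hx'1, hx'2⟩ := ih {i : ι // A i 0 = 0} (Subtype.fintype _) B hB1 hB2 hBcS D hD ε hε
      have hs0ex : ∀ n, ∃ s, s ∈ S ∩ Set.Ioo 0 (ε n) :=
        fun n => Ultrafilter.nonempty_of_mem (hpT (ε n) (hε n))
      set s0 : ℕ → ℝ := fun n => Classical.choose (hs0ex n) with hs0def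
      have hs0 : ∀ n, s0 n ∈ S ∩ Set.Ioo 0 (ε n) := fun n => Classical.choose_spec (hs0ex n)
      set x : Fin (v+1) → ℕ → ℝ := Fin.cases s0 x' with hxdef
      have hx_zero : ∀ n, x 0 n = s0 n := fun n => by simp [hxdef]
      have hx_succ : ∀ (j : Fin v) n, x j.succ n = x' j n := fun j n => by simp [hxdef]
      refine ⟨x, ?_, ?_⟩
      · intro j n
        refine Fin.cases ?_ ?_ j
        · rw [hx_zero]
          exact ⟨(hs0 n).1, (hs0 n).2.2⟩
        · intro j'
          rw [hx_succ]
          exact hx'1 j' n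
      · intro F hF i
        rw [Fin.sum_univ_succ]
        have h0 : (A i 0 : ℝ) * ∑ n ∈ F, x 0 n = 0 := by rw [hI i]; simp
        rw [h0, zero_add]
        have := hx'2 F hF ⟨i, hI i⟩
        have heq : ∑ j : Fin v, (B ⟨i, hI i⟩ j : ℝ) * ∑ n ∈ F, x' j n
            = ∑ j : Fin v, (A i j.succ : ℝ) * ∑ n ∈ F, x j.succ n := by
          refine Finset.sum_congr rfl fun j _ => ?_
          have h2 : ∑ n ∈ F, x' j n = ∑ n ∈ F, x j.succ n :=
            Finset.sum_congr rfl fun n _ => (hx_succ j n).symm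
          rw [hBdef, h2]
        rwa [heq] at this

end Main

/-- Phulara-style image partition regularity of first-entries matrices near zero. -/
theorem firstEntries_matrix_nearZero_phulara
    (S : Set ℝ) (hSpos : S ⊆ Set.Ioi 0)
    (hSadd : ∀ x ∈ S, ∀ y ∈ S, x + y ∈ S)
    (hSdense : Set.Ioi (0 : ℝ) ⊆ closure S)
    (u v : ℕ) (A : Fin u → Fin v → ℕ) (hA : FirstEntriesCond u v A)
    -- for each first entry c of A, cS is central* near zero
    (hcS : ∀ c : ℕ, IsFirstEntry u v A c →
      ∀ q : Ultrafilter ℝ, memKZeroPlus S q → q = q + q →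
        (fun s : ℝ => (c : ℝ) * s) '' S ∈ q)
    (p : Ultrafilter ℝ) (hpK : memKZeroPlus S p) (hpidem : p = p + p)
    (C : ℕ → Set ℝ) (hCsub : ∀ n, C n ⊆ S) (hCp : ∀ n, C n ∈ p) :
    ∃ x : Fin v → ℕ → ℝ,
      (∀ i : Fin v, (∀ n, x i n ∈ S) ∧ IsGLB (Set.range (x i)) 0) ∧
      (∀ F : Finset ℕ, ∀ hF : F.Nonempty, ∀ i : Fin u,
        ∑ j : Fin v, (A i j : ℝ) * ∑ n ∈ F, x j n ∈ C (F.min' hF)) := by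
  have hpT : p ∈ TT S := hpK.1
  have hpK' : ∀ q ∈ TT S, ∃ r ∈ TT S, r + q + p = p := hpK.2
  have hcS' : ∀ c : ℕ, (∃ i j, A i j = c ∧ A i j ≠ 0 ∧ ∀ j' < j, A i j' = 0) →
      ((fun s : ℝ => (c:ℝ) * s) '' S) ∈ p := fun c hc => hcS c hc p hpK hpidem
  obtain ⟨x, hx1, hx2⟩ := mainInd hSpos hSadd hpT hpidem hpK' v (Fin u) inferInstance A
    hA.1 hA.2 hcS' C hCp (fun n => (2⁻¹:ℝ)^n) (fun n => by positivity)
  refine ⟨x, fun i => ⟨fun n => (hx1 i n).1, ?_⟩, hx2⟩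
  constructor
  · rintro z ⟨n, rfl⟩
    exact le_of_lt (hSpos (hx1 i n).1)
  · intro b hb
    by_contra hb0
    push_neg at hb0
    obtain ⟨n, hn⟩ := exists_pow_lt_of_lt_one hb0 (by norm_num : (2⁻¹:ℝ) < 1)
    have h1 : b ≤ x i n := hb ⟨n, rfl⟩
    have h2 : x i n < (2⁻¹:ℝ)^n := (hx1 i n).2
    linarith
end

section
/- Let (S,+) be a commutative discrete semigroup, let c ∈ ℕ, let 𝒜 ⊆ 𝒫(S) satisfy conditions (1)–(3), let (D,≤) be a directed partial order and 𝒯 ⊆ S^D satisfy condition (4), and let T = ⋂_{A∈𝒜} cl(A). Assume K(T) ∩ ⋂_{A∈𝒜} cl(cA) ≠ ∅, where cA = {ca : a ∈ A} (ca being a added to itself c times), let p ∈ K(T) ∩ ⋂_{A∈𝒜} cl(cA), and let C ∈ p. Then for every F ∈ 𝒫_f(𝒯), every d ∈ D and every A ∈ 𝒜 there exist a ∈ A, m ∈ ℕ and d₁, …, d_m ∈ D with d < d₁ < d₂ < ⋯ < d_m such that ca ∈ C and, for every f ∈ F, ca + Σ_{j=1}^m f(d_j) ∈ C. -/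
/- The addition on `Ultrafilter S` (Stone–Čech extension of `+`):
`A ∈ p + q ↔ {x | {y | x + y ∈ A} ∈ q} ∈ p`. -/
attribute [local instance] Ultrafilter.add Ultrafilter.addSemigroup

/- Repeated addition (`ca` = `a` added to itself `c` times) and sums over nonempty finite
index sets are computed in `WithZero S` (the monoid obtained by adjoining an additive
identity to `S`); membership in `(↑) '' C` expresses that the `S`-value lies in `C`. -/

namespace DHSaux

variable {S : Type*} [AddCommSemigroup S] {D : Type*} [PartialOrder D] {ι : Type*}

/-- `dhsAddSum x h m = x + h 1 + h 2 + ⋯ + h m`. -/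
def dhsAddSum (x : S) (h : ℕ → S) : ℕ → S
  | 0 => x
  | m + 1 => dhsAddSum x h m + h (m + 1)

theorem dhsAddSum_congr (x : S) (h h' : ℕ → S) (m : ℕ)
    (H : ∀ j, 1 ≤ j → j ≤ m → h j = h' j) : dhsAddSum x h m = dhsAddSum x h' m := by
  induction m with
  | zero => rfl
  | succ m ih =>
      simp only [dhsAddSum]
      rw [ih fun j h1 h2 => H j h1 (by omega), H (m+1) (by omega) (by omega)]

theorem dhsAddSum_add_right (x y : S) (h : ℕ → S) (m : ℕ) :
    dhsAddSum x h m + y = dhsAddSum (x + y) h m := by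
  induction m with
  | zero => rfl
  | succ m ih =>
      simp only [dhsAddSum]
      rw [add_right_comm, ih]

theorem dhsAddSum_concat (x y : S) (h h' h'' : ℕ → S) (m m' : ℕ)
    (H1 : ∀ j, 1 ≤ j → j ≤ m → h'' j = h j)
    (H2 : ∀ j, 1 ≤ j → j ≤ m' → h'' (m + j) = h' j) :
    dhsAddSum x h m + dhsAddSum y h' m' = dhsAddSum (x + y) h'' (m + m') := by
  induction m' with
  | zero =>
      simp only [dhsAddSum, Nat.add_zero]
      rw [dhsAddSum_add_right, dhsAddSum_congr (x + y) h h'' m fun j h1 h2 => (H1 j h1 h2).symm]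
  | succ m' ih =>
      have e1 : m + (m' + 1) = (m + m') + 1 := by omega
      simp only [dhsAddSum, e1, Nat.add_eq]
      rw [← add_assoc, ih (fun j h1 h2 => H2 j h1 (by omega))]
      congr 1
      have h2 := H2 (m' + 1) (by omega) (by omega)
      rw [show m + m' + 1 = m + (m' + 1) by omega, h2]

/-- `dhsIter k a = (k+1) • a` computed inside `S`. -/
def dhsIter : ℕ → S → S
  | 0, a => a
  | k + 1, a => a + dhsIter k a

theorem dhsIter_add (k : ℕ) (a b : S) :
    dhsIter k (a + b) = dhsIter k a + dhsIter k b := by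
  induction k with
  | zero => rfl
  | succ k ih =>
      simp only [dhsIter, ih, add_add_add_comm]

theorem dhsIter_cast (k : ℕ) (a : S) :
    ((dhsIter k a : S) : WithZero S) = (k + 1) • (a : WithZero S) := by
  induction k with
  | zero => simp [dhsIter]
  | succ k ih =>
      have : (k + 1 + 1) • (a : WithZero S) = (k + 1) • (a : WithZero S) + a := succ_nsmul _ _
      rw [this, ← ih]
      simp only [dhsIter, WithZero.coe_add]
      rw [add_comm]

theorem dhsAddSum_cast (x : S) (h : ℕ → S) (m : ℕ) :
    ((dhsAddSum x h m : S) : WithZero S)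
      = (x : WithZero S) + ∑ j ∈ Finset.Icc 1 m, (h j : WithZero S) := by
  induction m with
  | zero => simp [dhsAddSum]
  | succ m ih =>
      rw [Finset.sum_Icc_succ_top (by omega : 1 ≤ m + 1)]
      simp only [dhsAddSum, WithZero.coe_add, ih, add_assoc]


/-- Words: diagonal part `τ a₀` plus an increasing tuple of `f`-values. -/
def dhsWord (τ : S → S) (ev : ι → Option (D → S)) (A : Set S) (d : D) (r : ℕ) :
    Set (ι → S) :=
  {g | ∃ a₀, a₀ ∈ A ∧ ∃ m : ℕ, r ≤ m ∧ ∃ e : ℕ → D,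
    (∀ j, 1 ≤ j → j ≤ m → d < e j) ∧
    (∀ i j, 1 ≤ i → i < j → j ≤ m → e i < e j) ∧
    (∀ i, g i ∈ A) ∧
    (∀ i, ev i = none → g i = τ a₀) ∧
    (∀ i f, ev i = some f → g i = dhsAddSum (τ a₀) (fun j => f (e j)) m)}

theorem dhsWord_mono {τ : S → S} {ev : ι → Option (D → S)} {A A' : Set S} {d d' : D}
    {r r' : ℕ} (hA : A ⊆ A') (hd : d' ≤ d) (hr : r' ≤ r) :
    dhsWord τ ev A d r ⊆ dhsWord τ ev A' d' r' := by
  rintro g ⟨a₀, ha₀, m, hm, e, hed, hinc, hvals, hnone, hsome⟩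
  exact ⟨a₀, hA ha₀, m, le_trans hr hm, e,
    fun j h1 h2 => lt_of_le_of_lt hd (hed j h1 h2), hinc, fun i => hA (hvals i), hnone, hsome⟩

/-- The set of ultrafilter tuples every neighbourhood of which contains a word. -/
def dhsGamma (τ : S → S) (ev : ι → Option (D → S)) (𝒜 : Set (Set S)) (r : ℕ) :
    Set (ι → Ultrafilter S) :=
  {z | ∀ A ∈ 𝒜, ∀ d : D, ∀ X : ι → Set S, (∀ i, X i ∈ z i) →
    ∃ g ∈ dhsWord τ ev A d r, ∀ i, g i ∈ X i}

theorem dhsGamma_isClosed [Finite ι] (τ : S → S) (ev : ι → Option (D → S))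
    (𝒜 : Set (Set S)) (r : ℕ) : IsClosed (dhsGamma (D := D) τ ev 𝒜 r) := by
  rw [← isOpen_compl_iff, isOpen_iff_forall_mem_open]
  intro z hz
  simp only [Set.mem_compl_iff, dhsGamma, Set.mem_setOf_eq] at hz
  push_neg at hz
  obtain ⟨A, hA, d, X, hX, hng⟩ := hz
  refine ⟨{y | ∀ i, X i ∈ y i}, ?_, ?_, hX⟩
  · intro y hy
    simp only [Set.mem_compl_iff, dhsGamma, Set.mem_setOf_eq]
    push_neg
    exact ⟨A, hA, d, X, hy, hng⟩
  · have : {y : ι → Ultrafilter S | ∀ i, X i ∈ y i}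
        = Set.pi Set.univ (fun i => {u : Ultrafilter S | X i ∈ u}) := by
      ext y; simp [Set.mem_pi]
    rw [this]
    exact isOpen_set_pi Set.finite_univ (fun i _ => ultrafilter_isOpen_basic _)

theorem dhsGamma_mono {τ : S → S} {ev : ι → Option (D → S)} {𝒜 : Set (Set S)} {r r' : ℕ}
    (hr : r' ≤ r) : dhsGamma (D := D) τ ev 𝒜 r ⊆ dhsGamma τ ev 𝒜 r' := by
  intro z hz A hA d X hX
  obtain ⟨g, hgW, hgX⟩ := hz A hA d X hX
  exact ⟨g, dhsWord_mono (le_refl _) (le_refl _) hr hgW, hgX⟩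

theorem dhsGamma_subset_T {τ : S → S} {ev : ι → Option (D → S)} {𝒜 : Set (Set S)} {r : ℕ}
    (d₀ : D) {z : ι → Ultrafilter S} (hz : z ∈ dhsGamma τ ev 𝒜 r) :
    ∀ i, ∀ A ∈ 𝒜, A ∈ z i := by
  classical
  intro i A hA
  by_contra hmem
  have hc : Aᶜ ∈ z i := Ultrafilter.compl_mem_iff_notMem.mpr hmem
  obtain ⟨g, hgW, hgX⟩ := hz A hA d₀ (fun j => if j = i then Aᶜ else Set.univ)
    (fun j => by
      by_cases h : j = i
      · subst h; simpa using hc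
      · show (if j = i then Aᶜ else Set.univ) ∈ z j
        rw [if_neg h]; exact Filter.univ_mem)
  obtain ⟨a₀, _, m, _, e, _, _, hvals, _, _⟩ := hgW
  have := hgX i
  simp only [if_pos rfl] at this
  exact this (hvals i)

theorem dhs_mem_add {M : Type*} [AddSemigroup M] (U V : Ultrafilter M) (A : Set M) :
    A ∈ U + V ↔ {s | {t | s + t ∈ A} ∈ V} ∈ U := by
  exact Ultrafilter.eventually_add U V (· ∈ A)

theorem dhs_exists_ub (hdir : ∀ d e : D, ∃ x : D, d ≤ x ∧ e ≤ x) (e : ℕ → D) (m : ℕ) (d : D) :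
    ∃ d₂ : D, d ≤ d₂ ∧ ∀ j, 1 ≤ j → j ≤ m → e j ≤ d₂ := by
  induction m with
  | zero => exact ⟨d, le_refl _, fun j h1 h2 => by omega⟩
  | succ m ih =>
      obtain ⟨d₂, hd₂, he₂⟩ := ih
      obtain ⟨d₃, hd₃, he₃⟩ := hdir d₂ (e (m + 1))
      refine ⟨d₃, le_trans hd₂ hd₃, fun j h1 h2 => ?_⟩
      rcases Nat.lt_or_ge j (m + 1) with h | h
      · exact le_trans (he₂ j h1 (by omega)) hd₃
      · have : j = m + 1 := by omega
        subst this; exact he₃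

theorem dhs_inter_list {𝒜 : Set (Set S)} (h1ne : 𝒜.Nonempty)
    (h2 : ∀ A ∈ 𝒜, ∀ B ∈ 𝒜, A ∩ B ∈ 𝒜)
    (h3 : ∀ A ∈ 𝒜, ∀ a ∈ A, ∃ B ∈ 𝒜, ∀ b ∈ B, a + b ∈ A)
    {A : Set S} (hA : A ∈ 𝒜) (l : List S) (hl : ∀ x ∈ l, x ∈ A) :
    ∃ B ∈ 𝒜, ∀ x ∈ l, ∀ b ∈ B, x + b ∈ A := by
  induction l with
  | nil => exact ⟨h1ne.choose, h1ne.choose_spec, by simp⟩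
  | cons x l ih =>
      obtain ⟨B₂, hB₂, hB₂x⟩ := ih (fun y hy => hl y (by simp [hy]))
      obtain ⟨B₁, hB₁, hB₁x⟩ := h3 A hA x (hl x (by simp))
      refine ⟨B₁ ∩ B₂, h2 _ hB₁ _ hB₂, ?_⟩
      intro y hy b hb
      rcases List.mem_cons.mp hy with rfl | hy
      · exact hB₁x b hb.1
      · exact hB₂x y hy b hb.2

theorem dhs_exists_ultra {𝒜 : Set (Set S)} (h1 : 𝒜.Nonempty) (h1' : ∅ ∉ 𝒜)
    (h2 : ∀ A ∈ 𝒜, ∀ B ∈ 𝒜, A ∩ B ∈ 𝒜) :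
    ∃ u : Ultrafilter S, ∀ A ∈ 𝒜, A ∈ u := by
  have key : ∀ t : Set (Set S), t.Finite → t ⊆ 𝒜 → ∃ B ∈ 𝒜, B ⊆ ⋂₀ t := by
    intro t htfin
    refine Set.Finite.induction_on t htfin (fun _ => ⟨h1.choose, h1.choose_spec, by simp⟩) ?_
    intro a s _ _ ih hsub
    obtain ⟨B, hB, hBsub⟩ := ih (fun x hx => hsub (by simp [hx]))
    have ha : a ∈ 𝒜 := hsub (by simp)
    refine ⟨a ∩ B, h2 a ha B hB, ?_⟩
    rw [Set.sInter_insert]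
    exact Set.inter_subset_inter (le_refl _) hBsub
  have : (Filter.generate 𝒜).NeBot := by
    rw [Filter.generate_neBot_iff]
    intro t hsub hfin
    obtain ⟨B, hB, hBsub⟩ := key t hfin hsub
    have hBne : B.Nonempty := by
      rcases Set.eq_empty_or_nonempty B with h | h
      · exact absurd (h ▸ hB) h1'
      · exact h
    exact hBne.mono hBsub
  obtain ⟨u, hu⟩ := Ultrafilter.exists_le (Filter.generate 𝒜)
  exact ⟨u, fun A hA => hu (Filter.mem_generate_of_mem hA)⟩

theorem dhs_min_ideal {α : Type*} [AddSemigroup α] (T : Set (Ultrafilter α))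
    (Tne : T.Nonempty) (Tcl : IsClosed T)
    (Tadd : ∀ x ∈ T, ∀ y ∈ T, x + y ∈ T) :
    ∃ M : Set (Ultrafilter α), M.Nonempty ∧ M ⊆ T ∧ (∀ t ∈ T, ∀ x ∈ M, t + x ∈ M) ∧
      ∀ x ∈ M, ∀ y ∈ M, ∃ t ∈ T, t + x = y := by
  set 𝔖 : Set (Set (Ultrafilter α)) :=
    {I | I.Nonempty ∧ IsClosed I ∧ I ⊆ T ∧ ∀ t ∈ T, ∀ x ∈ I, t + x ∈ I} with h𝔖
  have hT𝔖 : T ∈ 𝔖 := ⟨Tne, Tcl, le_refl _, Tadd⟩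
  have hchain : ∀ c ⊆ 𝔖, IsChain (· ⊆ ·) c → c.Nonempty →
      ∃ lb ∈ 𝔖, ∀ s ∈ c, lb ⊆ s := by
    intro c hc𝔖 hch hcne
    haveI : Nonempty c := hcne.to_subtype
    have hdir : DirectedOn (· ⊇ ·) c := by
      intro a ha b hb
      rcases hch.total ha hb with h | h
      · exact ⟨a, ha, le_refl _, h⟩
      · exact ⟨b, hb, h, le_refl _⟩
    have hne : (⋂₀ c).Nonempty :=
      IsCompact.nonempty_sInter_of_directed_nonempty_isCompact_isClosed hdir
        (fun U hU => (hc𝔖 hU).1) (fun U hU => (hc𝔖 hU).2.1.isCompact)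
        (fun U hU => (hc𝔖 hU).2.1)
    obtain ⟨I₀, hI₀⟩ := hcne
    refine ⟨⋂₀ c, ⟨hne, isClosed_sInter fun U hU => (hc𝔖 hU).2.1,
      (Set.sInter_subset_of_mem hI₀).trans (hc𝔖 hI₀).2.2.1, ?_⟩,
      fun s hs => Set.sInter_subset_of_mem hs⟩
    intro t ht x hx
    exact Set.mem_sInter.mpr fun U hU => (hc𝔖 hU).2.2.2 t ht x (Set.mem_sInter.mp hx U hU)
  obtain ⟨M, hMT, hMmin⟩ := zorn_superset_nonempty 𝔖 hchain T hT𝔖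
  have hM𝔖 : M ∈ 𝔖 := hMmin.prop
  refine ⟨M, hM𝔖.1, hM𝔖.2.2.1, hM𝔖.2.2.2, ?_⟩
  intro x hx y hy
  have hTx𝔖 : ((fun t => t + x) '' T) ∈ 𝔖 := by
    refine ⟨⟨Tne.choose + x, ⟨Tne.choose, Tne.choose_spec, rfl⟩⟩,
      ((Tcl.isCompact).image (Ultrafilter.continuous_add_left x)).isClosed,
      ?_, ?_⟩
    · rintro y' ⟨t, ht, rfl⟩
      exact Tadd t ht x (hM𝔖.2.2.1 hx)
    · rintro t' ht' y' ⟨t, ht, rfl⟩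
      exact ⟨t' + t, Tadd t' ht' t ht, add_assoc t' t x⟩
  have hsub : (fun t => t + x) '' T ⊆ M := by
    rintro y' ⟨t, ht, rfl⟩
    exact hM𝔖.2.2.2 t ht x hx
  have := hMmin.2 hTx𝔖 hsub
  obtain ⟨t, ht, hty⟩ := this hy
  exact ⟨t, ht, hty⟩


theorem dhsGamma_add [Finite ι] {𝒜 : Set (Set S)} (h1 : 𝒜.Nonempty)
    (h2 : ∀ A ∈ 𝒜, ∀ B ∈ 𝒜, A ∩ B ∈ 𝒜)
    (h3 : ∀ A ∈ 𝒜, ∀ a ∈ A, ∃ B ∈ 𝒜, ∀ b ∈ B, a + b ∈ A)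
    (hdir : ∀ d e : D, ∃ x : D, d ≤ x ∧ e ≤ x)
    (τ : S → S) (hτ : ∀ a b, τ (a + b) = τ a + τ b) (ev : ι → Option (D → S))
    {r₁ r₂ : ℕ} {z₁ z₂ : ι → Ultrafilter S}
    (hz₁ : z₁ ∈ dhsGamma τ ev 𝒜 r₁) (hz₂ : z₂ ∈ dhsGamma τ ev 𝒜 r₂) :
    z₁ + z₂ ∈ dhsGamma τ ev 𝒜 (r₁ + r₂) := by
  classical
  cases nonempty_fintype ι
  intro A hA d X hX
  have hB : ∀ i, {s | {t | s + t ∈ X i} ∈ z₂ i} ∈ z₁ i := by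
    intro i
    have := hX i
    exact (dhs_mem_add (z₁ i) (z₂ i) (X i)).mp this
  obtain ⟨g₁, hg₁W, hg₁B⟩ := hz₁ A hA d _ hB
  obtain ⟨a₀, ha₀, m₁, hm₁r, e₁, he₁d, he₁inc, hg₁A, hg₁none, hg₁some⟩ := hg₁W
  obtain ⟨A₂, hA₂𝒜, hA₂x⟩ := dhs_inter_list h1 h2 h3 hA
    (a₀ :: (Finset.univ.toList.map g₁))
    (by
      intro x hx
      rcases List.mem_cons.mp hx with rfl | hx
      · exact ha₀
      · obtain ⟨i, _, rfl⟩ := List.mem_map.mp hx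
        exact hg₁A i)
  have hA₂a₀ : ∀ b ∈ A₂, a₀ + b ∈ A := fun b hb => hA₂x a₀ (by simp) b hb
  have hA₂g : ∀ i, ∀ b ∈ A₂, g₁ i + b ∈ A := fun i b hb =>
    hA₂x (g₁ i) (by
      refine List.mem_cons.mpr (Or.inr ?_)
      exact List.mem_map.mpr ⟨i, by simp, rfl⟩) b hb
  obtain ⟨d₂, hd₂d, hd₂e⟩ := dhs_exists_ub hdir e₁ m₁ d
  obtain ⟨g₂, hg₂W, hg₂X⟩ := hz₂ A₂ hA₂𝒜 d₂ (fun i => {t | g₁ i + t ∈ X i}) (fun i => hg₁B i)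
  obtain ⟨b₀, hb₀, m₂, hm₂r, e₂, he₂d, he₂inc, hg₂A, hg₂none, hg₂some⟩ := hg₂W
  refine ⟨g₁ + g₂, ⟨a₀ + b₀, hA₂a₀ b₀ hb₀, m₁ + m₂, by omega,
    (fun j => if j ≤ m₁ then e₁ j else e₂ (j - m₁)), ?_, ?_, ?_, ?_, ?_⟩, fun i => hg₂X i⟩
  · intro j h1' h2'
    dsimp only
    by_cases hj : j ≤ m₁
    · rw [if_pos hj]; exact he₁d j h1' hj
    · rw [if_neg hj]
      exact lt_of_le_of_lt hd₂d (he₂d (j - m₁) (by omega) (by omega))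
  · intro i j h1' hij hjm
    dsimp only
    by_cases hi : i ≤ m₁ <;> by_cases hj : j ≤ m₁
    · rw [if_pos hi, if_pos hj]; exact he₁inc i j h1' hij hj
    · rw [if_pos hi, if_neg hj]
      exact lt_of_le_of_lt (hd₂e i h1' hi) (he₂d (j - m₁) (by omega) (by omega))
    · exact absurd hij (by omega)
    · rw [if_neg hi, if_neg hj]
      exact he₂inc (i - m₁) (j - m₁) (by omega) (by omega) (by omega)
  · intro i
    exact hA₂g i (g₂ i) (hg₂A i)
  · intro i hi
    show g₁ i + g₂ i = τ (a₀ + b₀)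
    rw [hg₁none i hi, hg₂none i hi, hτ]
  · intro i f hif
    show g₁ i + g₂ i = _
    rw [hg₁some i f hif, hg₂some i f hif, hτ]
    refine dhsAddSum_concat (τ a₀) (τ b₀) _ _ _ m₁ m₂ ?_ ?_
    · intro j hj1 hj2
      show f (if j ≤ m₁ then e₁ j else e₂ (j - m₁)) = f (e₁ j)
      rw [if_pos hj2]
    · intro j hj1 hj2
      show f (if m₁ + j ≤ m₁ then e₁ (m₁ + j) else e₂ (m₁ + j - m₁)) = f (e₂ j)
      rw [if_neg (by omega : ¬(m₁ + j ≤ m₁)), show m₁ + j - m₁ = j by omega]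

end DHSaux
/-- De–Hindman–Strauss, Lemma 3.2. -/
theorem deHindmanStrauss_lemma
    {S : Type*} [AddCommSemigroup S]
    (c : ℕ) (hc : 0 < c)
    (𝒜 : Set (Set S))
    (h1 : 𝒜.Nonempty ∧ ∅ ∉ 𝒜)
    (h2 : ∀ A ∈ 𝒜, ∀ B ∈ 𝒜, A ∩ B ∈ 𝒜)
    (h3 : ∀ A ∈ 𝒜, ∀ a ∈ A, ∃ B ∈ 𝒜, ∀ b ∈ B, a + b ∈ A)
    {D : Type*} [PartialOrder D]
    (hdir : ∀ d e : D, ∃ x : D, d ≤ x ∧ e ≤ x)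
    (𝒯 : Set (D → S))
    (h4 : ∀ A ∈ 𝒜, ∀ d : D, ∀ F : Finset (D → S), F.Nonempty → ↑F ⊆ 𝒯 →
      ∃ d' : D, d < d' ∧ ∀ f ∈ F, f d' ∈ A)
    -- p ∈ K(T) ∩ ⋂_{A ∈ 𝒜} cl(cA), where T = ⋂_{A ∈ 𝒜} cl(A)
    (p : Ultrafilter S) (hpT : ∀ A ∈ 𝒜, A ∈ p)
    (hpK : ∀ q : Ultrafilter S, (∀ A ∈ 𝒜, A ∈ q) →
      ∃ r : Ultrafilter S, (∀ A ∈ 𝒜, A ∈ r) ∧ r + q + p = p)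
    (hpc : ∀ A ∈ 𝒜, {x : S | ∃ a ∈ A, (x : WithZero S) = c • (a : WithZero S)} ∈ p)
    (C : Set S) (hC : C ∈ p) :
    ∀ F : Finset (D → S), F.Nonempty → ↑F ⊆ 𝒯 → ∀ d : D, ∀ A ∈ 𝒜,
      ∃ a ∈ A, ∃ m : ℕ, 0 < m ∧ ∃ dd : ℕ → D,
        d < dd 1 ∧
        (∀ i j : ℕ, 1 ≤ i → i < j → j ≤ m → dd i < dd j) ∧
        (c • (a : WithZero S)) ∈ (fun s : S => (s : WithZero S)) '' C ∧
        ∀ f ∈ F, (c • (a : WithZero S) + ∑ j ∈ Finset.Icc 1 m, (f (dd j) : WithZero S))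
          ∈ (fun s : S => (s : WithZero S)) '' C := by
  classical
  obtain ⟨c₁, rfl⟩ : ∃ k, c = k + 1 := ⟨c - 1, by omega⟩
  intro F hFne hFsub d A hA
  haveI : Fintype {f : D → S // f ∈ F} := FinsetCoe.fintype F
  haveI : Finite (Option {f : D → S // f ∈ F}) := inferInstance
  -- abbreviations (all explicit, no lets)
  have hτ : ∀ a b : S, DHSaux.dhsIter c₁ (a + b) = DHSaux.dhsIter c₁ a + DHSaux.dhsIter c₁ b :=
    DHSaux.dhsIter_add c₁
  -- translated version of `hpc`
  have hpc' : ∀ A' ∈ 𝒜, {x : S | ∃ a ∈ A', x = DHSaux.dhsIter c₁ a} ∈ p := by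
    intro A' hA'
    have hset : {x : S | ∃ a ∈ A', (x : WithZero S) = (c₁ + 1) • (a : WithZero S)}
        = {x : S | ∃ a ∈ A', x = DHSaux.dhsIter c₁ a} := by
      ext x
      constructor
      · rintro ⟨a, ha, hx⟩
        refine ⟨a, ha, ?_⟩
        have hx2 : (x : WithZero S) = ((DHSaux.dhsIter c₁ a : S) : WithZero S) := by
          rw [hx, DHSaux.dhsIter_cast]
        exact_mod_cast hx2
      · rintro ⟨a, ha, rfl⟩
        exact ⟨a, ha, (DHSaux.dhsIter_cast c₁ a)⟩
    rw [← hset]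
    exact hpc A' hA'
  -- nonemptiness of the length-one word sets
  have hWne : ∀ A' ∈ 𝒜, ∀ d' : D,
      (DHSaux.dhsWord (DHSaux.dhsIter c₁) (Option.map Subtype.val : Option {f : D → S // f ∈ F} → Option (D → S)) A' d' 1 :
        Set (Option {f : D → S // f ∈ F} → S)).Nonempty := by
    intro A' hA' d'
    have hmem : ({x : S | ∃ a ∈ A', x = DHSaux.dhsIter c₁ a} ∩ A') ∈ p :=
      Filter.inter_mem (hpc' A' hA') (hpT A' hA')
    obtain ⟨x, hx1, hx2⟩ := Ultrafilter.nonempty_of_mem hmem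
    obtain ⟨a₀, ha₀, rfl⟩ := hx1
    obtain ⟨B, hB, hBx⟩ := h3 A' hA' (DHSaux.dhsIter c₁ a₀) hx2
    obtain ⟨d₁, hd₁, hfd₁⟩ := h4 B hB d' F hFne hFsub
    refine ⟨fun i => i.elim (DHSaux.dhsIter c₁ a₀)
        (fun fs => DHSaux.dhsIter c₁ a₀ + fs.1 d₁),
      ⟨a₀, ha₀, 1, le_refl 1, fun _ => d₁, ?_, ?_, ?_, ?_, ?_⟩⟩
    · intro j _ _; exact hd₁
    · intro i j h1 hij hj; exact absurd hij (by omega)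
    · intro i
      cases i with
      | none => exact hx2
      | some fs => exact hBx _ (hfd₁ fs.1 fs.2)
    · intro i hi
      cases i with
      | none => rfl
      | some fs => simp at hi
    · intro i f hif
      cases i with
      | none => simp at hif
      | some fs =>
          have : fs.1 = f := by simpa using hif
          subst this
          show DHSaux.dhsIter c₁ a₀ + fs.1 d₁
            = DHSaux.dhsAddSum (DHSaux.dhsIter c₁ a₀) (fun j => fs.1 d₁) 1
          rfl
  -- the set T ⊆ βS
  have hTne : ∃ u : Ultrafilter S, ∀ A' ∈ 𝒜, A' ∈ u := DHSaux.dhs_exists_ultra h1.1 h1.2 h2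
  have hTcl : IsClosed {q : Ultrafilter S | ∀ A' ∈ 𝒜, A' ∈ q} := by
    have hset : {q : Ultrafilter S | ∀ A' ∈ 𝒜, A' ∈ q}
        = ⋂ A' ∈ 𝒜, {q : Ultrafilter S | A' ∈ q} := by
      ext q; simp
    rw [hset]
    exact isClosed_biInter fun A' _ => ultrafilter_isClosed_basic A'
  have hTadd : ∀ x ∈ {q : Ultrafilter S | ∀ A' ∈ 𝒜, A' ∈ q},
      ∀ y ∈ {q : Ultrafilter S | ∀ A' ∈ 𝒜, A' ∈ q},
      x + y ∈ {q : Ultrafilter S | ∀ A' ∈ 𝒜, A' ∈ q} := by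
    intro x hx y hy A' hA'
    rw [DHSaux.dhs_mem_add]
    refine Filter.mem_of_superset (hx A' hA') ?_
    intro a ha
    obtain ⟨B, hB, hBa⟩ := h3 A' hA' a ha
    exact Filter.mem_of_superset (hy B hB) (fun b hb => hBa b hb)
  obtain ⟨M, hMne, hMT, hMideal, hMret⟩ :=
    DHSaux.dhs_min_ideal {q : Ultrafilter S | ∀ A' ∈ 𝒜, A' ∈ q}
      (hTne.imp fun u hu => hu) hTcl hTadd
  -- the minimal left ideal L₀ = M + p
  have hpL₀ : p ∈ (fun t => t + p) '' M := by
    obtain ⟨q₀, hq₀⟩ := hMne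
    obtain ⟨r, hr, heq⟩ := hpK q₀ (hMT hq₀)
    exact ⟨r + q₀, hMideal r hr q₀ hq₀, heq⟩
  have hTL₀ : ∀ t ∈ {q : Ultrafilter S | ∀ A' ∈ 𝒜, A' ∈ q}, ∀ x ∈ (fun t => t + p) '' M,
      t + x ∈ (fun t => t + p) '' M := by
    rintro t ht _ ⟨m, hm, rfl⟩
    refine ⟨t + m, hMideal t ht m hm, ?_⟩
    show (t + m) + p = t + (m + p)
    rw [add_assoc]
  have hL₀ret : ∀ x ∈ (fun t => t + p) '' M, ∀ y ∈ (fun t => t + p) '' M,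
      ∃ t ∈ {q : Ultrafilter S | ∀ A' ∈ 𝒜, A' ∈ q}, t + x = y := by
    rintro _ ⟨m₁, hm₁, rfl⟩ _ ⟨m₂, hm₂, rfl⟩
    obtain ⟨t, ht, hteq⟩ := hMret m₁ hm₁ m₂ hm₂
    exact ⟨t, ht, by
      show t + (m₁ + p) = m₂ + p
      rw [← add_assoc, hteq]⟩
  -- an ultrafilter of words
  have hgen : (Filter.generate {V : Set (Option {f : D → S // f ∈ F} → S) |
      ∃ A' ∈ 𝒜, ∃ d' : D,
        V = DHSaux.dhsWord (DHSaux.dhsIter c₁) (Option.map Subtype.val : Option {f : D → S // f ∈ F} → Option (D → S)) A' d' 1}).NeBot := by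
    rw [Filter.generate_neBot_iff]
    intro t hsub htfin
    have key : ∀ t : Set (Set (Option {f : D → S // f ∈ F} → S)), t.Finite →
        t ⊆ {V | ∃ A' ∈ 𝒜, ∃ d' : D,
          V = DHSaux.dhsWord (DHSaux.dhsIter c₁) (Option.map Subtype.val : Option {f : D → S // f ∈ F} → Option (D → S)) A' d' 1} →
        ∃ A' ∈ 𝒜, ∃ d' : D,
          DHSaux.dhsWord (DHSaux.dhsIter c₁) (Option.map Subtype.val : Option {f : D → S // f ∈ F} → Option (D → S)) A' d' 1 ⊆ ⋂₀ t := by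
      intro t htfin
      refine Set.Finite.induction_on t htfin (fun _ => ⟨A, hA, d, by simp⟩) ?_
      intro V s _ _ ih hsub'
      obtain ⟨A₂, hA₂, d₂, hsub₂⟩ := ih (fun x hx => hsub' (by simp [hx]))
      obtain ⟨A₁, hA₁, d₁, rfl⟩ := hsub' (by simp : V ∈ insert V s)
      obtain ⟨d₃, hd₃₁, hd₃₂⟩ := hdir d₁ d₂
      refine ⟨A₁ ∩ A₂, h2 _ hA₁ _ hA₂, d₃, ?_⟩
      rw [Set.sInter_insert]
      exact Set.subset_inter
        (DHSaux.dhsWord_mono Set.inter_subset_left hd₃₁ (le_refl 1))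
        ((DHSaux.dhsWord_mono Set.inter_subset_right hd₃₂ (le_refl 1)).trans hsub₂)
    obtain ⟨A', hA', d', hsub'⟩ := key t htfin hsub
    exact ((hWne A' hA' d').mono hsub')
  obtain ⟨U, hU⟩ := Ultrafilter.exists_le
    (Filter.generate {V : Set (Option {f : D → S // f ∈ F} → S) |
      ∃ A' ∈ 𝒜, ∃ d' : D,
        V = DHSaux.dhsWord (DHSaux.dhsIter c₁) (Option.map Subtype.val : Option {f : D → S // f ∈ F} → Option (D → S)) A' d' 1})
  have hUW : ∀ A' ∈ 𝒜, ∀ d' : D,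
      DHSaux.dhsWord (DHSaux.dhsIter c₁) (Option.map Subtype.val : Option {f : D → S // f ∈ F} → Option (D → S)) A' d' 1 ∈ U :=
    fun A' hA' d' => hU (Filter.mem_generate_of_mem ⟨A', hA', d', rfl⟩)
  -- z, P, and the Γ machinery
  have hz1 : (fun i => U.map (fun g => g i)) ∈
      DHSaux.dhsGamma (DHSaux.dhsIter c₁) (Option.map Subtype.val : Option {f : D → S // f ∈ F} → Option (D → S)) 𝒜 1 := by
    intro A' hA' d' X hX
    have hXU : ∀ i, {g : Option {f : D → S // f ∈ F} → S | g i ∈ X i} ∈ U :=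
      fun i => Ultrafilter.mem_map.mp (hX i)
    have hmem : (DHSaux.dhsWord (DHSaux.dhsIter c₁) (Option.map Subtype.val : Option {f : D → S // f ∈ F} → Option (D → S)) A' d' 1 ∩
        ⋂ i, {g : Option {f : D → S // f ∈ F} → S | g i ∈ X i}) ∈ U :=
      Filter.inter_mem (hUW A' hA' d') (Filter.iInter_mem.mpr hXU)
    obtain ⟨g, hg1, hg2⟩ := Ultrafilter.nonempty_of_mem hmem
    exact ⟨g, hg1, fun i => Set.mem_iInter.mp hg2 i⟩
  have hzT : ∀ i, ∀ A' ∈ 𝒜, A' ∈ U.map (fun g => g i) := by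
    intro i A' hA'
    refine Ultrafilter.mem_map.mpr (Filter.mem_of_superset (hUW A' hA' d) ?_)
    rintro g ⟨a₀, ha₀, m, hm, e, hed, hinc, hvals, hnone, hsome⟩
    exact hvals i
  have hPΓ : (fun _ => p) ∈
      DHSaux.dhsGamma (DHSaux.dhsIter c₁) (Option.map Subtype.val : Option {f : D → S // f ∈ F} → Option (D → S)) 𝒜 0 := by
    intro A' hA' d' X hX
    have hmem : (({x : S | ∃ a ∈ A', x = DHSaux.dhsIter c₁ a} ∩ A') ∩ ⋂ i, X i) ∈ p :=
      Filter.inter_mem (Filter.inter_mem (hpc' A' hA') (hpT A' hA'))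
        (Filter.iInter_mem.mpr hX)
    obtain ⟨x, hx⟩ := Ultrafilter.nonempty_of_mem hmem
    obtain ⟨⟨⟨a₀, ha₀, rfl⟩, hxA⟩, hxX⟩ := hx
    refine ⟨fun _ => DHSaux.dhsIter c₁ a₀,
      ⟨a₀, ha₀, 0, le_refl 0, fun _ => d', ?_, ?_, ?_, ?_, ?_⟩,
      fun i => Set.mem_iInter.mp hxX i⟩
    · intro j h1' h2'; exact absurd (h1'.trans h2') (by decide)
    · intro i j h1' hij hj; exact absurd hj (by omega)
    · intro i; exact hxA
    · intro i _; rfl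
    · intro i f _; rfl
  have gadd : ∀ {r₁ r₂ : ℕ} {z₁ z₂ : Option {f : D → S // f ∈ F} → Ultrafilter S},
      z₁ ∈ DHSaux.dhsGamma (DHSaux.dhsIter c₁) (Option.map Subtype.val : Option {f : D → S // f ∈ F} → Option (D → S)) 𝒜 r₁ →
      z₂ ∈ DHSaux.dhsGamma (DHSaux.dhsIter c₁) (Option.map Subtype.val : Option {f : D → S // f ∈ F} → Option (D → S)) 𝒜 r₂ →
      z₁ + z₂ ∈ DHSaux.dhsGamma (DHSaux.dhsIter c₁) (Option.map Subtype.val : Option {f : D → S // f ∈ F} → Option (D → S)) 𝒜 (r₁ + r₂) :=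
    fun h h' => DHSaux.dhsGamma_add h1.1 h2 h3 hdir _ hτ _ h h'
  -- the compact semigroup Λ = Γ₀ + (z + P) and its idempotent
  have hcont : ∀ r : Option {f : D → S // f ∈ F} → Ultrafilter S,
      Continuous (· + r) := by
    intro r
    exact continuous_pi fun i =>
      (Ultrafilter.continuous_add_left (r i)).comp (continuous_apply i)
  have hvΓ1 : ((fun i => U.map (fun g => g i)) + (fun _ => p)) ∈
      DHSaux.dhsGamma (DHSaux.dhsIter c₁) (Option.map Subtype.val : Option {f : D → S // f ∈ F} → Option (D → S)) 𝒜 1 :=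
    gadd hz1 hPΓ
  have hvΓ0 := DHSaux.dhsGamma_mono (Nat.zero_le 1) hvΓ1
  obtain ⟨ε, hεΛ, hεidem⟩ :=
    exists_idempotent_in_compact_add_subsemigroup hcont
      ((fun y => y + ((fun i => U.map (fun g => g i)) + (fun _ => p))) ''
        (DHSaux.dhsGamma (DHSaux.dhsIter c₁) (Option.map Subtype.val : Option {f : D → S // f ∈ F} → Option (D → S)) 𝒜 0))
      ⟨_, ⟨_, hPΓ, rfl⟩⟩
      (((DHSaux.dhsGamma_isClosed _ _ 𝒜 0).isCompact).image (hcont _))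
      (by
        rintro _ ⟨s₁, hs₁, rfl⟩ _ ⟨s₂, hs₂, rfl⟩
        refine ⟨s₁ + (((fun i => U.map (fun g => g i)) + (fun _ => p)) + s₂),
          gadd hs₁ (gadd hvΓ0 hs₂), ?_⟩
        show _ + _ = _
        rw [add_assoc s₁ _ _, add_assoc _ s₂ _, add_assoc s₁ _ _])
  obtain ⟨s'', hs''Γ, hs''ε⟩ := hεΛ
  have hs2 : s'' + ((fun i => U.map (fun g => g i)) + (fun _ => p)) = ε := hs''ε
  -- ε lies in L₀ in every coordinate
  have hεL : ∀ i, ε i ∈ (fun t => t + p) '' M := by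
    intro i
    rw [← hs2]
    refine hTL₀ (s'' i) (fun A' hA' => DHSaux.dhsGamma_subset_T d hs''Γ i A' hA') _ ?_
    exact hTL₀ _ (fun A' hA' => hzT i A' hA') p hpL₀
  -- P + ε = P
  choose t ht1 ht2 using fun i => hL₀ret (ε i) (hεL i) p hpL₀
  have htε : t + ε = (fun _ => p) := funext fun i => ht2 i
  have hPε : (fun _ => p) + ε = (fun _ => p) := by
    calc (fun _ => p) + ε = (t + ε) + ε := by rw [htε]
    _ = t + (ε + ε) := add_assoc t ε ε
    _ = t + ε := by rw [hεidem]
    _ = (fun _ => p) := htε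
  -- conclude that P is itself a limit of nontrivial words
  have hPΓ1 : (fun _ => p) ∈
      DHSaux.dhsGamma (DHSaux.dhsIter c₁) (Option.map Subtype.val : Option {f : D → S // f ∈ F} → Option (D → S)) 𝒜 1 := by
    have hfin : ((((fun _ => p) + s'') + (fun i => U.map (fun g => g i))) + (fun _ => p)) ∈
        DHSaux.dhsGamma (DHSaux.dhsIter c₁) (Option.map Subtype.val : Option {f : D → S // f ∈ F} → Option (D → S)) 𝒜 1 :=
      gadd (gadd (gadd hPΓ hs''Γ) hz1) hPΓ
    have heq : (fun _ => p) =
        ((((fun _ => p) + s'') + (fun i => U.map (fun g => g i))) + (fun _ => p)) := by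
      calc (fun _ => p) = (fun _ => p) + ε := hPε.symm
      _ = (fun _ => p) + (s'' + ((fun i => U.map (fun g => g i)) + (fun _ => p))) := by
          rw [hs2]
      _ = ((((fun _ => p) + s'') + (fun i => U.map (fun g => g i))) + (fun _ => p)) := by
          rw [← add_assoc, ← add_assoc]
    rw [heq]
    exact hfin
  -- extraction
  obtain ⟨g, hgW, hgC⟩ := hPΓ1 A hA d (fun _ => C) (fun _ => hC)
  obtain ⟨a₀, ha₀, m, hm1, e, hed, heinc, hgA, hgnone, hgsome⟩ := hgW
  refine ⟨a₀, ha₀, m, by omega, e, hed 1 (le_refl 1) hm1, heinc, ?_, ?_⟩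
  · refine ⟨g none, hgC none, ?_⟩
    show ((g none : S) : WithZero S) = _
    rw [hgnone none rfl, DHSaux.dhsIter_cast]
  · intro f hf
    refine ⟨g (some ⟨f, hf⟩), hgC _, ?_⟩
    show ((g (some ⟨f, hf⟩) : S) : WithZero S) = _
    rw [hgsome (some ⟨f, hf⟩) f rfl, DHSaux.dhsAddSum_cast, DHSaux.dhsIter_cast]
end

section
/- Let (S,+) be a commutative semigroup, let r be an idempotent (r = r+r) in J(S), and let (C_n)_{n=1}^∞ be a sequence of subsets of S with C_n ∈ r for every n ∈ ℕ. Then there exist functions α : 𝒫_f(𝒯) → S and H : 𝒫_f(𝒯) → 𝒫_f(ℕ) such that: (1) if F, G ∈ 𝒫_f(𝒯) with F ⊊ G, then max H(F) < min H(G); (2) whenever t ∈ ℕ, G₁ ⊊ G₂ ⊊ ⋯ ⊊ G_t is a chain in 𝒫_f(𝒯), f_i ∈ G_i for i = 1,…,t, and m = |G₁|, one has Σ_{i=1}^t (α(G_i) + Σ_{s∈H(G_i)} f_i(s)) ∈ C_m. -/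
/- The addition on `Ultrafilter S` (Stone–Čech extension of `+`):
`A ∈ p + q ↔ {x | {y | x + y ∈ A} ∈ q} ∈ p`. -/
attribute [local instance] Ultrafilter.add Ultrafilter.addSemigroup

/- Sums of elements of the semigroup `S` over nonempty finite index sets are computed in
`WithZero S` (the monoid obtained by adjoining an additive identity to `S`); such a sum of
elements coming from `S` over a nonempty index set is the image in `WithZero S` of the
corresponding sum in `S`, so membership in `(↑) '' A` expresses that the `S`-sum lies in `A`. -/

/-- `A ⊆ S` is a J-set: for every finite nonempty set `F` of sequences in `S` there are
`a ∈ S` and `H ∈ 𝒫_f(ℕ)` with `a + Σ_{t∈H} f(t) ∈ A` for every `f ∈ F`. -/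
def JSet (S : Type*) [AddCommSemigroup S] (A : Set S) : Prop :=
  ∀ F : Finset (ℕ → S), F.Nonempty →
    ∃ (a : S) (H : Finset ℕ), H.Nonempty ∧
      ∀ f ∈ F, ((a : WithZero S) + ∑ t ∈ H, (f t : WithZero S))
        ∈ (fun s : S => (s : WithZero S)) '' A

namespace Phulara

variable {S : Type*} [AddCommSemigroup S]

/-- Image of a subset of `S` in `WithZero S`. -/
def cim (A : Set S) : Set (WithZero S) := (fun s : S => (s : WithZero S)) '' A

lemma cim_mono {A B : Set S} (h : A ⊆ B) : cim A ⊆ cim B := Set.image_mono h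

/-- The star operation `A* = {x ∈ A : -x + A ∈ r}`. -/
def star (r : Ultrafilter S) (A : Set S) : Set S := {x | x ∈ A ∧ {y | x + y ∈ A} ∈ r}

lemma star_subset (r : Ultrafilter S) (A : Set S) : star r A ⊆ A := fun _ hx => hx.1

lemma mem_add_ultra {r q : Ultrafilter S} {A : Set S} (h : A ∈ r + q) :
    {x | {y | x + y ∈ A} ∈ q} ∈ r :=
  (Ultrafilter.eventually_add r q (· ∈ A)).mp h

lemma star_mem {r : Ultrafilter S} (hr : r = r + r) {A : Set S} (hA : A ∈ r) :
    star r A ∈ r := by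
  have h3 : {x | {y | x + y ∈ A} ∈ r} ∈ r := mem_add_ultra (hr ▸ hA)
  exact Filter.inter_mem hA h3

lemma star_add {r : Ultrafilter S} (hr : r = r + r) {A : Set S} {x : S} (hx : x ∈ star r A) :
    {y | x + y ∈ star r A} ∈ r := by
  have h1 : {y | x + y ∈ A} ∈ r := hx.2
  have h2 := mem_add_ultra (q := r) (hr ▸ h1)
  have h2' : {y | {z | (x + y) + z ∈ A} ∈ r} ∈ r := by
    have he : ∀ y : S, {z | y + z ∈ {w | x + w ∈ A}} = {z | (x + y) + z ∈ A} := by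
      intro y; ext z; simp [Set.mem_setOf_eq, add_assoc]
    simpa only [he] using h2
  exact Filter.inter_mem h1 h2'

/-- A J-set admits witnesses with `H` beyond any prescribed bound. -/
lemma jset_exists_gt {A : Set S} (hA : JSet S A) (F : Finset (ℕ → S)) (hF : F.Nonempty)
    (k : ℕ) :
    ∃ (a : S) (H : Finset ℕ), H.Nonempty ∧ (∀ s ∈ H, k < s) ∧
      ∀ f ∈ F, ((a : WithZero S) + ∑ t ∈ H, (f t : WithZero S)) ∈ cim A := by
  classical
  obtain ⟨a, H0, hH0, hsum⟩ := hA (F.image fun f t => f (t + (k + 1))) (hF.image _)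
  refine ⟨a, H0.image (· + (k + 1)), hH0.image _, ?_, ?_⟩
  · intro s hs
    obtain ⟨t, _, rfl⟩ := Finset.mem_image.mp hs
    omega
  · intro f hf
    have h := hsum _ (Finset.mem_image_of_mem (fun f t => f (t + (k + 1))) hf)
    rw [Finset.sum_image (by intro x _ y _ h; simp only at h; omega)]
    exact h

/-- One building block for sums along chains. -/
def elemP (prev : Finset (ℕ → S) → S × Finset ℕ) (G : Finset (ℕ → S)) (f : ℕ → S) :
    WithZero S :=
  ((prev G).1 : WithZero S) + ∑ s ∈ (prev G).2, (f s : WithZero S)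

open Classical in
/-- All building blocks with index sets inside `F`. -/
noncomputable def bset (prev : Finset (ℕ → S) → S × Finset ℕ) (F : Finset (ℕ → S)) :
    Finset (WithZero S) :=
  (F.powerset ×ˢ F).image fun p => elemP prev p.1 p.2

open Classical in
/-- Closure of `B` under at most `k` additional additions on the right. -/
noncomputable def eclos (B : Finset (WithZero S)) : ℕ → Finset (WithZero S)
  | 0 => B
  | k + 1 =>
    eclos B k ∪ Finset.image₂ (· + ·) (eclos B k) B

lemma eclos_mono (B : Finset (WithZero S)) {j k : ℕ} (h : j ≤ k) :
    eclos B j ⊆ eclos B k := by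
  classical
  induction k, h using Nat.le_induction with
  | base => exact subset_rfl
  | succ k hk IH =>
    refine IH.trans ?_
    intro x hx
    simp only [eclos]
    exact Finset.mem_union_left _ hx

lemma sum_mem_eclos (B : Finset (WithZero S)) :
    ∀ t : ℕ, 1 ≤ t → ∀ g : ℕ → WithZero S, (∀ i ∈ Finset.Icc 1 t, g i ∈ B) →
      ∑ i ∈ Finset.Icc 1 t, g i ∈ eclos B (t - 1) := by
  classical
  intro t ht
  induction t, ht using Nat.le_induction with
  | base =>
    intro g hg
    rw [Finset.Icc_self, Finset.sum_singleton]
    exact hg 1 (by simp)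
  | succ t ht IH =>
    intro g hg
    rw [← Finset.insert_Icc_right_eq_Icc_add_one (by omega : (1:ℕ) ≤ t + 1),
      Finset.sum_insert (by simp)]
    have h1 := IH g (fun i hi => by
      have := Finset.mem_Icc.mp hi
      exact hg i (Finset.mem_Icc.mpr ⟨this.1, by omega⟩))
    have h2 : g (t + 1) ∈ B := hg (t + 1) (Finset.mem_Icc.mpr ⟨by omega, le_refl _⟩)
    have h3 : (t + 1) - 1 = (t - 1) + 1 := by omega
    rw [h3]
    show _ ∈ eclos B ((t - 1) + 1)
    simp only [eclos]
    refine Finset.mem_union_right _ ?_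
    rw [add_comm (g (t + 1))]
    exact Finset.mem_image₂_of_mem h1 h2

/-- The property of a choice `(a, H)` at stage `F`, relative to earlier choices `prev`. -/
def good (r : Ultrafilter S) (C : ℕ → Set S) (prev : Finset (ℕ → S) → S × Finset ℕ) (F : Finset (ℕ → S)) (p : S × Finset ℕ) :
    Prop :=
  p.2.Nonempty ∧
  (∀ G, G ⊂ F → ∀ b ∈ (prev G).2, ∀ c ∈ p.2, b < c) ∧
  (∀ f ∈ F, ((p.1 : WithZero S) + ∑ s ∈ p.2, (f s : WithZero S))
      ∈ cim (star r (C F.card))) ∧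
  (∀ m ≤ F.card, ∀ d ∈ eclos (bset prev F) F.card, d ∈ cim (star r (C m)) →
    ∀ f ∈ F, d + ((p.1 : WithZero S) + ∑ s ∈ p.2, (f s : WithZero S))
      ∈ cim (star r (C m)))

lemma step_exists (r : Ultrafilter S) (C : ℕ → Set S) (hridem : r = r + r)
    (hrJ : ∀ A : Set S, A ∈ r → JSet S A) (hC : ∀ n, C n ∈ r)
    (prev : Finset (ℕ → S) → S × Finset ℕ) (F : Finset (ℕ → S))
    (hF : F.Nonempty) : ∃ p, good r C prev F p := by
  classical
  set n := F.card with hn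
  set T : Finset (ℕ × WithZero S) :=
    (Finset.Iic n ×ˢ eclos (bset prev F) n).filter
      (fun md => md.2 ∈ cim (star r (C md.1))) with hT
  have hA : (star r (C n) ∩
      ⋂ md ∈ T, {x : S | md.2 + (x : WithZero S) ∈ cim (star r (C md.1))}) ∈ r := by
    refine Filter.inter_mem (star_mem hridem (hC n)) ?_
    refine (Filter.biInter_finset_mem T).mpr ?_
    intro md hmd
    have hmem : md.2 ∈ cim (star r (C md.1)) := (Finset.mem_filter.mp hmd).2
    obtain ⟨s, hs, hds⟩ := hmem
    refine Filter.mem_of_superset (star_add hridem hs) ?_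
    intro y hy
    show md.2 + (y : WithZero S) ∈ cim (star r (C md.1))
    rw [← hds]
    exact ⟨s + y, hy, (WithZero.coe_add s y)⟩
  obtain ⟨a, H, hHne, hHgt, hsum⟩ := jset_exists_gt (hrJ _ hA) F hF
    (F.powerset.sup fun G => (prev G).2.sup id)
  refine ⟨(a, H), hHne, ?_, ?_, ?_⟩
  · intro G hG b hb c hc
    have h1 : b ≤ (prev G).2.sup id := Finset.le_sup (f := id) hb
    have h2 : (prev G).2.sup id ≤ F.powerset.sup (fun G => (prev G).2.sup id) :=
      Finset.le_sup (f := fun G => (prev G).2.sup id) (Finset.mem_powerset.mpr hG.subset)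
    exact lt_of_le_of_lt (h1.trans h2) (hHgt c hc)
  · intro f hf
    exact cim_mono Set.inter_subset_left (hsum f hf)
  · intro m hm d hd hdstar f hf
    have hmd : (m, d) ∈ T := by
      rw [hT]
      exact Finset.mem_filter.mpr
        ⟨Finset.mem_product.mpr ⟨Finset.mem_Iic.mpr hm, hd⟩, hdstar⟩
    obtain ⟨x, hx, hxeq⟩ := hsum f hf
    have hx3 := Set.mem_iInter₂.mp hx.2 (m, d) hmd
    rw [← hxeq]
    exact hx3

open Classical in
/-- Recursive choice of `(α F, H F)` by strong recursion on `F`. -/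
noncomputable def pick (r : Ultrafilter S) (C : ℕ → Set S) (hridem : r = r + r)
    (hrJ : ∀ A : Set S, A ∈ r → JSet S A) (hC : ∀ n, C n ∈ r) : Finset (ℕ → S) → S × Finset ℕ
  | F =>
    if hF : F.Nonempty then
      Classical.choose (step_exists r C hridem hrJ hC
        (fun G => if h : G ⊂ F then pick r C hridem hrJ hC G
          else ((Filter.nonempty_of_neBot (r : Filter S)).some, ∅)) F hF)
    else ((Filter.nonempty_of_neBot (r : Filter S)).some, ∅)
  termination_by F => F.card
  decreasing_by all_goals exact Finset.card_lt_card h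

open Classical in
/-- The record of earlier choices, as seen from stage `F`. -/
noncomputable def prevP (r : Ultrafilter S) (C : ℕ → Set S) (hridem : r = r + r)
    (hrJ : ∀ A : Set S, A ∈ r → JSet S A) (hC : ∀ n, C n ∈ r) (F : Finset (ℕ → S)) : Finset (ℕ → S) → S × Finset ℕ :=
  fun G => if h : G ⊂ F then pick r C hridem hrJ hC G
    else ((Filter.nonempty_of_neBot (r : Filter S)).some, ∅)

lemma prevP_eq (r : Ultrafilter S) (C : ℕ → Set S) (hridem : r = r + r)
    (hrJ : ∀ A : Set S, A ∈ r → JSet S A) (hC : ∀ n, C n ∈ r) {F G : Finset (ℕ → S)} (h : G ⊂ F) :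
    prevP r C hridem hrJ hC F G = pick r C hridem hrJ hC G := by
  unfold prevP
  exact dif_pos h

lemma pick_spec (r : Ultrafilter S) (C : ℕ → Set S) (hridem : r = r + r)
    (hrJ : ∀ A : Set S, A ∈ r → JSet S A) (hC : ∀ n, C n ∈ r) (F : Finset (ℕ → S)) (hF : F.Nonempty) :
    good r C (prevP r C hridem hrJ hC F) F (pick r C hridem hrJ hC F) := by
  rw [pick]
  rw [dif_pos hF]
  exact Classical.choose_spec _

lemma chain_mem (r : Ultrafilter S) (C : ℕ → Set S) (hridem : r = r + r)
    (hrJ : ∀ A : Set S, A ∈ r → JSet S A) (hC : ∀ n, C n ∈ r) : ∀ t : ℕ, 1 ≤ t → ∀ (G : ℕ → Finset (ℕ → S)) (f : ℕ → ℕ → S),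
    (∀ i ∈ Finset.Icc 1 t, (G i).Nonempty) →
    (∀ i j : ℕ, 1 ≤ i → i < j → j ≤ t → G i ⊂ G j) →
    (∀ i ∈ Finset.Icc 1 t, f i ∈ G i) →
    (∑ i ∈ Finset.Icc 1 t,
        (((pick r C hridem hrJ hC (G i)).1 : WithZero S)
          + ∑ s ∈ (pick r C hridem hrJ hC (G i)).2, (f i s : WithZero S)))
      ∈ cim (star r (C (G 1).card)) := by
  intro t ht
  induction t, ht using Nat.le_induction with
  | base =>
    intro G f hne hch hf
    rw [Finset.Icc_self, Finset.sum_singleton]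
    have spec := pick_spec r C hridem hrJ hC (G 1) (hne 1 (by simp))
    exact spec.2.2.1 (f 1) (hf 1 (by simp))
  | succ t ht IH =>
    intro G f hne hch hf
    have hFne : (G (t + 1)).Nonempty := hne (t + 1) (Finset.mem_Icc.mpr ⟨by omega, le_refl _⟩)
    have spec := pick_spec r C hridem hrJ hC (G (t + 1)) hFne
    have hsub : ∀ i, 1 ≤ i → i ≤ t → G i ⊂ G (t + 1) :=
      fun i h1 h2 => hch i (t + 1) h1 (by omega) (le_refl _)
    -- cardinality growth along the chain
    have hcard : ∀ j, 1 ≤ j → j ≤ t + 1 → j ≤ (G j).card := by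
      intro j
      induction j with
      | zero => omega
      | succ n ihn =>
        intro _ h2
        rcases Nat.eq_zero_or_pos n with hn | hn
        · subst hn
          simpa using Finset.card_pos.mpr (hne 1 (Finset.mem_Icc.mpr ⟨le_refl _, by omega⟩))
        · have hlt : (G n).card < (G (n + 1)).card :=
            Finset.card_lt_card (hch n (n + 1) hn (by omega) (by omega))
          have := ihn hn (by omega)
          omega
    -- the partial sum up to t
    have hIH := IH G f
      (fun i hi => hne i (by
        have := Finset.mem_Icc.mp hi
        exact Finset.mem_Icc.mpr ⟨this.1, by omega⟩))
      (fun i j h1 h2 h3 => hch i j h1 h2 (by omega))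
      (fun i hi => hf i (by
        have := Finset.mem_Icc.mp hi
        exact Finset.mem_Icc.mpr ⟨this.1, by omega⟩))
    -- each summand lies in `bset`
    have hterm : ∀ i ∈ Finset.Icc 1 t,
        elemP (prevP r C hridem hrJ hC (G (t + 1))) (G i) (f i)
          ∈ bset (prevP r C hridem hrJ hC (G (t + 1))) (G (t + 1)) := by
      intro i hi
      obtain ⟨hi1, hi2⟩ := Finset.mem_Icc.mp hi
      have hsubi := hsub i hi1 hi2
      simp only [bset, Finset.mem_image]
      refine ⟨(G i, f i), ?_, rfl⟩
      refine Finset.mem_product.mpr ⟨Finset.mem_powerset.mpr hsubi.subset, ?_⟩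
      exact hsubi.subset (hf i (Finset.mem_Icc.mpr ⟨hi1, by omega⟩))
    have hterm_eq : ∀ i ∈ Finset.Icc 1 t,
        elemP (prevP r C hridem hrJ hC (G (t + 1))) (G i) (f i)
          = (((pick r C hridem hrJ hC (G i)).1 : WithZero S)
            + ∑ s ∈ (pick r C hridem hrJ hC (G i)).2, (f i s : WithZero S)) := by
      intro i hi
      obtain ⟨hi1, hi2⟩ := Finset.mem_Icc.mp hi
      simp only [elemP, prevP_eq r C hridem hrJ hC (hsub i hi1 hi2)]
    have hd0 := sum_mem_eclos (bset (prevP r C hridem hrJ hC (G (t + 1))) (G (t + 1)))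
      t ht _ hterm
    rw [Finset.sum_congr rfl hterm_eq] at hd0
    have hbound : t - 1 ≤ (G (t + 1)).card := by
      have := hcard (t + 1) (by omega) (le_refl _)
      omega
    have hd := eclos_mono _ hbound hd0
    have hm : (G 1).card ≤ (G (t + 1)).card :=
      le_of_lt (Finset.card_lt_card (hch 1 (t + 1) (le_refl _) (by omega) (le_refl _)))
    have hfmem : f (t + 1) ∈ G (t + 1) := hf (t + 1) (Finset.mem_Icc.mpr ⟨by omega, le_refl _⟩)
    have hmain := spec.2.2.2 (G 1).card hm _ hd hIH (f (t + 1)) hfmem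
    rw [← Finset.insert_Icc_right_eq_Icc_add_one (by omega : (1:ℕ) ≤ t + 1),
      Finset.sum_insert (by simp), add_comm]
    exact hmain

end Phulara

/-- Phulara's generalized Central Sets Theorem: for an idempotent `r ∈ J(S)` and a sequence
of sets `Cₙ ∈ r`. -/
theorem centralSetsTheorem_phulara {S : Type*} [AddCommSemigroup S]
    (r : Ultrafilter S) (hridem : r = r + r)
    (hrJ : ∀ A : Set S, A ∈ r → JSet S A)
    (C : ℕ → Set S) (hC : ∀ n, C n ∈ r) :
    ∃ (α : Finset (ℕ → S) → S) (H : Finset (ℕ → S) → Finset ℕ),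
      -- H maps 𝒫_f(𝒯) into 𝒫_f(ℕ)
      (∀ F : Finset (ℕ → S), F.Nonempty → (H F).Nonempty) ∧
      -- (1): if F ⊊ G then max H(F) < min H(G)
      (∀ F G : Finset (ℕ → S), F.Nonempty → F ⊂ G →
        ∀ a ∈ H F, ∀ b ∈ H G, a < b) ∧
      -- (2): sums along chains G₁ ⊊ ⋯ ⊊ G_t land in C_m, m = |G₁|
      (∀ t : ℕ, 1 ≤ t → ∀ (G : ℕ → Finset (ℕ → S)) (f : ℕ → ℕ → S),
        (∀ i ∈ Finset.Icc 1 t, (G i).Nonempty) →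
        (∀ i j : ℕ, 1 ≤ i → i < j → j ≤ t → G i ⊂ G j) →
        (∀ i ∈ Finset.Icc 1 t, f i ∈ G i) →
        (∑ i ∈ Finset.Icc 1 t,
            ((α (G i) : WithZero S) + ∑ s ∈ H (G i), (f i s : WithZero S)))
          ∈ (fun x : S => (x : WithZero S)) '' C (G 1).card) := by
  refine ⟨fun F => (Phulara.pick r C hridem hrJ hC F).1,
    fun F => (Phulara.pick r C hridem hrJ hC F).2, ?_, ?_, ?_⟩
  · intro F hF
    exact (Phulara.pick_spec r C hridem hrJ hC F hF).1
  · intro F G hFne hFG a ha b hb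
    have hGne : G.Nonempty := hFne.mono hFG.subset
    have spec := Phulara.pick_spec r C hridem hrJ hC G hGne
    have h := spec.2.1 F hFG
    rw [Phulara.prevP_eq r C hridem hrJ hC hFG] at h
    exact h a ha b hb
  · intro t ht G f h1 h2 h3
    have := Phulara.chain_mem r C hridem hrJ hC t ht G f h1 h2 h3
    exact Set.image_mono (Phulara.star_subset r (C (G 1).card)) this
end

section
/- Let (S,+) be a commutative semigroup, let r be an idempotent (r = r+r) in J(S), and let (C_n)_{n=1}^∞ be a sequence of subsets of S with C_n ∈ r for every n ∈ ℕ. Let k ∈ ℕ and for each l ∈ {1,…,k} let ⟨y_{l,n}⟩_{n=1}^∞ be a sequence in S. Then there exist a sequence ⟨α_n⟩_{n=1}^∞ in S and a sequence ⟨H_n⟩_{n=1}^∞ in 𝒫_f(ℕ) with max H_n < min H_{n+1} for every n ∈ ℕ, such that for every F ∈ 𝒫_f(ℕ) with m = min F and every l ∈ {1,…,k}, Σ_{n∈F} (α_n + Σ_{t∈H_n} y_{l,t}) ∈ C_m. -/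
/- The addition on `Ultrafilter S` (Stone–Čech extension of `+`):
`A ∈ p + q ↔ {x | {y | x + y ∈ A} ∈ q} ∈ p`. -/
attribute [local instance] Ultrafilter.add Ultrafilter.addSemigroup

section CSTAux

open Filter

variable {S : Type*} [AddCommSemigroup S]

lemma CSTcoe_add (a b : S) :
    ((a + b : S) : WithZero S) = (a : WithZero S) + (b : WithZero S) := rfl

lemma CSTcoe_inj : Function.Injective (fun s : S => (s : WithZero S)) :=
  fun _ _ h => Option.some_injective _ h

/-- The star set `A⋆ = {x ∈ A : -x + A ∈ r}`. -/
def CSTstar (r : Ultrafilter S) (A : Set S) : Set S :=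
  {x | x ∈ A ∧ {y | x + y ∈ A} ∈ r}

lemma CSTstar_subset (r : Ultrafilter S) (A : Set S) : CSTstar r A ⊆ A :=
  fun _ h => h.1

lemma CSTmem_add {p q : Ultrafilter S} {A : Set S} :
    A ∈ p + q ↔ {x | {y | x + y ∈ A} ∈ q} ∈ p := by
  have h := Ultrafilter.eventually_add p q (· ∈ A)
  simpa [Filter.eventually_iff] using h

lemma CSTstar_mem {r : Ultrafilter S} (hridem : r = r + r) {A : Set S} (hA : A ∈ r) :
    CSTstar r A ∈ r := by
  have h2 : A ∈ r + r := hridem ▸ hA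
  have h3 : {x | {y | x + y ∈ A} ∈ r} ∈ r := CSTmem_add.mp h2
  exact inter_mem hA h3

lemma CSTstar_shift {r : Ultrafilter S} (hridem : r = r + r) {A : Set S} {x : S}
    (hx : x ∈ CSTstar r A) : {y | x + y ∈ CSTstar r A} ∈ r := by
  have hB : {y | x + y ∈ A} ∈ r := hx.2
  have h2 : {y | x + y ∈ A} ∈ r + r := hridem ▸ hB
  have h3 : {z | {w | z + w ∈ {y | x + y ∈ A}} ∈ r} ∈ r := CSTmem_add.mp h2
  have h4 : {z | {w | (x + z) + w ∈ A} ∈ r} ∈ r := by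
    have he : ∀ z : S, {w | z + w ∈ {y : S | x + y ∈ A}} = {w | (x + z) + w ∈ A} := by
      intro z; ext w; simp [Set.mem_setOf_eq, add_assoc]
    simpa only [he] using h3
  refine mem_of_superset (inter_mem hB h4) ?_
  rintro z ⟨hz1, hz2⟩
  exact ⟨hz1, hz2⟩

/-- Dependent choice for sequences. -/
lemma CSTdc {X : Type*} (R : ℕ → X → X → Prop) (x0 : X)
    (h : ∀ n x, ∃ y, R n x y) :
    ∃ c : ℕ → X, c 0 = x0 ∧ ∀ n, R n (c n) (c (n + 1)) := by
  choose f hf using h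
  exact ⟨fun n => Nat.rec x0 f n, rfl, fun n => hf n _⟩

variable (r : Ultrafilter S) (C : ℕ → Set S) (k : ℕ) (y : ℕ → ℕ → S)

/-- The invariant for a prefix of length `n` of the construction. -/
def CSTGood (n : ℕ) (α : ℕ → S) (H : ℕ → Finset ℕ) : Prop :=
  (∀ i < n, (H i).Nonempty) ∧
  (∀ i, i + 1 < n → ∀ a ∈ H i, ∀ b ∈ H (i + 1), a < b) ∧
  (∀ F : Finset ℕ, ∀ hF : F.Nonempty, (∀ i ∈ F, i < n) → ∀ l ∈ Finset.Icc 1 k,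
    (∑ m ∈ F, ((α m : WithZero S) + ∑ t ∈ H m, (y l t : WithZero S)))
      ∈ (fun x : S => (x : WithZero S)) '' CSTstar r (C (F.min' hF)))

lemma CSTGood_zero (α : ℕ → S) (H : ℕ → Finset ℕ) : CSTGood r C k y 0 α H := by
  refine ⟨fun i hi => absurd hi (Nat.not_lt_zero i),
    fun i hi => absurd hi (Nat.not_lt_zero _), fun F hF h2 l hl => ?_⟩
  exact absurd (h2 _ hF.choose_spec) (Nat.not_lt_zero _)

lemma CSTmin'_eq_sInf (F : Finset ℕ) (hF : F.Nonempty) : F.min' hF = sInf (F : Set ℕ) := by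
  have h1 : sInf (F : Set ℕ) ∈ (F : Set ℕ) := Nat.sInf_mem (Finset.coe_nonempty.mpr hF)
  exact le_antisymm (F.min'_le _ (Finset.mem_coe.mp h1)) (Nat.sInf_le (F.min'_mem hF))

lemma CSTstep (hridem : r = r + r) (hrJ : ∀ A : Set S, A ∈ r → JSet S A)
    (hC : ∀ n, C n ∈ r) (n : ℕ) (α : ℕ → S) (H : ℕ → Finset ℕ)
    (h : CSTGood r C k y n α H) :
    ∃ (a : S) (K : Finset ℕ),
      CSTGood r C k y (n + 1) (Function.update α n a) (Function.update H n K) := by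
  classical
  obtain ⟨hne, hsep, hsum⟩ := h
  set e : S → WithZero S := fun s => (s : WithZero S) with he
  -- the shift amount
  set M : ℕ := (H (n - 1)).sup id + 1 with hM
  -- the finitely many constraints from previous partial sums
  set Ps : Finset (Finset ℕ × ℕ) :=
    ((Finset.range n).powerset.filter fun F => F.Nonempty) ×ˢ Finset.Icc 1 k with hPs
  set D : Finset ℕ × ℕ → Set S := fun p =>
    {x : S | (∑ m ∈ p.1, ((α m : WithZero S) + ∑ t ∈ H m, (y p.2 t : WithZero S)))
      + (x : WithZero S) ∈ e '' CSTstar r (C (sInf (p.1 : Set ℕ)))} with hD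
  have hDr : ∀ p ∈ Ps, D p ∈ r := by
    rintro ⟨F, l⟩ hp
    simp only [hPs, Finset.mem_product, Finset.mem_filter, Finset.mem_powerset] at hp
    obtain ⟨⟨hFsub, hFne⟩, hl⟩ := hp
    have hFlt : ∀ i ∈ F, i < n := fun i hi => Finset.mem_range.mp (hFsub hi)
    obtain ⟨s, hs, hse⟩ := hsum F hFne hFlt l hl
    have hmin : F.min' hFne = sInf (F : Set ℕ) := CSTmin'_eq_sInf F hFne
    have hsh := CSTstar_shift hridem hs
    refine Filter.mem_of_superset hsh ?_
    intro x hx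
    refine ⟨s + x, ?_, ?_⟩
    · rw [← hmin]; exact hx
    · show e (s + x) = _
      rw [show e (s + x) = e s + e x from rfl, hse]
  have hB : CSTstar r (C n) ∩ ⋂ p ∈ Ps, D p ∈ r := by
    refine Filter.inter_mem (CSTstar_mem hridem (hC n)) ?_
    exact (Filter.biInter_finset_mem Ps).mpr hDr
  have hJ := hrJ _ hB
  set FF : Finset (ℕ → S) :=
    insert (fun t => y 0 (t + M)) ((Finset.Icc 1 k).image fun l => fun t => y l (t + M))
      with hFF
  obtain ⟨a, K, hKne, hKmem⟩ := hJ FF (Finset.insert_nonempty _ _)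
  refine ⟨a, K.image (· + M), ?_⟩
  set K' : Finset ℕ := K.image (· + M) with hK'
  have hK'ne : K'.Nonempty := hKne.image _
  have hK'big : ∀ b ∈ K', M ≤ b := by
    intro b hb
    obtain ⟨t, _, rfl⟩ := Finset.mem_image.mp hb
    exact Nat.le_add_left M t
  set α' : ℕ → S := Function.update α n a with hα'
  set H' : ℕ → Finset ℕ := Function.update H n K' with hH'
  have hα'lt : ∀ m < n, α' m = α m := fun m hm =>
    Function.update_of_ne (Nat.ne_of_lt hm) _ _
  have hH'lt : ∀ m < n, H' m = H m := fun m hm =>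
    Function.update_of_ne (Nat.ne_of_lt hm) _ _
  have hα'n : α' n = a := Function.update_self _ _ _
  have hH'n : H' n = K' := Function.update_self _ _ _
  -- the key fact about the new block
  have hblock : ∀ l ∈ Finset.Icc 1 k,
      ∃ b ∈ CSTstar r (C n) ∩ ⋂ p ∈ Ps, D p,
        (a : WithZero S) + ∑ t ∈ K', (y l t : WithZero S) = (b : WithZero S) := by
    intro l hl
    have hfl : (fun t => y l (t + M)) ∈ FF := by
      refine Finset.mem_insert_of_mem (Finset.mem_image.mpr ⟨l, hl, rfl⟩)
    obtain ⟨b, hb, hbe⟩ := hKmem _ hfl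
    refine ⟨b, hb, ?_⟩
    have hsumK : ∑ t ∈ K', (y l t : WithZero S) = ∑ t ∈ K, (y l (t + M) : WithZero S) := by
      rw [hK']
      exact Finset.sum_image (fun x _ x' _ h => by omega)
    rw [hsumK, ← hbe]
  -- prove the invariant
  refine ⟨?_, ?_, ?_⟩
  · intro i hi
    rcases Nat.lt_succ_iff_lt_or_eq.mp hi with hi' | rfl
    · rw [hH'lt i hi']; exact hne i hi'
    · rw [hH'n]; exact hK'ne
  · intro i hi x hx z hz
    rcases Nat.lt_succ_iff_lt_or_eq.mp hi with hi' | hieq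
    · rw [hH'lt i (by omega)] at hx
      rw [hH'lt (i+1) hi'] at hz
      exact hsep i hi' x hx z hz
    · -- i + 1 = n
      have hin : i = n - 1 := by omega
      have hn0 : 0 < n := by omega
      rw [hH'lt i (by omega)] at hx
      rw [show i + 1 = n by omega, hH'n] at hz
      have h1 : x ≤ (H (n-1)).sup id := by
        rw [hin] at hx; exact Finset.le_sup (f := id) hx
      have h2 : M ≤ z := hK'big z hz
      omega
  · intro F hF hFlt l hl
    by_cases hnF : n ∈ F
    · -- new block participates
      obtain ⟨b, hbB, hbe⟩ := hblock l hl
      have hbCn : b ∈ CSTstar r (C n) := hbB.1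
      set F₀ : Finset ℕ := F.erase n with hF₀
      have hF₀lt : ∀ i ∈ F₀, i < n := by
        intro i hi
        have h1 := Finset.mem_of_mem_erase hi
        have h2 := Finset.ne_of_mem_erase hi
        have := hFlt i h1
        omega
      have hsplit :
          (∑ m ∈ F, ((α' m : WithZero S) + ∑ t ∈ H' m, (y l t : WithZero S)))
            = (∑ m ∈ F₀, ((α m : WithZero S) + ∑ t ∈ H m, (y l t : WithZero S)))
              + (b : WithZero S) := by
        rw [← Finset.add_sum_erase F _ hnF]
        rw [hα'n, hH'n, hbe, ← hF₀]
        rw [add_comm]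
        congr 1
        refine Finset.sum_congr rfl ?_
        intro m hm
        rw [hα'lt m (hF₀lt m hm), hH'lt m (hF₀lt m hm)]
      rcases Finset.eq_empty_or_nonempty F₀ with hF₀e | hF₀ne
      · -- F = {n}
        have hFn : F = {n} := by
          apply Finset.eq_singleton_iff_unique_mem.mpr
          refine ⟨hnF, fun x hx => ?_⟩
          by_contra hxn
          exact absurd (Finset.mem_erase.mpr ⟨hxn, hx⟩) (by rw [← hF₀, hF₀e]; simp)
        have hmin : F.min' hF = n := by
          simp [hFn]
        rw [hsplit, hF₀e, Finset.sum_empty, zero_add, hmin]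
        exact ⟨b, hbCn, rfl⟩
      · -- F₀ nonempty: use constraint from Ps
        have hmem : (F₀, l) ∈ Ps := by
          simp only [hPs, Finset.mem_product, Finset.mem_filter, Finset.mem_powerset]
          exact ⟨⟨fun i hi => Finset.mem_range.mpr (hF₀lt i hi), hF₀ne⟩, hl⟩
        have hbD : b ∈ D (F₀, l) := by
          have := hbB.2
          exact Set.mem_iInter₂.mp this (F₀, l) hmem
        have hminEq : F.min' hF = F₀.min' hF₀ne := by
          have h1 : F.min' hF ∈ F := F.min'_mem hF
          have h2 : F.min' hF ≠ n := by
            intro heq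
            obtain ⟨i, hi⟩ := hF₀ne
            have := F.min'_le i (Finset.mem_of_mem_erase hi)
            have := hF₀lt i hi
            omega
          have h3 : F.min' hF ∈ F₀ := Finset.mem_erase.mpr ⟨h2, h1⟩
          exact le_antisymm (F.min'_le _ (Finset.mem_of_mem_erase (F₀.min'_mem hF₀ne)))
            (F₀.min'_le _ h3)
        have hmin2 : sInf ((F₀ : Finset ℕ) : Set ℕ) = F₀.min' hF₀ne :=
          (CSTmin'_eq_sInf F₀ hF₀ne).symm
        rw [hsplit, hminEq]
        have := hbD
        simp only [hD, Set.mem_setOf_eq] at this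
        rw [hmin2] at this
        exact this
    · -- old case: n ∉ F
      have hFlt' : ∀ i ∈ F, i < n := by
        intro i hi
        have := hFlt i hi
        rcases Nat.lt_succ_iff_lt_or_eq.mp this with h' | rfl
        · exact h'
        · exact absurd hi hnF
      have heq :
          (∑ m ∈ F, ((α' m : WithZero S) + ∑ t ∈ H' m, (y l t : WithZero S)))
            = ∑ m ∈ F, ((α m : WithZero S) + ∑ t ∈ H m, (y l t : WithZero S)) := by
        refine Finset.sum_congr rfl fun m hm => ?_
        rw [hα'lt m (hFlt' m hm), hH'lt m (hFlt' m hm)]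
      rw [heq]
      exact hsum F hF hFlt' l hl

end CSTAux

/-- Phulara's Central Sets Theorem for finitely many sequences: the sums
`Σ_{n∈F} (αₙ + Σ_{t∈Hₙ} y_{l,t})` land in `C_{min F}`. -/
theorem centralSetsTheorem_phulara_sequences {S : Type*} [AddCommSemigroup S]
    (r : Ultrafilter S) (hridem : r = r + r)
    (hrJ : ∀ A : Set S, A ∈ r → JSet S A)
    (C : ℕ → Set S) (hC : ∀ n, C n ∈ r)
    (k : ℕ) (y : ℕ → ℕ → S) :
    ∃ (α : ℕ → S) (H : ℕ → Finset ℕ),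
      (∀ n, (H n).Nonempty) ∧
      (∀ n, ∀ a ∈ H n, ∀ b ∈ H (n + 1), a < b) ∧
      (∀ F : Finset ℕ, ∀ hF : F.Nonempty, ∀ l ∈ Finset.Icc 1 k,
        (∑ n ∈ F, ((α n : WithZero S) + ∑ t ∈ H n, (y l t : WithZero S)))
          ∈ (fun x : S => (x : WithZero S)) '' C (F.min' hF)) := by
  classical
  have hSne : Nonempty S := Filter.nonempty_of_neBot (r : Filter S)
  obtain ⟨s0⟩ := hSne
  set X := (ℕ → S) × (ℕ → Finset ℕ) with hX
  set R : ℕ → X → X → Prop := fun n c c' =>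
    CSTGood r C k y n c.1 c.2 →
      (CSTGood r C k y (n + 1) c'.1 c'.2 ∧ ∀ i, i ≠ n → c'.1 i = c.1 i ∧ c'.2 i = c.2 i)
    with hR
  have hstep : ∀ n x, ∃ y', R n x y' := by
    intro n x
    by_cases hg : CSTGood r C k y n x.1 x.2
    · obtain ⟨a, K, hgood⟩ := CSTstep r C k y hridem hrJ hC n x.1 x.2 hg
      refine ⟨(Function.update x.1 n a, Function.update x.2 n K), fun _ => ⟨hgood, ?_⟩⟩
      intro i hi
      exact ⟨Function.update_of_ne hi _ _, Function.update_of_ne hi _ _⟩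
    · exact ⟨x, fun hg' => absurd hg' hg⟩
  obtain ⟨c, hc0, hcR⟩ := CSTdc R ((fun _ => s0, fun _ => ∅) : X) hstep
  have hgood : ∀ n, CSTGood r C k y n (c n).1 (c n).2 := by
    intro n
    induction n with
    | zero => rw [hc0]; exact CSTGood_zero r C k y _ _
    | succ n ih => exact ((hcR n) ih).1
  have hagree : ∀ n, ∀ i, i ≠ n → (c (n+1)).1 i = (c n).1 i ∧ (c (n+1)).2 i = (c n).2 i :=
    fun n i hi => ((hcR n) (hgood n)).2 i hi
  set α : ℕ → S := fun i => (c (i + 1)).1 i with hα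
  set H : ℕ → Finset ℕ := fun i => (c (i + 1)).2 i with hH
  have hstable : ∀ i n, i < n → (c n).1 i = α i ∧ (c n).2 i = H i := by
    intro i n hin
    induction n with
    | zero => omega
    | succ n ih =>
      rcases Nat.lt_succ_iff_lt_or_eq.mp hin with h' | rfl
      · have hne : i ≠ n := by omega
        obtain ⟨h1, h2⟩ := hagree n i hne
        obtain ⟨h3, h4⟩ := ih h'
        exact ⟨h1.trans h3, h2.trans h4⟩
      · exact ⟨rfl, rfl⟩
  refine ⟨α, H, ?_, ?_, ?_⟩
  · intro n
    have := (hgood (n + 1)).1 n (Nat.lt_succ_self n)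
    rwa [(hstable n (n+1) (Nat.lt_succ_self n)).2] at this
  · intro n a ha b hb
    have hg := (hgood (n + 2)).2.1 n (by omega)
    have e1 := (hstable n (n+2) (by omega)).2
    have e2 := (hstable (n+1) (n+2) (by omega)).2
    rw [e1] at hg
    rw [e2] at hg
    exact hg a ha b hb
  · intro F hF l hl
    set N : ℕ := F.max' hF + 1 with hN
    have hFlt : ∀ i ∈ F, i < N := fun i hi => by
      have := F.le_max' i hi; omega
    have hg := (hgood N).2.2 F hF hFlt l hl
    have heq : (∑ m ∈ F, (((c N).1 m : WithZero S) + ∑ t ∈ (c N).2 m, (y l t : WithZero S)))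
        = ∑ m ∈ F, ((α m : WithZero S) + ∑ t ∈ H m, (y l t : WithZero S)) := by
      refine Finset.sum_congr rfl fun m hm => ?_
      obtain ⟨h1, h2⟩ := hstable m N (hFlt m hm)
      rw [h1, h2]
    rw [heq] at hg
    exact Set.image_mono (CSTstar_subset r _) hg
end

section
/- Let (S,+) be a commutative semigroup and let A be a u×v matrix with entries from ω satisfying the first entries condition, such that for each first entry c of A the set cS = {cs : s ∈ S} is a central* set. Let p be an idempotent (p = p+p) in K(βS) and let (C_n)_{n∈ℕ} be a sequence of subsets of S with C_n ∈ p for every n. Then for i = 1,…,v there exist sequences ⟨x_{i,n}⟩_{n=1}^∞ in S such that for every F ∈ 𝒫_f(ℕ), writing m = min F and x⃗_F = (Σ_{n∈F} x_{1,n}, …, Σ_{n∈F} x_{v,n})ᵀ, one has A x⃗_F ∈ (C_m)^u. -/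
/- The addition on `Ultrafilter S` (Stone–Čech extension of `+`):
`A ∈ p + q ↔ {x | {y | x + y ∈ A} ∈ q} ∈ p`. -/
attribute [local instance] Ultrafilter.add Ultrafilter.addSemigroup

/- Sums of elements of `S` (and `ℕ`-fold repeated additions, i.e. the action of `ω`)
are computed in `WithZero S`, the monoid obtained by adjoining an additive identity to `S`;
membership in `(↑) '' C` expresses that the value is the image of an element of `C ⊆ S`. -/

/-- Membership in the smallest two-sided ideal `K(βS)`:
`p ∈ K(βS)` iff for every `q` there is `r` with `r + q + p = p`. -/
def memKbeta {S : Type*} [AddSemigroup S] (p : Ultrafilter S) : Prop :=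
  ∀ q : Ultrafilter S, ∃ r : Ultrafilter S, r + q + p = p

/-- `cS = {cs : s ∈ S}` as a subset of `S` (with `c` acting by repeated addition). -/
def cMulSet (S : Type*) [AddCommSemigroup S] (c : ℕ) : Set S :=
  {x : S | ∃ t : S, (x : WithZero S) = c • (t : WithZero S)}

open Filter



section
variable {S : Type*} [AddCommSemigroup S]

noncomputable def wsum (w : ℕ → S) (H : Finset ℕ) : WithZero S := ∑ t ∈ H, (w t : WithZero S)

section Crux
variable {ι : Type} [Finite ι]

/-- witness property -/
def Wit (w : ι → ℕ → S) (k : ℕ) (A : Set S) (B : ι → Set S) : Prop :=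
  ∃ (s : S) (H : Finset ℕ), H.Nonempty ∧ (∀ t ∈ H, k ≤ t) ∧ s ∈ A ∧
    ∀ i, ((s : WithZero S) + wsum (w i) H) ∈ (fun a : S => (a : WithZero S)) '' B i

def Estr (w : ι → ℕ → S) (k : ℕ) (q : Ultrafilter S × (ι → Ultrafilter S)) : Prop :=
  ∀ (A : Set S) (B : ι → Set S), A ∈ q.1 → (∀ i, B i ∈ q.2 i) → Wit w k A B

lemma Estr_add {w : ι → ℕ → S} {q q' : Ultrafilter S × (ι → Ultrafilter S)}
    (hq : ∀ k, Estr w k q) (hq' : ∀ k, Estr w k q') (k : ℕ) : Estr w k (q + q') := by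
  intro A B hA hB
  have hA1 : {x : S | {y : S | x + y ∈ A} ∈ q'.1} ∈ q.1 := hA
  have hB1 : ∀ i, {x : S | {y : S | x + y ∈ B i} ∈ q'.2 i} ∈ q.2 i := fun i => hB i
  obtain ⟨s, H, hHne, hHk, hsA, hsB⟩ := hq k _ _ hA1 hB1
  choose b hbB hbeq using fun i => hsB i
  obtain ⟨t, G, hGne, hGk, htA, htB⟩ :=
    hq' (H.max' hHne + 1) {y | s + y ∈ A} (fun i => {y | b i + y ∈ B i}) hsA (fun i => hbB i)
  choose d hdB hdeq using fun i => htB i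
  have hdisj : Disjoint H G := by
    rw [Finset.disjoint_left]
    intro x hxH hxG
    have h1 := hGk x hxG
    have h2 := Finset.le_max' H x hxH
    omega
  refine ⟨s + t, H ∪ G, hHne.mono Finset.subset_union_left, ?_, htA, ?_⟩
  · intro x hx
    rcases Finset.mem_union.1 hx with h | h
    · exact hHk x h
    · have h1 := hGk x h
      have h2 := Finset.le_max' H _ ((H.max'_mem hHne))
      have := hHk _ (H.max'_mem hHne)
      omega
  · intro i
    refine ⟨b i + d i, hdB i, ?_⟩
    have : wsum (w i) (H ∪ G) = wsum (w i) H + wsum (w i) G := Finset.sum_union hdisj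
    simp only [this]
    push_cast
    rw [show ((b i : WithZero S)) = (s : WithZero S) + wsum (w i) H from hbeq i,
        show ((d i : WithZero S)) = (t : WithZero S) + wsum (w i) G from hdeq i]
    abel

lemma Estr_const_add {w : ι → ℕ → S} {q : Ultrafilter S × (ι → Ultrafilter S)}
    (r : Ultrafilter S) (hq : ∀ k, Estr w k q) (k : ℕ) : Estr w k ((r, fun _ => r) + q) := by
  intro A B hA hB
  have hA1 : {x : S | {y : S | x + y ∈ A} ∈ q.1} ∈ r := hA
  have hB1 : ∀ i, {x : S | {y : S | x + y ∈ B i} ∈ q.2 i} ∈ r := fun i => hB i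
  have hint : ({x : S | {y : S | x + y ∈ A} ∈ q.1} ∩ ⋂ i, {x : S | {y : S | x + y ∈ B i} ∈ q.2 i}) ∈ r :=
    Filter.inter_mem hA1 ((Filter.iInter_mem).2 hB1)
  obtain ⟨x, hxA, hxB⟩ := Ultrafilter.nonempty_of_mem hint
  simp only [Set.mem_iInter] at hxB
  obtain ⟨s, H, hHne, hHk, hsA, hsB⟩ := hq k {y | x + y ∈ A} (fun i => {y | x + y ∈ B i}) hxA hxB
  refine ⟨x + s, H, hHne, hHk, hsA, ?_⟩
  intro i
  obtain ⟨bi, hbi, hbieq⟩ := hsB i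
  refine ⟨x + bi, hbi, ?_⟩
  push_cast
  rw [show ((bi : WithZero S)) = (s : WithZero S) + wsum (w i) H from hbieq]
  abel

lemma Estr_add_const {w : ι → ℕ → S} {q : Ultrafilter S × (ι → Ultrafilter S)}
    (r : Ultrafilter S) (hq : ∀ k, Estr w k q) (k : ℕ) : Estr w k (q + (r, fun _ => r)) := by
  intro A B hA hB
  have hA1 : {x : S | {y : S | x + y ∈ A} ∈ r} ∈ q.1 := hA
  have hB1 : ∀ i, {x : S | {y : S | x + y ∈ B i} ∈ r} ∈ q.2 i := fun i => hB i
  obtain ⟨s, H, hHne, hHk, hsA, hsB⟩ := hq k _ _ hA1 hB1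
  choose b hbB hbeq using fun i => hsB i
  have hint : ({y : S | s + y ∈ A} ∩ ⋂ i, {y : S | b i + y ∈ B i}) ∈ r :=
    Filter.inter_mem hsA ((Filter.iInter_mem).2 fun i => hbB i)
  obtain ⟨t, htA, htB⟩ := Ultrafilter.nonempty_of_mem hint
  simp only [Set.mem_iInter] at htB
  refine ⟨s + t, H, hHne, hHk, htA, ?_⟩
  intro i
  refine ⟨b i + t, htB i, ?_⟩
  push_cast
  rw [show ((b i : WithZero S)) = (s : WithZero S) + wsum (w i) H from hbeq i]
  abel


set_option linter.unusedSectionVars false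

lemma Estr_nonempty (w : ι → ℕ → S) (s0 : S) :
    ∃ q : Ultrafilter S × (ι → Ultrafilter S), ∀ k, Estr w k q := by
  classical
  have : (Filter.atTop : Filter ℕ).NeBot := Filter.atTop_neBot
  set r0 : Ultrafilter ℕ := Ultrafilter.of Filter.atTop with hr0
  refine ⟨(pure s0, fun i => r0.map (fun n => s0 + w i n)), ?_⟩
  intro k A B hA hB
  have htail : {n : ℕ | k ≤ n} ∈ r0 := (Ultrafilter.of_le Filter.atTop) (Filter.mem_atTop k)
  have hBi : ∀ i, {n : ℕ | s0 + w i n ∈ B i} ∈ r0 := fun i => hB i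
  have hint : ({n : ℕ | k ≤ n} ∩ ⋂ i, {n : ℕ | s0 + w i n ∈ B i}) ∈ r0 :=
    Filter.inter_mem htail ((Filter.iInter_mem).2 hBi)
  obtain ⟨n, hn1, hn2⟩ := Ultrafilter.nonempty_of_mem hint
  simp only [Set.mem_iInter] at hn2
  refine ⟨s0, {n}, Finset.singleton_nonempty n, by simpa using hn1, hA, ?_⟩
  intro i
  refine ⟨s0 + w i n, hn2 i, ?_⟩
  simp [wsum]

lemma Estr_closed (w : ι → ℕ → S) :
    IsClosed {q : Ultrafilter S × (ι → Ultrafilter S) | ∀ k, Estr w k q} := by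
  rw [← isOpen_compl_iff, isOpen_iff_forall_mem_open]
  intro q hq
  simp only [Set.mem_compl_iff, Set.mem_setOf_eq, not_forall] at hq
  obtain ⟨k, hk⟩ := hq
  rw [Estr] at hk; push_neg at hk
  obtain ⟨A, B, hA, hB, hwit⟩ := hk
  refine ⟨(Prod.fst ⁻¹' {u : Ultrafilter S | A ∈ u}) ∩
      ⋂ i, (fun q : Ultrafilter S × (ι → Ultrafilter S) => q.2 i) ⁻¹' {u : Ultrafilter S | B i ∈ u},
      ?_, ?_, ?_⟩
  · rintro r ⟨hrA, hrB⟩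
    simp only [Set.mem_iInter, Set.mem_preimage, Set.mem_setOf_eq] at hrA hrB
    simp only [Set.mem_compl_iff, Set.mem_setOf_eq, not_forall]
    exact ⟨k, fun hcon => hwit (hcon A B hrA hrB)⟩
  · exact ((ultrafilter_isOpen_basic A).preimage continuous_fst).inter
      (isOpen_iInter_of_finite fun i => (ultrafilter_isOpen_basic (B i)).preimage
        ((continuous_apply i).comp continuous_snd))
  · exact ⟨hA, Set.mem_iInter.2 hB⟩

lemma crux (p : Ultrafilter S) (hpK : memKbeta p) (hpidem : p = p + p)
    (w : ι → ℕ → S) (k : ℕ) (A : Set S) (B : ι → Set S) (hA : A ∈ p) (hB : ∀ i, B i ∈ p) :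
    Wit w k A B := by
  classical
  obtain ⟨s0⟩ : Nonempty S := Filter.nonempty_of_neBot (p : Filter S)
  set E : Set (Ultrafilter S × (ι → Ultrafilter S)) := {q | ∀ k, Estr w k q} with hE
  set pbar : Ultrafilter S × (ι → Ultrafilter S) := (p, fun _ => p) with hpbar
  obtain ⟨q0, hq0⟩ := Estr_nonempty w s0
  have contadd : ∀ r : Ultrafilter S × (ι → Ultrafilter S), Continuous (· + r) := by
    intro r
    have : (· + r) = fun x : Ultrafilter S × (ι → Ultrafilter S) =>
        ((x.1 + r.1, fun i => x.2 i + r.2 i) : Ultrafilter S × (ι → Ultrafilter S)) := by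
      funext x
      refine Prod.ext rfl ?_
      funext i
      rfl
    rw [this]
    exact ((Ultrafilter.continuous_add_left r.1).comp continuous_fst).prodMk
      (continuous_pi fun i => (Ultrafilter.continuous_add_left (r.2 i)).comp
        ((continuous_apply i).comp continuous_snd))
  set F : Set (Ultrafilter S × (ι → Ultrafilter S)) := (· + pbar) '' E with hF
  have hFcomp : IsCompact F := ((Estr_closed w).isCompact).image (contadd pbar)
  have hFne : F.Nonempty := ⟨q0 + pbar, ⟨q0, hq0, rfl⟩⟩
  have hpp : pbar + pbar = pbar := by
    refine Prod.ext ?_ ?_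
    · show p + p = p
      exact hpidem.symm
    · funext i
      show p + p = p
      exact hpidem.symm
  have hFadd : ∀ x ∈ F, ∀ y ∈ F, x + y ∈ F := by
    rintro _ ⟨e1, he1, rfl⟩ _ ⟨e2, he2, rfl⟩
    refine ⟨e1 + (pbar + e2), ?_, ?_⟩
    · exact fun k => Estr_add he1 (fun k => Estr_const_add p he2 k) k
    · show e1 + (pbar + e2) + pbar = e1 + pbar + (e2 + pbar)
      rw [add_assoc, add_assoc, add_assoc]
  obtain ⟨e, heF, heidem⟩ := exists_idempotent_in_compact_add_subsemigroup contadd F hFne hFcomp hFadd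
  obtain ⟨f, hfE, hfe⟩ := heF
  have heE : e ∈ E := by
    rw [← hfe]
    exact fun k => Estr_add_const p hfE k
  have hepbar : e + pbar = e := by rw [← hfe, add_assoc, hpp]
  obtain ⟨rA, hrA⟩ := hpK e.1
  choose rB hrB using fun i => hpK (e.2 i)
  set rbar : Ultrafilter S × (ι → Ultrafilter S) := (rA, rB) with hrbar
  have h1 : rbar + e + pbar = pbar := by
    refine Prod.ext ?_ ?_
    · exact hrA
    · funext i
      exact hrB i
  have h2 : pbar = rbar + e := by rw [← h1, add_assoc, hepbar]
  have h3 : pbar + e = pbar := by rw [h2, add_assoc, heidem]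
  have hpbarE : pbar ∈ E := by
    rw [← h3]
    exact fun k => Estr_const_add p heE k
  exact hpbarE k A B hA hB

end Crux


lemma wz_add_ne_zero {a b : WithZero S} (ha : a ≠ 0) : a + b ≠ 0 := by
  induction a with
  | zero => exact absurd rfl ha
  | coe a => induction b with
    | zero => simp only [add_zero]; exact ha
    | coe b => rw [← WithZero.coe_add]; exact WithZero.coe_ne_zero

lemma wz_add_ne_zero' {a b : WithZero S} (hb : b ≠ 0) : a + b ≠ 0 := by
  rw [add_comm]; exact wz_add_ne_zero hb

lemma wsum_ne_zero {w : ℕ → S} {H : Finset ℕ} (h : H.Nonempty) : wsum w H ≠ 0 := by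
  obtain ⟨t, ht⟩ := h
  rw [wsum, ← Finset.sum_erase_add _ _ ht]
  exact wz_add_ne_zero' WithZero.coe_ne_zero

lemma wz_smul_coe_ne_zero {n : ℕ} (hn : n ≠ 0) (a : S) : (n • (a : WithZero S)) ≠ 0 := by
  cases n with
  | zero => exact absurd rfl hn
  | succ k =>
    rw [succ_nsmul]
    exact wz_add_ne_zero' WithZero.coe_ne_zero

lemma wz_sum_ne_zero {α : Type*} {f : α → WithZero S} {T : Finset α} {j : α}
    (hj : j ∈ T) (h : f j ≠ 0) : ∑ t ∈ T, f t ≠ 0 := by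
  classical
  rw [← Finset.sum_erase_add _ _ hj]
  exact wz_add_ne_zero' h

lemma sum_smul_wsum {v : ℕ} (co : Fin v → ℕ) (y : Fin v → ℕ → S) (T : Finset ℕ) :
    ∑ j : Fin v, (co j) • wsum (y j) T = ∑ t ∈ T, ∑ j : Fin v, (co j) • ((y j t : WithZero S)) := by
  simp_rw [wsum, Finset.smul_sum]
  exact Finset.sum_comm

/-- the `⋆` operation -/
def star (p : Ultrafilter S) (B : Set S) : Set S := {x ∈ B | {y | x + y ∈ B} ∈ p}

variable {p : Ultrafilter S}

lemma star_subset {B : Set S} : star p B ⊆ B := fun _ h => h.1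

lemma star_mem (hpidem : p = p + p) {B : Set S} (hB : B ∈ p) : star p B ∈ p := by
  have h2 : {x : S | {y : S | x + y ∈ B} ∈ p} ∈ p := by rw [hpidem] at hB; exact hB
  exact Filter.inter_mem hB h2

lemma star_step (hpidem : p = p + p) {B : Set S} {x : S} (hx : x ∈ star p B) :
    {y : S | x + y ∈ star p B} ∈ p := by
  have h1 : {y : S | x + y ∈ B} ∈ p := hx.2
  have h2 : {y : S | {z : S | (x + y) + z ∈ B} ∈ p} ∈ p := by
    have hC : {w : S | x + w ∈ B} ∈ p := hx.2
    have h3 : {y : S | {z : S | y + z ∈ {w : S | x + w ∈ B}} ∈ p} ∈ p := by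
      rw [hpidem] at hC; exact hC
    apply Filter.mem_of_superset h3
    intro y hy
    simp only [Set.mem_setOf_eq] at *
    convert hy using 2
    ext z
    simp [Set.mem_setOf_eq, add_assoc]
  exact Filter.mem_of_superset (Filter.inter_mem h1 h2) (fun y hy => ⟨hy.1, hy.2⟩)

/-- per-stage value for a row with coefficients `co` (the part after column 0). -/
noncomputable def uWgen {v : ℕ} (c : ℕ) (co : Fin v → ℕ) (y : Fin v → ℕ → S)
    (f : ℕ → S × Finset ℕ) (t : ℕ) : WithZero S :=
  (c • (((f t).1 : S) : WithZero S)) + ∑ j : Fin v, (co j) • wsum (y j) ((f t).2)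

def GoodGen (p : Ultrafilter S) (E : ℕ → Set S) {v : ℕ} {κ : Type} (co : κ → Fin v → ℕ)
    (c : ℕ) (y : Fin v → ℕ → S) (f : ℕ → S × Finset ℕ) (n : ℕ) : Prop :=
  (∀ m, m < n → ((f m).2).Nonempty) ∧
  (∀ m, m < n → ∀ t ∈ (f m).2, m ≤ t) ∧
  (∀ m m', m < m' → m' < n → ∀ a ∈ (f m).2, ∀ b ∈ (f m').2, a < b) ∧
  (∀ F : Finset ℕ, ∀ hF : F.Nonempty, (∀ t ∈ F, t < n) → ∀ i : κ,
    (∑ t ∈ F, uWgen c (co i) y f t)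
      ∈ (fun s : S => (s : WithZero S)) '' star p (E (F.min' hF)))

lemma GoodGen_ext {E : ℕ → Set S} {v : ℕ} {κ : Type} {co : κ → Fin v → ℕ} {c : ℕ}
    {y : Fin v → ℕ → S} {f f' : ℕ → S × Finset ℕ} {n : ℕ}
    (hagree : ∀ m, m < n → f m = f' m) (h : GoodGen p E co c y f n) :
    GoodGen p E co c y f' n := by
  obtain ⟨h1, h2, h3, h4⟩ := h
  refine ⟨fun m hm => (hagree m hm) ▸ h1 m hm, fun m hm => (hagree m hm) ▸ h2 m hm,
    fun m m' hmm hm => (hagree m (hmm.trans hm)) ▸ (hagree m' hm) ▸ h3 m m' hmm hm,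
    fun F hF hFn i => ?_⟩
  have : ∑ t ∈ F, uWgen c (co i) y f' t = ∑ t ∈ F, uWgen c (co i) y f t :=
    Finset.sum_congr rfl fun t ht => by rw [uWgen, uWgen, hagree t (hFn t ht)]
  rw [this]
  exact h4 F hF hFn i

lemma GoodGen_zero {E : ℕ → Set S} {v : ℕ} {κ : Type} {co : κ → Fin v → ℕ} {c : ℕ}
    {y : Fin v → ℕ → S} {f : ℕ → S × Finset ℕ} : GoodGen p E co c y f 0 := by
  refine ⟨fun m hm => absurd hm (Nat.not_lt_zero m), fun m hm => absurd hm (Nat.not_lt_zero m),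
    fun m m' _ hm => absurd hm (Nat.not_lt_zero m'), fun F hF hFn i => ?_⟩
  obtain ⟨t, ht⟩ := hF
  exact absurd (hFn t ht) (Nat.not_lt_zero t)

lemma keyExt {κ : Type} [Finite κ] (p : Ultrafilter S) (hpK : memKbeta p) (hpidem : p = p + p)
    (E : ℕ → Set S) (hE : ∀ n, E n ∈ p) (c : ℕ) (hcS : cMulSet S c ∈ p)
    {v : ℕ} (co : κ → Fin v → ℕ) (y : Fin v → ℕ → S) (f : ℕ → S × Finset ℕ) (n : ℕ)
    (hG : GoodGen p E co c y f n) :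
    ∃ d : S × Finset ℕ, GoodGen p E co c y (Function.update f n d) (n + 1) := by
  classical
  obtain ⟨s0⟩ : Nonempty S := Filter.nonempty_of_neBot (p : Filter S)
  set w' : κ → ℕ → S := fun i t =>
    if h : (∑ j : Fin v, (co i j) • ((y j t : WithZero S))) = 0 then s0
    else WithZero.unzero h with hw
  set TT : κ → Finset ℕ → Set S := fun i F =>
    {a : S | ∀ hF : F.Nonempty, (∑ t ∈ F, uWgen c (co i) y f t) + (a : WithZero S)
      ∈ (fun s : S => (s : WithZero S)) '' star p (E (F.min' hF))} with hTTdef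
  have hTT : ∀ (i : κ), ∀ F ∈ (Finset.range n).powerset, TT i F ∈ p := by
    intro i F hFp
    rcases F.eq_empty_or_nonempty with rfl | hFne
    · exact Filter.mem_of_superset Filter.univ_mem
        (fun a _ hne => absurd hne (by simp))
    · have hFn : ∀ t ∈ F, t < n := fun t ht =>
        Finset.mem_range.1 ((Finset.mem_powerset.1 hFp) ht)
      obtain ⟨b, hb, hbeq⟩ := hG.2.2.2 F hFne hFn i
      apply Filter.mem_of_superset (star_step hpidem hb)
      intro a ha _
      refine ⟨b + a, ha, ?_⟩
      push_cast
      rw [show ((b : WithZero S)) = ∑ t ∈ F, uWgen c (co i) y f t from hbeq]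
  set Y : κ → Set S := fun i => star p (E n) ∩ ⋂ F ∈ (Finset.range n).powerset, TT i F with hYdef
  have hY : ∀ i, Y i ∈ p := fun i =>
    Filter.inter_mem (star_mem hpidem (hE n)) ((Filter.biInter_finset_mem _).2 (hTT i))
  set ZR : κ → Prop := fun i => ∀ j, co i j = 0 with hZR
  have hXmem : (cMulSet S c ∩ ⋂ i : κ, (if ZR i then Y i else Set.univ)) ∈ p :=
    Filter.inter_mem hcS ((Filter.iInter_mem).2 fun i => by
      by_cases h : ZR i
      · rw [if_pos h]; exact hY i
      · rw [if_neg h]; exact Filter.univ_mem)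
  have hBmem : ∀ i, (if ZR i then Set.univ else Y i) ∈ p := fun i => by
    by_cases h : ZR i
    · rw [if_pos h]; exact Filter.univ_mem
    · rw [if_neg h]; exact hY i
  set kb : ℕ := max n ((Finset.range n).sup fun m => ((f m).2).sup id + 1) with hkb
  obtain ⟨s, H, hHne, hHk, hsX, hsB⟩ := crux p hpK hpidem w' kb _ _ hXmem hBmem
  obtain ⟨z, hz⟩ := hsX.1
  refine ⟨(z, H), ?_⟩
  set f' := Function.update f n (z, H) with hf'
  have hf'n : f' n = (z, H) := Function.update_self _ _ _
  have hf'm : ∀ m, m ≠ n → f' m = f m := fun m hm => Function.update_of_ne hm _ _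
  have hterm : ∀ i : κ, (∑ j : Fin v, (co i j) • wsum (y j) H)
      = if ZR i then 0 else wsum (w' i) H := by
    intro i
    by_cases h : ZR i
    · rw [if_pos h]
      apply Finset.sum_eq_zero
      intro j _
      rw [h j, zero_smul]
    · rw [if_neg h]
      obtain ⟨j0, hj0⟩ := not_forall.1 h
      rw [sum_smul_wsum, wsum]
      apply Finset.sum_congr rfl
      intro t _
      have hne : (∑ j : Fin v, (co i j) • ((y j t : WithZero S))) ≠ 0 :=
        wz_sum_ne_zero (Finset.mem_univ j0) (wz_smul_coe_ne_zero hj0 _)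
      rw [hw]
      simp only [dif_neg hne]
      rw [WithZero.coe_unzero]
  have huWn : ∀ i : κ, uWgen c (co i) y f' n
      = (s : WithZero S) + (if ZR i then 0 else wsum (w' i) H) := by
    intro i
    rw [uWgen, hf'n]
    rw [show ((z, H) : S × Finset ℕ).1 = z from rfl, show ((z, H) : S × Finset ℕ).2 = H from rfl]
    rw [← hz, hterm i]
  have huWY : ∀ i : κ, ∃ b ∈ Y i, uWgen c (co i) y f' n = (b : WithZero S) := by
    intro i
    by_cases h : ZR i
    · refine ⟨s, ?_, ?_⟩
      · have h2 := Set.mem_iInter.1 hsX.2 i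
        rwa [if_pos h] at h2
      · rw [huWn i, if_pos h, add_zero]
    · have hmem := hsB i
      simp only [if_neg h] at hmem
      obtain ⟨b, hb, hbeq⟩ := hmem
      exact ⟨b, hb, by rw [huWn i, if_neg h, ← hbeq]⟩
  have hub : ∀ m, m < n → ∀ a ∈ (f m).2, a < kb := by
    intro m hm a ha
    have h1 : a ≤ ((f m).2).sup id := Finset.le_sup (f := id) ha
    have h2 : ((f m).2).sup id + 1 ≤ (Finset.range n).sup (fun m => ((f m).2).sup id + 1) :=
      Finset.le_sup (f := fun m => ((f m).2).sup id + 1) (Finset.mem_range.2 hm)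
    have h3 := le_max_right n ((Finset.range n).sup fun m => ((f m).2).sup id + 1)
    omega
  refine ⟨?_, ?_, ?_, ?_⟩
  · intro m hm
    rcases eq_or_ne m n with rfl | hmn
    · rw [hf'n]; exact hHne
    · rw [hf'm m hmn]; exact hG.1 m (by omega)
  · intro m hm t ht
    rcases eq_or_ne m n with rfl | hmn
    · rw [hf'n] at ht
      have h1 := hHk t ht
      have h2 := le_max_left m ((Finset.range m).sup fun m' => ((f m').2).sup id + 1)
      omega
    · rw [hf'm m hmn] at ht
      exact hG.2.1 m (by omega) t ht
  · intro m m' hmm' hm' a ha b hb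
    rcases eq_or_ne m' n with rfl | hm'n
    · rw [hf'n] at hb
      rw [hf'm m (by omega)] at ha
      have h1 := hub m hmm' a ha
      have h2 := hHk b hb
      omega
    · have hm'lt : m' < n := by omega
      rw [hf'm m' hm'n] at hb
      rw [hf'm m (by omega)] at ha
      exact hG.2.2.1 m m' hmm' hm'lt a ha b hb
  · intro F hF hFn i
    by_cases hnF : n ∈ F
    · have hF0sub : F.erase n ∈ (Finset.range n).powerset := by
        rw [Finset.mem_powerset]
        intro t ht
        rw [Finset.mem_range]
        have h1 := Finset.mem_of_mem_erase ht
        have h2 := Finset.ne_of_mem_erase ht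
        have h3 := hFn t h1
        omega
      have hsum_split : ∑ t ∈ F, uWgen c (co i) y f' t
          = (∑ t ∈ F.erase n, uWgen c (co i) y f' t) + uWgen c (co i) y f' n := by
        rw [Finset.sum_erase_add _ _ hnF]
      have hF0f : ∑ t ∈ F.erase n, uWgen c (co i) y f' t
          = ∑ t ∈ F.erase n, uWgen c (co i) y f t := by
        apply Finset.sum_congr rfl
        intro t ht
        rw [uWgen, uWgen, hf'm t (Finset.ne_of_mem_erase ht)]
      obtain ⟨b, hbY, hbeq⟩ := huWY i
      rcases (F.erase n).eq_empty_or_nonempty with hF0e | hF0ne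
      · have hFsing : F = {n} := by
          have := Finset.insert_erase hnF
          rw [hF0e] at this
          simpa using this.symm
        have hmin : F.min' hF = n := by
          simp only [hFsing]
          exact Finset.min'_singleton n
        have hsum1 : ∑ t ∈ F, uWgen c (co i) y f' t = uWgen c (co i) y f' n := by
          rw [hsum_split, hF0f, hF0e, Finset.sum_empty, zero_add]
        rw [hsum1, hmin, hbeq]
        exact ⟨b, hbY.1, rfl⟩
      · have hminF : F.min' hF = (F.erase n).min' hF0ne := by
          have hle : F.min' hF ≤ (F.erase n).min' hF0ne :=
            Finset.min'_le _ _ (Finset.mem_of_mem_erase ((F.erase n).min'_mem hF0ne))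
          have hmm := F.min'_mem hF
          rcases eq_or_ne (F.min' hF) n with heq | hne
          · exfalso
            have h1 : (F.erase n).min' hF0ne ∈ F.erase n := (F.erase n).min'_mem hF0ne
            have h2 : (F.erase n).min' hF0ne < n := by
              have := Finset.mem_range.1 ((Finset.mem_powerset.1 hF0sub) h1)
              omega
            omega
          · have h1 : F.min' hF ∈ F.erase n := Finset.mem_erase.2 ⟨hne, hmm⟩
            exact le_antisymm hle (Finset.min'_le _ _ h1)
        have hbTT : b ∈ TT i (F.erase n) := Set.mem_iInter₂.1 hbY.2 (F.erase n) hF0sub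
        have hfin := hbTT hF0ne
        rw [hsum_split, hF0f, hbeq, hminF]
        exact hfin
    · have hFn' : ∀ t ∈ F, t < n := by
        intro t ht
        have h1 := hFn t ht
        rcases eq_or_ne t n with rfl | htn
        · exact absurd ht hnF
        · omega
      have hsame : ∑ t ∈ F, uWgen c (co i) y f' t = ∑ t ∈ F, uWgen c (co i) y f t := by
        apply Finset.sum_congr rfl
        intro t ht
        rw [uWgen, uWgen, hf'm t (fun hc => hnF (hc ▸ ht))]
      rw [hsame]
      exact hG.2.2.2 F hF hFn' i

lemma exists_good_seq {κ : Type} [Finite κ] (p : Ultrafilter S) (hpK : memKbeta p)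
    (hpidem : p = p + p) (E : ℕ → Set S) (hE : ∀ n, E n ∈ p) (c : ℕ) (hcS : cMulSet S c ∈ p)
    {v : ℕ} (co : κ → Fin v → ℕ) (y : Fin v → ℕ → S) :
    ∃ g : ℕ → S × Finset ℕ, ∀ n, GoodGen p E co c y g n := by
  classical
  obtain ⟨s0⟩ : Nonempty S := Filter.nonempty_of_neBot (p : Filter S)
  let step : ∀ n : ℕ, {f : ℕ → S × Finset ℕ // GoodGen p E co c y f n} →
      {f : ℕ → S × Finset ℕ // GoodGen p E co c y f (n + 1)} := fun n fn =>
    ⟨Function.update fn.1 n (Classical.choose (keyExt p hpK hpidem E hE c hcS co y fn.1 n fn.2)),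
      Classical.choose_spec (keyExt p hpK hpidem E hE c hcS co y fn.1 n fn.2)⟩
  let Seq : ∀ n : ℕ, {f : ℕ → S × Finset ℕ // GoodGen p E co c y f n} := fun n =>
    Nat.rec ⟨fun _ => (s0, ∅), GoodGen_zero⟩ (fun n fn => step n fn) n
  have hSeqsucc : ∀ n m, m ≠ n → (Seq (n + 1)).1 m = (Seq n).1 m := by
    intro n m hm
    exact Function.update_of_ne hm _ _
  set g : ℕ → S × Finset ℕ := fun m => (Seq (m + 1)).1 m with hg
  have agree : ∀ k m, m < k → (Seq k).1 m = g m := by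
    intro k
    induction k with
    | zero => intro m hm; omega
    | succ k ih =>
      intro m hm
      rcases eq_or_ne m k with rfl | hmk
      · rfl
      · rw [hSeqsucc k m hmk, ih m (by omega)]
  exact ⟨g, fun n => GoodGen_ext (agree n) (Seq n).2⟩

def FEC' (v : ℕ) {ι : Type} (A : ι → Fin v → ℕ) : Prop :=
  (∀ i, ∃ j, A i j ≠ 0) ∧
  (∀ i i' : ι, ∀ j : Fin v,
    (A i j ≠ 0 ∧ ∀ j' < j, A i j' = 0) →
    (A i' j ≠ 0 ∧ ∀ j' < j, A i' j' = 0) → A i j = A i' j)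

def IsFE' (v : ℕ) {ι : Type} (A : ι → Fin v → ℕ) (c : ℕ) : Prop :=
  ∃ i j, A i j = c ∧ A i j ≠ 0 ∧ ∀ j' < j, A i j' = 0

/-- transfer of the first-entry structure to the matrix of columns `1..v` for rows whose
column 0 vanishes -/
lemma restrict_first_entries {v : ℕ} {ι : Type} (A : ι → Fin (v + 1) → ℕ)
    (h0 : ∀ i, A i 0 = 0) :
    ∀ (i : ι) (j : Fin v), ((A i j.succ ≠ 0 ∧ ∀ j' < j, A i j'.succ = 0) ↔
      (A i j.succ ≠ 0 ∧ ∀ k < j.succ, A i k = 0)) := by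
  intro i j
  constructor
  · rintro ⟨h1, h2⟩
    refine ⟨h1, fun k hk => ?_⟩
    rcases eq_or_ne k 0 with rfl | hkne
    · exact h0 i
    · obtain ⟨k', rfl⟩ := Fin.eq_succ_of_ne_zero hkne
      exact h2 k' (by rwa [← Fin.succ_lt_succ_iff])
  · rintro ⟨h1, h2⟩
    exact ⟨h1, fun j' hj' => h2 j'.succ (Fin.succ_lt_succ_iff.2 hj')⟩

lemma FEC'_restrict {v : ℕ} {ι : Type} (A : ι → Fin (v + 1) → ℕ) (hA : FEC' (v + 1) A)
    (h0 : ∀ i, A i 0 = 0) : FEC' v (fun i (j : Fin v) => A i j.succ) := by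
  constructor
  · intro i
    obtain ⟨j, hj⟩ := hA.1 i
    rcases eq_or_ne j 0 with rfl | hjne
    · exact absurd (h0 i) hj
    · obtain ⟨j', rfl⟩ := Fin.eq_succ_of_ne_zero hjne
      exact ⟨j', hj⟩
  · intro i i' j h1 h2
    exact hA.2 i i' j.succ ((restrict_first_entries A h0 i j).1 h1)
      ((restrict_first_entries A h0 i' j).1 h2)

lemma IsFE'_restrict {v : ℕ} {ι : Type} (A : ι → Fin (v + 1) → ℕ)
    (h0 : ∀ i, A i 0 = 0) {c : ℕ} (hc : IsFE' v (fun i (j : Fin v) => A i j.succ) c) :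
    IsFE' (v + 1) A c := by
  obtain ⟨i, j, hj1, hj2, hj3⟩ := hc
  exact ⟨i, j.succ, hj1, ((restrict_first_entries A h0 i j).1 ⟨hj2, hj3⟩).1,
    ((restrict_first_entries A h0 i j).1 ⟨hj2, hj3⟩).2⟩

theorem internalFE (p : Ultrafilter S) (hpK : memKbeta p) (hpidem : p = p + p) :
    ∀ (v : ℕ) (ι : Type), Finite ι → ∀ (A : ι → Fin v → ℕ), FEC' v A →
    (∀ c, IsFE' v A c → cMulSet S c ∈ p) →
    ∀ (E : ℕ → Set S), (∀ n, E n ∈ p) → (∀ m n, m ≤ n → E n ⊆ E m) →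
    ∃ x : Fin v → ℕ → S, ∀ (F : Finset ℕ) (hF : F.Nonempty) (i : ι),
      (∑ j : Fin v, (A i j) • ∑ n ∈ F, ((x j n : WithZero S)))
        ∈ (fun s : S => (s : WithZero S)) '' E (F.min' hF) := by
  intro v
  induction v with
  | zero =>
    intro ι _ A hA _ E _ _
    refine ⟨fun j => j.elim0, fun F hF i => ?_⟩
    obtain ⟨j, _⟩ := hA.1 i
    exact j.elim0
  | succ v IH =>
    intro ι hfin A hA hfe E hE hEmono
    haveI := hfin
    classical
    obtain ⟨s0⟩ : Nonempty S := Filter.nonempty_of_neBot (p : Filter S)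
    have hvac : ∀ (jj : Fin (v + 1)), ¬ jj < 0 := fun jj => by simp [Fin.lt_def]
    by_cases hzero : ∀ i, A i 0 = 0
    · obtain ⟨y, hy⟩ := IH ι hfin (fun i (j : Fin v) => A i j.succ) (FEC'_restrict A hA hzero)
        (fun c hc => hfe c (IsFE'_restrict A hzero hc)) E hE hEmono
      refine ⟨Fin.cases (fun _ => s0) y, fun F hF i => ?_⟩
      rw [Fin.sum_univ_succ]
      rw [show A i 0 = 0 from hzero i, zero_smul, zero_add]
      simp only [Fin.cases_succ]
      exact hy F hF i
    · push_neg at hzero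
      obtain ⟨i₀, hi₀⟩ := hzero
      set c := A i₀ 0 with hcdef
      have hcc : ∀ i : ι, A i 0 ≠ 0 → A i 0 = c := fun i hi =>
        hA.2 i i₀ 0 ⟨hi, fun j' hj' => absurd hj' (hvac j')⟩
          ⟨hi₀, fun j' hj' => absurd hj' (hvac j')⟩
      have hcS : cMulSet S c ∈ p :=
        hfe c ⟨i₀, 0, rfl, hi₀, fun j' hj' => absurd hj' (hvac j')⟩
      obtain ⟨y, hy⟩ := IH {i : ι // A i 0 = 0} inferInstance
        (fun i (j : Fin v) => A i.1 j.succ)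
        (FEC'_restrict (fun (i : {i : ι // A i 0 = 0}) (j : Fin (v + 1)) => A i.1 j)
          ⟨fun i => hA.1 i.1, fun i i' j h1 h2 => hA.2 i.1 i'.1 j h1 h2⟩ (fun i => i.2))
        (fun c' hc' => by
          obtain ⟨i, j, h1, h2, h3⟩ := IsFE'_restrict
            (fun (i : {i : ι // A i 0 = 0}) (j : Fin (v + 1)) => A i.1 j) (fun i => i.2) hc'
          exact hfe c' ⟨i.1, j, h1, h2, h3⟩)
        E hE hEmono
      set co : {i : ι // A i 0 ≠ 0} → Fin v → ℕ := fun i j => A i.1 j.succ with hco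
      obtain ⟨g, hg⟩ := exists_good_seq p hpK hpidem E hE c hcS co y
      have hgne : ∀ m, ((g m).2).Nonempty := fun m => (hg (m + 1)).1 m (Nat.lt_succ_self m)
      have hgbd : ∀ m, ∀ t ∈ (g m).2, m ≤ t := fun m => (hg (m + 1)).2.1 m (Nat.lt_succ_self m)
      have hgmono : ∀ m m', m < m' → ∀ a ∈ (g m).2, ∀ b ∈ (g m').2, a < b :=
        fun m m' hmm' => (hg (m' + 1)).2.2.1 m m' hmm' (Nat.lt_succ_self m')
      refine ⟨Fin.cases (fun m => (g m).1)
        (fun j m => WithZero.unzero (wsum_ne_zero (w := y j) (hgne m))), fun F hF i => ?_⟩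
      have hxcoe : ∀ (j : Fin v) (m : ℕ),
          (((Fin.cases (fun m => (g m).1)
            (fun j m => WithZero.unzero (wsum_ne_zero (w := y j) (hgne m)))
              : Fin (v+1) → ℕ → S) j.succ m : WithZero S)) = wsum (y j) ((g m).2) := by
        intro j m
        simp only [Fin.cases_succ]
        exact WithZero.coe_unzero _
      rw [Fin.sum_univ_succ]
      have hxsum : ∀ j : Fin v, (∑ n ∈ F, (((Fin.cases (fun m => (g m).1)
            (fun j m => WithZero.unzero (wsum_ne_zero (w := y j) (hgne m)))
              : Fin (v+1) → ℕ → S) j.succ n : WithZero S)))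
          = ∑ n ∈ F, wsum (y j) ((g n).2) :=
        fun j => Finset.sum_congr rfl fun n _ => hxcoe j n
      by_cases hi0 : A i 0 = 0
      · rw [hi0, zero_smul, zero_add]
        set G : Finset ℕ := F.biUnion (fun n => (g n).2) with hGdef
        have hdisjoint : (F : Set ℕ).PairwiseDisjoint (fun n => (g n).2) := by
          intro a _ b _ hab
          rcases lt_or_gt_of_ne hab with h | h
          · exact Finset.disjoint_left.2 fun t hta htb =>
              absurd rfl (ne_of_lt (hgmono a b h t hta t htb))
          · exact Finset.disjoint_left.2 fun t hta htb =>
              absurd rfl (ne_of_lt (hgmono b a h t htb t hta))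
        have hGne : G.Nonempty := by
          obtain ⟨m, hm⟩ := hF
          obtain ⟨t, ht⟩ := hgne m
          exact ⟨t, Finset.mem_biUnion.2 ⟨m, hm, ht⟩⟩
        have heq : ∑ j : Fin v, (A i j.succ) • ∑ n ∈ F, wsum (y j) ((g n).2)
            = ∑ j : Fin v, (A i j.succ) • ∑ t ∈ G, ((y j t : WithZero S)) := by
          apply Finset.sum_congr rfl
          intro j _
          rw [hGdef, Finset.sum_biUnion hdisjoint]
          rfl
        have hminle : F.min' hF ≤ G.min' hGne := by
          obtain ⟨m, hmF, hmg⟩ := Finset.mem_biUnion.1 (G.min'_mem hGne)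
          exact le_trans (F.min'_le m hmF) (hgbd m _ hmg)
        have hymem := hy G hGne ⟨i, hi0⟩
        simp only [hxsum]
        rw [heq]
        exact Set.image_mono (hEmono _ _ hminle) hymem
      · have hic : A i 0 = c := hcc i hi0
        have hstep : (A i 0) • (∑ n ∈ F, (((Fin.cases (fun m => (g m).1)
              (fun j m => WithZero.unzero (wsum_ne_zero (w := y j) (hgne m)))
                : Fin (v+1) → ℕ → S) 0 n : WithZero S)))
              + ∑ j : Fin v, (A i (Fin.succ j)) • (∑ n ∈ F, (((Fin.cases (fun m => (g m).1)
              (fun j m => WithZero.unzero (wsum_ne_zero (w := y j) (hgne m)))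
                : Fin (v+1) → ℕ → S) j.succ n : WithZero S)))
            = ∑ t ∈ F, uWgen c (co ⟨i, hi0⟩) y g t := by
          rw [hic]
          have h1 : ∀ n : ℕ, (((Fin.cases (fun m => (g m).1)
              (fun j m => WithZero.unzero (wsum_ne_zero (w := y j) (hgne m)))
                : Fin (v+1) → ℕ → S) 0 n : WithZero S)) = (((g n).1 : S) : WithZero S) := by
            intro n
            simp only [Fin.cases_zero]
          simp only [h1, hxsum]
          rw [Finset.smul_sum]
          have h2 : ∑ j : Fin v, (A i j.succ) • ∑ n ∈ F, wsum (y j) ((g n).2)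
              = ∑ n ∈ F, ∑ j : Fin v, (co ⟨i, hi0⟩ j) • wsum (y j) ((g n).2) := by
            rw [← Finset.sum_comm]
            apply Finset.sum_congr rfl
            intro j _
            exact Finset.smul_sum
          rw [h2, ← Finset.sum_add_distrib]
          exact Finset.sum_congr rfl fun t _ => rfl
        rw [hstep]
        have hFbound : ∀ t ∈ F, t < F.max' hF + 1 := fun t ht =>
          Nat.lt_succ_of_le (F.le_max' t ht)
        have hmem := (hg (F.max' hF + 1)).2.2.2 F hF hFbound ⟨i, hi0⟩
        exact Set.image_mono star_subset hmem
end

/-- Phulara-style first entries theorem: `A x⃗_F ∈ (C_{min F})^u`. -/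
theorem firstEntries_matrix_phulara {S : Type*} [AddCommSemigroup S]
    (u v : ℕ) (A : Fin u → Fin v → ℕ) (hA : FirstEntriesCond u v A)
    -- each cS for c a first entry of A is central*
    (hcS : ∀ c : ℕ, IsFirstEntry u v A c →
      ∀ q : Ultrafilter S, memKbeta q → q = q + q → cMulSet S c ∈ q)
    (p : Ultrafilter S) (hpK : memKbeta p) (hpidem : p = p + p)
    (C : ℕ → Set S) (hC : ∀ n, C n ∈ p) :
    ∃ x : Fin v → ℕ → S,
      ∀ F : Finset ℕ, ∀ hF : F.Nonempty, ∀ i : Fin u,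
        (∑ j : Fin v, (A i j) • ∑ n ∈ F, (x j n : WithZero S))
          ∈ (fun s : S => (s : WithZero S)) '' C (F.min' hF) := by
  classical
  set D : ℕ → Set S := fun n => ⋂ k ∈ Finset.range (n + 1), C k with hD
  have hDmem : ∀ n, D n ∈ p := fun n => (Filter.biInter_finset_mem _).2 fun k _ => hC k
  have hDmono : ∀ m n, m ≤ n → D n ⊆ D m := by
    intro m n hmn x hx
    apply Set.mem_iInter₂.2
    intro k hk
    exact Set.mem_iInter₂.1 hx k (Finset.mem_range.2 (by
      have := Finset.mem_range.1 hk
      omega))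
  have hDsub : ∀ n, D n ⊆ C n := fun n x hx =>
    Set.mem_iInter₂.1 hx n (Finset.self_mem_range_succ n)
  obtain ⟨x, hx⟩ := internalFE p hpK hpidem v (Fin u) inferInstance A ⟨hA.1, hA.2⟩
    (fun c hc => hcS c hc p hpK hpidem) D hDmem hDmono
  exact ⟨x, fun F hF i => Set.image_mono (hDsub _) (hx F hF i)⟩
end

section
/- Let S be a dense subsemigroup of ((0,∞),+) and let A ⊆ S. Then A is a J-set near zero if and only if for every F ∈ 𝒫_f(τ₀), every δ > 0 and every m ∈ ℕ there exist a ∈ S ∩ (0,δ) and H ∈ 𝒫_f(ℕ) with min H > m such that a + Σ_{t∈H} f(t) ∈ A ∩ (0,δ) for every f ∈ F. -/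
/-- `τ₀`: all sequences in `S` whose infimum is `0`. -/
def tauZero (S : Set ℝ) : Set (ℕ → ℝ) :=
  {f | (∀ n, f n ∈ S) ∧ IsGLB (Set.range f) 0}

/-- `A` is a J-set near zero. -/
def JSetNearZero (S A : Set ℝ) : Prop :=
  ∀ F : Finset (ℕ → ℝ), F.Nonempty → ↑F ⊆ tauZero S →
    ∀ δ : ℝ, 0 < δ → ∃ a ∈ S ∩ Set.Ioo 0 δ, ∃ H : Finset ℕ, H.Nonempty ∧
      ∀ f ∈ F, a + ∑ t ∈ H, f t ∈ A ∩ Set.Ioo 0 δ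

/-- A sequence in `τ₀` takes values below any `ε > 0` at arbitrarily large indices. -/
lemma tauZero_exists_gt_lt (S : Set ℝ) (hSpos : S ⊆ Set.Ioi 0) {f : ℕ → ℝ}
    (hf : f ∈ tauZero S) {ε : ℝ} (hε : 0 < ε) (m : ℕ) : ∃ n, m < n ∧ f n < ε := by
  obtain ⟨hfS, hglb⟩ := hf
  have hpos : ∀ n, 0 < f n := fun n => hSpos (hfS n)
  set c := (Finset.range (m + 1)).inf' (by simp) f with hc
  have hcpos : 0 < c := by
    rw [hc, Finset.lt_inf'_iff]
    intro i _
    exact hpos i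
  have hεc : 0 < min ε c := lt_min hε hcpos
  have hnl : ¬ (min ε c ∈ lowerBounds (Set.range f)) := by
    intro h
    have := hglb.2 h
    linarith
  simp only [lowerBounds, Set.mem_setOf_eq, Set.mem_range, not_forall] at hnl
  obtain ⟨x, ⟨n, rfl⟩, hx⟩ := hnl
  push_neg at hx
  refine ⟨n, ?_, lt_of_lt_of_le hx (min_le_left _ _)⟩
  by_contra h
  push_neg at h
  have hle : c ≤ f n := Finset.inf'_le f (by simp; omega)
  have := lt_of_lt_of_le hx (min_le_right _ _)
  linarith

/-- `A` is a J-set near zero iff witnesses can always be chosen with `min H > m`. -/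
theorem jSetNearZero_iff_minGT
    (S : Set ℝ) (hSpos : S ⊆ Set.Ioi 0)
    (hSadd : ∀ x ∈ S, ∀ y ∈ S, x + y ∈ S)
    (hSdense : Set.Ioi (0 : ℝ) ⊆ closure S)
    (A : Set ℝ) (hAS : A ⊆ S) :
    JSetNearZero S A ↔
      (∀ F : Finset (ℕ → ℝ), F.Nonempty → ↑F ⊆ tauZero S →
        ∀ δ : ℝ, 0 < δ → ∀ m : ℕ,
          ∃ a ∈ S ∩ Set.Ioo 0 δ, ∃ H : Finset ℕ, H.Nonempty ∧ (∀ t ∈ H, m < t) ∧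
            ∀ f ∈ F, a + ∑ t ∈ H, f t ∈ A ∩ Set.Ioo 0 δ) := by
  constructor
  · intro hJ F hF hFτ δ hδ m
    classical
    set F' : Finset (ℕ → ℝ) := F.image (fun f n => f (n + m + 1)) with hF'def
    have hF'ne : F'.Nonempty := hF.image _
    have hF'τ : ↑F' ⊆ tauZero S := by
      intro g hg
      rw [Finset.mem_coe, hF'def, Finset.mem_image] at hg
      obtain ⟨f, hf, rfl⟩ := hg
      have hfτ : f ∈ tauZero S := hFτ hf
      refine ⟨fun n => hfτ.1 _, ?_, ?_⟩
      · rintro x ⟨n, rfl⟩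
        exact le_of_lt (hSpos (hfτ.1 _))
      · intro b hb
        by_contra hb0
        push_neg at hb0
        obtain ⟨n, hnm, hnε⟩ := tauZero_exists_gt_lt S hSpos hfτ hb0 m
        have hn : n - m - 1 + m + 1 = n := by omega
        have : b ≤ f (n - m - 1 + m + 1) := hb ⟨n - m - 1, rfl⟩
        rw [hn] at this
        linarith
    obtain ⟨a, ha, H', hH'ne, hsum⟩ := hJ F' hF'ne hF'τ δ hδ
    refine ⟨a, ha, H'.image (fun t => t + m + 1), hH'ne.image _, ?_, ?_⟩
    · intro t ht
      rw [Finset.mem_image] at ht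
      obtain ⟨k, _, rfl⟩ := ht
      omega
    · intro f hf
      have hsum' := hsum (fun n => f (n + m + 1)) (Finset.mem_image_of_mem _ hf)
      have heq : ∑ t ∈ H'.image (fun t => t + m + 1), f t
          = ∑ t ∈ H', f (t + m + 1) := by
        rw [Finset.sum_image]
        intro x _ y _ h
        beta_reduce at h
        omega
      rw [heq]
      exact hsum'
  · intro h F hF hFτ δ hδ
    obtain ⟨a, ha, H, hHne, _, hsum⟩ := h F hF hFτ δ hδ 0
    exact ⟨a, ha, H, hHne, hsum⟩
end

section
/- Let A be a central subset of ℕ, let k ∈ ℕ, and for each i ∈ {1,…,k} let ⟨y_{i,n}⟩_{n=1}^∞ be a sequence in ℤ. Then there exist a sequence ⟨a_n⟩_{n=1}^∞ in ℕ and a sequence ⟨H_n⟩_{n=1}^∞ in 𝒫_f(ℕ) such that: (1) max H_n < min H_{n+1} for each n ∈ ℕ; and (2) for each i ∈ {1,…,k} and each F ∈ 𝒫_f(ℕ), Σ_{n∈F} (a_n + Σ_{t∈H_n} y_{i,t}) ∈ A. -/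
/-!
Push the central ultrafilter forward to `βℤ`, where it is still a minimal idempotent `P`. In the
compact right topological semigroup `(βℤ)^ι`, the limits of the principal points
`(a + ∑ t ∈ H, y i t)ᵢ` with `H` beyond every bound form a closed subsemigroup containing the
diagonal, and those with `H` nonempty form a closed ideal of it. A minimal idempotent lying in the
subsemigroup lies in every such ideal, so the diagonal `(P, …, P)` is such a limit: every `P`-large
set contains all `a + ∑ t ∈ H, y i t` for one `a` and one nonempty `H` as late as we like.
Choosing blocks one at a time and shrinking the `P`-large set after each choice, as in the proof
of Hindman's theorem, keeps every finite sum of the chosen blocks inside the original set.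
-/

/- The addition on `Ultrafilter ℕ+` (Stone–Čech extension of `+` on `ℕ = {1,2,…}`):
`A ∈ p + q ↔ {x | {y | x + y ∈ A} ∈ q} ∈ p`. -/
attribute [local instance] Ultrafilter.add Ultrafilter.addSemigroup

/-- `A ⊆ ℕ` is central: it belongs to some idempotent ultrafilter in the smallest
two-sided ideal `K(βℕ)` (that `p ∈ K(βℕ)` is expressed by: for every `q` there is `r`
with `r + q + p = p`). -/
def IsCentral (A : Set ℕ+) : Prop :=
  ∃ p : Ultrafilter ℕ+, p = p + p ∧ (∀ q : Ultrafilter ℕ+, ∃ r : Ultrafilter ℕ+, r + q + p = p)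
    ∧ A ∈ p

open Filter Set

namespace Ultrafilter

variable {M N : Type*}

theorem mem_add_iff [Add M] {U V : Ultrafilter M} {s : Set M} :
    s ∈ U + V ↔ {m | {m' | m + m' ∈ s} ∈ V} ∈ U :=
  Iff.rfl

theorem map_add [Add M] [Add N] {f : M → N} (hf : ∀ a b, f (a + b) = f a + f b)
    (U V : Ultrafilter M) : (U + V).map f = U.map f + V.map f := by
  ext s
  simp only [mem_map, mem_add_iff, mem_preimage, hf]
  rfl

theorem continuous_map (f : M → N) : Continuous (Ultrafilter.map f) :=
  ultrafilterBasis_is_basis.continuous_iff.2 <| forall_mem_range.2 fun s ↦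
    ultrafilter_isOpen_basic (f ⁻¹' s)

theorem continuous_pi_add_right {ι : Type*} [Add M] (v : ι → Ultrafilter M) :
    Continuous (· + v) :=
  continuous_pi fun i ↦ (continuous_add_left (v i)).comp (continuous_apply i)

theorem le_cofinite_of_add_self_eq [Add M] (hM : ∀ a : M, a + a ≠ a) {p : Ultrafilter M}
    (hp : p + p = p) : (p : Filter M) ≤ cofinite := by
  rcases p.le_cofinite_or_eq_pure with h | ⟨a, rfl⟩
  · exact h
  · exact absurd (pure_injective hp) (hM a)

end Ultrafilter

theorem exists_seq_of_forall_exists {α : Type*} {Q : α → Prop} {R : α → α → Prop}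
    (h : ∀ s, Q s → ∃ s', Q s' ∧ R s s') {s₀ : α} (h₀ : Q s₀) :
    ∃ f : ℕ → α, f 0 = s₀ ∧ ∀ n, R (f n) (f (n + 1)) := by
  choose g hgQ hgR using h
  let F : {s // Q s} → {s // Q s} := fun s ↦ ⟨g s s.2, hgQ s s.2⟩
  refine ⟨fun n ↦ (F^[n] ⟨s₀, h₀⟩).1, rfl, fun n ↦ ?_⟩
  simp only [Function.iterate_succ_apply']
  exact hgR _ _

theorem sum_mem_of_add_mem {M : Type*} [AddCommMonoid M] {x : ℕ → M} {C : ℕ → Set M}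
    (hC : Antitone C) (hx : ∀ m, x m ∈ C m) (hadd : ∀ m, ∀ z ∈ C (m + 1), x m + z ∈ C m)
    {F : Finset ℕ} (hF : F.Nonempty) {n : ℕ} (hn : ∀ m ∈ F, n ≤ m) : ∑ m ∈ F, x m ∈ C n := by
  induction F using Finset.induction_on_min generalizing n with
  | empty => exact absurd hF Finset.not_nonempty_empty
  | insert a F hlt ih =>
    have han : n ≤ a := hn a (Finset.mem_insert_self a F)
    rw [Finset.sum_insert fun haF ↦ (hlt a haF).false]
    refine hC han ?_
    rcases F.eq_empty_or_nonempty with rfl | hF'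
    · simpa using hx a
    · exact hadd a _ (ih hF' fun m hm ↦ hlt m hm)

theorem add_mem_closure_of_forall {Y : Type*} [TopologicalSpace Y] [Add Y] {S R : Set Y}
    {u v : Y} (hu : u ∈ closure S) (hv_cont : Continuous (· + v))
    (hS_cont : ∀ x ∈ S, Continuous (x + ·)) (hv : ∀ x ∈ S, v ∈ closure {w | x + w ∈ R}) :
    u + v ∈ closure R := by
  have hSv : MapsTo (· + v) S (closure R) := fun x hx ↦
    map_mem_closure (hS_cont x hx) (hv x hx) fun _ hw ↦ hw
  simpa using map_mem_closure hv_cont hu hSv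

theorem mem_of_minimal_idempotent {Y : Type*} [TopologicalSpace Y] [T2Space Y] [CompactSpace Y]
    [AddSemigroup Y] (hcont : ∀ v : Y, Continuous (· + v)) {I : Set Y} (hI : IsClosed I)
    (hIne : I.Nonempty) (hII : ∀ u ∈ I, ∀ w ∈ I, u + w ∈ I) {p : Y} (hidem : p + p = p)
    (hmin : ∀ q, ∃ r, r + q + p = p) (hIp : ∀ u ∈ I, u + p ∈ I) (hpI : ∀ u ∈ I, p + u ∈ I) :
    p ∈ I := by
  obtain ⟨u, hu⟩ := hIne
  have hsemi : ∀ x ∈ I ∩ range (· + p), ∀ z ∈ I ∩ range (· + p), x + z ∈ I ∩ range (· + p) := by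
    rintro x ⟨hx, -⟩ _ ⟨hz, s, rfl⟩
    exact ⟨hII x hx _ hz, x + s, add_assoc x s p⟩
  obtain ⟨_, ⟨hwI, s, rfl⟩, hww⟩ := exists_idempotent_in_compact_add_subsemigroup hcont
    (I ∩ range (· + p)) ⟨u + p, hIp u hu, u, rfl⟩ ((isCompact_range (hcont p)).inter_left hI) hsemi
  -- `w = s + p` lies in the minimal left ideal `Y + p`, so `r + w = p` for some `r`.
  obtain ⟨r, hr⟩ := hmin (s + p)
  rw [add_assoc r, add_assoc s, hidem] at hr
  dsimp only at hww hwI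
  have hpw : p + (s + p) = p :=
    calc p + (s + p) = r + (s + p) + (s + p) := by rw [hr]
      _ = p := by rw [add_assoc, hww, hr]
  exact hpw ▸ hpI _ hwI

section BlockPoints

variable {ι : Type*} (y : ι → ℕ → ℤ)

def blockSum (a : ℤ) (H : Finset ℕ) (i : ι) : ℤ :=
  a + ∑ t ∈ H, y i t

def blockPoint (a : ℤ) (H : Finset ℕ) : ι → Ultrafilter ℤ :=
  fun i ↦ pure (blockSum y a H i)

def lateBlockPoints (nonempty : Bool) (n : ℕ) : Set (ι → Ultrafilter ℤ) :=
  {w | ∃ a H, (nonempty → Finset.Nonempty H) ∧ (∀ t ∈ H, n < t) ∧ w = blockPoint y a H}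

def blockLimits (nonempty : Bool) : Set (ι → Ultrafilter ℤ) :=
  ⋂ n, closure (lateBlockPoints y nonempty n)

theorem blockPoint_add {a b : ℤ} {H G : Finset ℕ} (hHG : Disjoint H G) :
    blockPoint y a H + blockPoint y b G = blockPoint y (a + b) (H ∪ G) := by
  funext i
  simp only [Pi.add_apply, blockPoint, blockSum, Finset.sum_union hHG]
  exact congrArg pure (add_add_add_comm ..)

theorem continuous_blockPoint_add (a : ℤ) (H : Finset ℕ) :
    Continuous (blockPoint y a H + ·) :=
  continuous_pi fun i ↦ (Ultrafilter.continuous_map _).comp (continuous_apply i)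

theorem exists_add_mem_lateBlockPoints {b : Bool} {n : ℕ} {x : ι → Ultrafilter ℤ}
    (hx : x ∈ lateBlockPoints y b n) (b' : Bool) :
    ∃ m, ∀ w ∈ lateBlockPoints y b' m, x + w ∈ lateBlockPoints y (b || b') n := by
  obtain ⟨a, H, hHne, hHn, rfl⟩ := hx
  refine ⟨max n (H.sup id), ?_⟩
  rintro _ ⟨c, G, hGne, hGm, rfl⟩
  have hHG : Disjoint H G := Finset.disjoint_left.2 fun t htH htG ↦
    (hGm t htG).not_ge ((Finset.le_sup (f := id) htH).trans (le_max_right _ _))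
  refine ⟨a + c, H ∪ G, fun hbb' ↦ ?_, fun t ht ↦ ?_, blockPoint_add y hHG⟩
  · rcases Bool.or_eq_true_iff.1 hbb' with h | h
    · exact (hHne h).mono Finset.subset_union_left
    · exact (hGne h).mono Finset.subset_union_right
  · rcases Finset.mem_union.1 ht with h | h
    · exact hHn t h
    · exact (le_max_left _ _).trans_lt (hGm t h)

theorem add_mem_blockLimits {b b' : Bool} {u v : ι → Ultrafilter ℤ} (hu : u ∈ blockLimits y b)
    (hv : v ∈ blockLimits y b') : u + v ∈ blockLimits y (b || b') := by
  refine mem_iInter.2 fun n ↦ add_mem_closure_of_forall (mem_iInter.1 hu n)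
    (Ultrafilter.continuous_pi_add_right v) ?_ fun x hx ↦ ?_
  · rintro _ ⟨a, H, -, -, rfl⟩
    exact continuous_blockPoint_add y a H
  · obtain ⟨m, hm⟩ := exists_add_mem_lateBlockPoints y hx b'
    exact closure_mono hm (mem_iInter.1 hv m)

theorem blockLimits_nonempty : (blockLimits y true).Nonempty :=
  IsCompact.nonempty_iInter_of_sequence_nonempty_isCompact_isClosed _
    (fun n ↦ closure_mono fun _ ⟨a, H, hne, hHn, hw⟩ ↦
      ⟨a, H, hne, fun t ht ↦ (hHn t ht).trans' n.lt_succ_self, hw⟩)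
    (fun n ↦ ⟨_, subset_closure ⟨0, {n + 1}, fun _ ↦ Finset.singleton_nonempty _, by simp, rfl⟩⟩)
    isClosed_closure.isCompact fun _ ↦ isClosed_closure

theorem const_mem_blockLimits (P : Ultrafilter ℤ) : (fun _ ↦ P) ∈ blockLimits y false := by
  refine mem_iInter.2 fun n ↦ map_mem_closure (f := fun u (_ : ι) ↦ u)
    (continuous_pi fun _ ↦ continuous_id) (denseRange_pure P) ?_
  rintro _ ⟨a, rfl⟩
  exact ⟨a, ∅, nofun, by simp, by funext; simp [blockPoint, blockSum]⟩

end BlockPoints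

section LateBlocks

variable {ι : Type*} (y : ι → ℕ → ℤ) {P : Ultrafilter ℤ}

def HasLateBlocks (P : Ultrafilter ℤ) : Prop :=
  ∀ n, ∀ C ∈ P, ∃ a H, Finset.Nonempty H ∧ (∀ t ∈ H, n < t) ∧ ∀ i, blockSum y a H i ∈ C

theorem hasLateBlocks_of_minimal_idempotent [Finite ι] (hidem : P + P = P)
    (hmin : ∀ q, ∃ r, r + q + P = P) : HasLateBlocks y P := by
  have hP : (fun _ ↦ P) ∈ blockLimits y true := by
    refine mem_of_minimal_idempotent Ultrafilter.continuous_pi_add_right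
      (isClosed_iInter fun _ ↦ isClosed_closure) (blockLimits_nonempty y)
      (fun u hu w hw ↦ add_mem_blockLimits y hu hw) (funext fun _ ↦ hidem) (fun q ↦ ?_)
      (fun u hu ↦ add_mem_blockLimits y hu (const_mem_blockLimits y P))
      (fun u hu ↦ add_mem_blockLimits y (const_mem_blockLimits y P) hu)
    choose r hr using fun i ↦ hmin (q i)
    exact ⟨r, funext hr⟩
  intro n C hC
  have hbox : IsOpen (univ.pi fun _ : ι ↦ {u : Ultrafilter ℤ | C ∈ u}) :=
    isOpen_set_pi finite_univ fun _ _ ↦ ultrafilter_isOpen_basic C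
  obtain ⟨_, hw, a, H, hne, hHn, rfl⟩ :=
    mem_closure_iff.1 (mem_iInter.1 hP n) _ hbox fun _ _ ↦ hC
  exact ⟨a, H, hne rfl, hHn, fun i ↦ hw i (mem_univ i)⟩

variable {y}

theorem HasLateBlocks.exists_step [Finite ι] (hP : HasLateBlocks y P) (hidem : P + P = P)
    (n : ℕ) {C : Set ℤ} (hC : C ∈ P) :
    ∃ a H, Finset.Nonempty H ∧ (∀ t ∈ H, n < t) ∧ ∃ C' ∈ P, C' ⊆ C ∧
      ∀ i, blockSum y a H i ∈ C ∧ ∀ z ∈ C', blockSum y a H i + z ∈ C := by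
  have hC₂ : {x | {z | x + z ∈ C} ∈ P} ∈ P := Ultrafilter.mem_add_iff.1 (by rwa [hidem])
  obtain ⟨a, H, hne, hHn, hx⟩ := hP n _ (inter_mem hC hC₂)
  refine ⟨a, H, hne, hHn, C ∩ ⋂ i, {z | blockSum y a H i + z ∈ C}, ?_, inter_subset_left,
    fun i ↦ ⟨(hx i).1, fun z hz ↦ mem_iInter.1 hz.2 i⟩⟩
  exact inter_mem hC ((Filter.iInter_mem).2 fun i ↦ (hx i).2)

theorem HasLateBlocks.exists_blocks [Finite ι] (hP : HasLateBlocks y P) (hidem : P + P = P)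
    {B : Set ℤ} (hB : B ∈ P) :
    ∃ (a : ℕ → ℤ) (H : ℕ → Finset ℕ), (∀ n, (H n).Nonempty) ∧
      (∀ n, ∀ s ∈ H n, ∀ t ∈ H (n + 1), s < t) ∧
      ∀ i (F : Finset ℕ), F.Nonempty → ∑ n ∈ F, blockSum y (a n) (H n) i ∈ B := by
  -- A stage `(a, H, C)` records the last block and the `P`-large set the later sums must live in.
  obtain ⟨f, hf0, hf⟩ := exists_seq_of_forall_exists
    (Q := fun s : ℤ × Finset ℕ × Set ℤ ↦ s.2.2 ∈ P)
    (R := fun s s' ↦ s'.2.1.Nonempty ∧ (∀ t ∈ s'.2.1, s.2.1.sup id < t) ∧ s'.2.2 ⊆ s.2.2 ∧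
      ∀ i, blockSum y s'.1 s'.2.1 i ∈ s.2.2 ∧ ∀ z ∈ s'.2.2, blockSum y s'.1 s'.2.1 i + z ∈ s.2.2)
    (fun s hs ↦ by
      obtain ⟨a, H, hne, hHn, C', hC', hsub, hsum⟩ := hP.exists_step hidem (s.2.1.sup id) hs
      exact ⟨(a, H, C'), hC', hne, hHn, hsub, hsum⟩)
    (s₀ := (0, ∅, B)) hB
  refine ⟨fun n ↦ (f (n + 1)).1, fun n ↦ (f (n + 1)).2.1, fun n ↦ (hf n).1,
    fun n s hs t ht ↦ (Finset.le_sup (f := id) hs).trans_lt ((hf (n + 1)).2.1 t ht),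
    fun i F hF ↦ ?_⟩
  have hC : Antitone fun m ↦ (f m).2.2 := antitone_nat_of_succ_le fun m ↦ (hf m).2.2.1
  simpa [hf0] using sum_mem_of_add_mem hC (fun m ↦ ((hf m).2.2.2 i).1)
    (fun m ↦ ((hf m).2.2.2 i).2) hF (n := 0) fun _ _ ↦ Nat.zero_le _

end LateBlocks

theorem range_coe_mem_add_map {p : Ultrafilter ℕ+} (hp : p + p = p) (q : Ultrafilter ℤ) :
    range ((↑) : ℕ+ → ℤ) ∈ q + p.map (↑) := by
  have hp_cof : (p : Filter ℕ+) ≤ cofinite :=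
    Ultrafilter.le_cofinite_of_add_self_eq (fun a ↦ (PNat.lt_add_left a a).ne') hp
  have hinj : Function.Injective ((↑) : ℕ+ → ℤ) := fun a b h ↦ by simpa using h
  refine Ultrafilter.mem_add_iff.2 <| univ_mem' fun x ↦ hp_cof <| mem_cofinite.2 <|
    (finite_Icc 1 (-x)).preimage hinj.injOn |>.subset fun m hm ↦ ?_
  simp only [mem_compl_iff, mem_preimage, mem_ofPred_eq, mem_Icc] at hm ⊢
  refine ⟨by exact_mod_cast m.pos, not_lt.1 fun hpos ↦ hm ⟨⟨(x + m).toNat, by omega⟩, ?_⟩⟩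
  simp only [PNat.mk_coe, Int.ofNat_toNat]
  omega

theorem IsCentral.exists_int {A : Set ℕ+} (hA : IsCentral A) :
    ∃ P : Ultrafilter ℤ, P + P = P ∧ (∀ q, ∃ r, r + q + P = P) ∧ ((↑) : ℕ+ → ℤ) '' A ∈ P := by
  obtain ⟨p, hp, hpmin, hpA⟩ := hA
  set c : ℕ+ → ℤ := (↑)
  have hc_add : ∀ a b, c (a + b) = c a + c b := fun a b ↦ by simp [c]
  have hc_inj : Function.Injective c := fun a b h ↦ by simpa [c] using h
  set P := p.map c
  have hidem : P + P = P := by rw [← Ultrafilter.map_add hc_add, ← hp]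
  refine ⟨P, hidem, fun q ↦ ?_, image_mem_map hpA⟩
  -- Pull `q + P` back to `βℕ+`, use the minimality of `p` there, and push forward again.
  have hlarge : range c ∈ q + P := range_coe_mem_add_map hp.symm q
  obtain ⟨r, hr⟩ := hpmin ((q + P).comap hc_inj hlarge)
  have hmap : ((q + P).comap hc_inj hlarge).map c = q + P :=
    Ultrafilter.coe_injective (Filter.map_comap_of_mem hlarge)
  refine ⟨r.map c, ?_⟩
  calc r.map c + q + P = r.map c + (q + P) + P := by simp only [add_assoc, hidem]
    _ = P := by rw [← hmap, ← Ultrafilter.map_add hc_add, ← Ultrafilter.map_add hc_add, hr]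

/-- The original Central Sets Theorem (Furstenberg): sums are computed in `ℤ`, and
membership of the (integer) sum in `A ⊆ ℕ` is membership in the image of `A` in `ℤ`. -/
theorem original_central_sets_theorem
    (A : Set ℕ+) (hA : IsCentral A)
    (k : ℕ) (y : ℕ → ℕ → ℤ) :
    ∃ (a : ℕ → ℕ+) (H : ℕ → Finset ℕ),
      (∀ n, (H n).Nonempty) ∧
      -- (1): max Hₙ < min Hₙ₊₁
      (∀ n, ∀ s ∈ H n, ∀ t ∈ H (n + 1), s < t) ∧
      -- (2): for each i ∈ {1,…,k} and each F ∈ 𝒫_f(ℕ)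
      (∀ i ∈ Finset.Icc 1 k, ∀ F : Finset ℕ, F.Nonempty →
        (∑ n ∈ F, ((a n : ℤ) + ∑ t ∈ H n, y i t))
          ∈ (fun m : ℕ+ => (m : ℤ)) '' A) := by
  obtain ⟨P, hidem, hmin, hAP⟩ := hA.exists_int
  -- The extra index `none` carries the zero sequence, which forces every `a n` into `A`.
  let z : Option (Finset.Icc 1 k) → ℕ → ℤ := fun o t ↦ o.elim 0 fun i ↦ y i t
  obtain ⟨a, H, hne, hord, hsum⟩ :=
    (hasLateBlocks_of_minimal_idempotent z hidem hmin).exists_blocks hidem hAP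
  have ha : ∀ n, ∃ m : ℕ+, (m : ℤ) = a n := fun n ↦ by
    obtain ⟨m, -, hm⟩ := hsum none {n} (Finset.singleton_nonempty n)
    exact ⟨m, by simpa [blockSum, z] using hm⟩
  choose a' ha' using ha
  refine ⟨a', H, hne, hord, fun i hi F hF ↦ ?_⟩
  simpa [blockSum, z, ha'] using hsum (some ⟨i, hi⟩) F hF
end
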